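/- arXiv:2303.02981 — 10 statements merged into one kernel-verified Lean document; each statement's English description precedes it below -/
import Mathlib

section
/- Let μ > 0 and x_m ≥ 0. Let g : [0,∞) → (0,∞) be continuous, bounded and strictly decreasing, with limit g(∞) := lim_{z→∞} g(z), and let β : [x_m,∞) → [0,∞) be continuous and strictly increasing, with ∫₀^∞ β(x_m + g(0)a) e^{−μa} da < ∞. Define R(B) := ∫₀^∞ β( x_m + ∫₀^a g(B e^{−μτ}/μ) dτ ) e^{−μa} da. Then there exists B > 0 with R(B) = 1 if and only if R₀ := R(0) = ∫₀^∞ β(x_m + g(0)a) e^{−μa} da > 1 and ∫₀^∞ β(x_m + g(∞)a) e^{−μa} da < 1; moreover there is at most one B > 0 with R(B) = 1. -/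
open MeasureTheory Set Filter

/-- Expected lifetime offspring number of an individual born into a population at
stationary birth rate `B`. -/
noncomputable def Rfun (μ xm : ℝ) (g β : ℝ → ℝ) (B : ℝ) : ℝ :=
  ∫ a in Set.Ioi (0 : ℝ),
    β (xm + ∫ τ in (0 : ℝ)..a, g (B * Real.exp (-μ * τ) / μ)) * Real.exp (-μ * a)

theorem stmt_3 (μ xm ginf : ℝ) (hμ : 0 < μ) (hxm : 0 ≤ xm)
    (g β : ℝ → ℝ)
    (hgc : ContinuousOn g (Set.Ici (0 : ℝ))) (hgpos : ∀ z ≥ (0 : ℝ), 0 < g z)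
    (hgbd : ∃ C : ℝ, ∀ z ≥ (0 : ℝ), g z ≤ C)
    (hganti : StrictAntiOn g (Set.Ici (0 : ℝ)))
    (hglim : Tendsto g atTop (nhds ginf))
    (hβc : ContinuousOn β (Set.Ici xm)) (hβnn : ∀ x ≥ xm, 0 ≤ β x)
    (hβmono : StrictMonoOn β (Set.Ici xm))
    (hβint : IntegrableOn (fun a => β (xm + g 0 * a) * Real.exp (-μ * a)) (Set.Ioi (0 : ℝ))) :
    -- a non-trivial stationary birth rate exists iff R₀ > 1 and ∫₀^∞ β(x_m+g(∞)a)e^{-μa} da < 1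
    ((∃ B : ℝ, 0 < B ∧ Rfun μ xm g β B = 1) ↔
      (1 < Rfun μ xm g β 0 ∧
        (∫ a in Set.Ioi (0 : ℝ), β (xm + ginf * a) * Real.exp (-μ * a)) < 1)) ∧
    -- and there is at most one such non-trivial stationary birth rate
    (∀ B₁ B₂ : ℝ, 0 < B₁ → 0 < B₂ →
      Rfun μ xm g β B₁ = 1 → Rfun μ xm g β B₂ = 1 → B₁ = B₂) := by
  clear hgbd
  -- extended versions of `g` and `β`, continuous on all of `ℝ`
  set G : ℝ → ℝ := fun z => g (max z 0) with hGdef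
  set Β : ℝ → ℝ := fun x => β (max x xm) with hΒdef
  have hGeq : ∀ z : ℝ, 0 ≤ z → G z = g z := fun z hz => by
    simp only [hGdef, max_eq_left hz]
  have hΒeq : ∀ x : ℝ, xm ≤ x → Β x = β x := fun x hx => by
    simp only [hΒdef, max_eq_left hx]
  have hGcont : Continuous G :=
    hgc.comp_continuous (continuous_id.max continuous_const)
      (fun z => mem_Ici.2 (le_max_right _ _))
  have hΒcont : Continuous Β :=
    hβc.comp_continuous (continuous_id.max continuous_const)
      (fun x => mem_Ici.2 (le_max_right _ _))
  have hGpos : ∀ z : ℝ, 0 < G z := fun z => hgpos _ (le_max_right _ _)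
  have hGle : ∀ z : ℝ, G z ≤ g 0 := by
    intro z
    rcases eq_or_lt_of_le (le_max_right z 0) with h | h
    · show g (max z 0) ≤ g 0
      rw [← h]
    · exact (hganti self_mem_Ici (mem_Ici.2 (le_max_right z 0)) h).le
  have hΒnn : ∀ x : ℝ, 0 ≤ Β x := fun x => hβnn _ (le_max_right _ _)
  -- facts about ginf
  have hganti' : AntitoneOn g (Ici (0 : ℝ)) := hganti.antitoneOn
  have hginf_nonneg : 0 ≤ ginf :=
    ge_of_tendsto hglim (eventually_atTop.2 ⟨0, fun z hz => (hgpos z hz).le⟩)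
  have hginf_lt : ∀ z : ℝ, 0 ≤ z → ginf < g z := by
    intro z hz
    have h1 : ginf ≤ g (z + 1) :=
      le_of_tendsto hglim (eventually_atTop.2 ⟨z + 1, fun w hw =>
        hganti' (mem_Ici.2 (by linarith)) (mem_Ici.2 (by linarith)) hw⟩)
    exact h1.trans_lt (hganti (mem_Ici.2 hz) (mem_Ici.2 (by linarith)) (lt_add_one z))
  have hGginf : ∀ z : ℝ, ginf < G z := fun z => hginf_lt _ (le_max_right _ _)
  -- the inner integral, continuous jointly in (B, a)
  set I : ℝ → ℝ → ℝ := fun B a => ∫ τ in (0 : ℝ)..a, G (B * Real.exp (-μ * τ) / μ)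
    with hIdef
  have hIcont : Continuous fun p : ℝ × ℝ => I p.1 p.2 := by
    apply intervalIntegral.continuous_parametric_primitive_of_continuous
      (f := fun B τ => G (B * Real.exp (-μ * τ) / μ))
    exact hGcont.comp ((continuous_fst.mul
      (Real.continuous_exp.comp (continuous_const.mul continuous_snd))).div_const μ)
  have hGconta : ∀ B : ℝ, Continuous fun τ => G (B * Real.exp (-μ * τ) / μ) := fun B =>
    hGcont.comp ((continuous_const.mul
      (Real.continuous_exp.comp (continuous_const.mul continuous_id))).div_const μ)
  have hGint : ∀ (B a : ℝ), IntervalIntegrable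
      (fun τ => G (B * Real.exp (-μ * τ) / μ)) volume 0 a := by
    intro B a
    exact (hGconta B).intervalIntegrable 0 a
  -- bounds on I
  have hInn : ∀ (B a : ℝ), 0 ≤ a → 0 ≤ I B a := fun B a ha =>
    intervalIntegral.integral_nonneg ha (fun u _ => (hGpos _).le)
  have hIle : ∀ (B a : ℝ), 0 ≤ a → I B a ≤ g 0 * a := by
    intro B a ha
    have h := intervalIntegral.integral_mono_on (μ := volume) ha (hGint B a)
      (intervalIntegrable_const (c := g 0)) (fun x _ => hGle _)
    have h2 : (∫ _ in (0:ℝ)..a, g 0) = g 0 * a := by simp [mul_comm]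
    rw [← h2]; exact h
  have hIge : ∀ (B a : ℝ), 0 ≤ a → ginf * a ≤ I B a := by
    intro B a ha
    have h := intervalIntegral.integral_mono_on (μ := volume) ha
      (intervalIntegrable_const (c := ginf)) (hGint B a) (fun x _ => (hGginf _).le)
    have h2 : (∫ _ in (0:ℝ)..a, ginf) = ginf * a := by simp [mul_comm]
    rw [← h2]; exact h
  -- I is strictly decreasing in B for a > 0
  have hIanti : ∀ (B₁ B₂ a : ℝ), 0 ≤ B₁ → B₁ < B₂ → 0 < a → I B₂ a < I B₁ a := by
    intro B₁ B₂ a hB₁ hlt ha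
    apply intervalIntegral.integral_lt_integral_of_continuousOn_of_le_of_exists_lt ha
    · exact (hGconta B₂).continuousOn
    · exact (hGconta B₁).continuousOn
    · intro τ _
      have he : (0 : ℝ) < Real.exp (-μ * τ) := Real.exp_pos _
      have h1 : (0 : ℝ) ≤ B₁ * Real.exp (-μ * τ) / μ := by positivity
      have h2 : B₁ * Real.exp (-μ * τ) / μ < B₂ * Real.exp (-μ * τ) / μ := by
        apply div_lt_div_of_pos_right _ hμ
        exact mul_lt_mul_of_pos_right hlt he
      rw [hGeq _ h1, hGeq _ (h1.trans h2.le)]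
      exact (hganti (mem_Ici.2 h1) (mem_Ici.2 (h1.trans h2.le)) h2).le
    · refine ⟨a, ⟨ha.le, le_rfl⟩, ?_⟩
      have he : (0 : ℝ) < Real.exp (-μ * a) := Real.exp_pos _
      have h1 : (0 : ℝ) ≤ B₁ * Real.exp (-μ * a) / μ := by positivity
      have h2 : B₁ * Real.exp (-μ * a) / μ < B₂ * Real.exp (-μ * a) / μ := by
        apply div_lt_div_of_pos_right _ hμ
        exact mul_lt_mul_of_pos_right hlt he
      rw [hGeq _ h1, hGeq _ (h1.trans h2.le)]
      exact hganti (mem_Ici.2 h1) (mem_Ici.2 (h1.trans h2.le)) h2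
  -- the integrand of R
  set F : ℝ → ℝ → ℝ := fun B a => Β (xm + I B a) * Real.exp (-μ * a) with hFdef
  have hFcont : Continuous fun p : ℝ × ℝ => F p.1 p.2 := by
    apply Continuous.mul
    · exact hΒcont.comp (continuous_const.add hIcont)
    · exact Real.continuous_exp.comp (continuous_const.mul continuous_snd)
  have hFnn : ∀ (B a : ℝ), 0 ≤ F B a := fun B a =>
    mul_nonneg (hΒnn _) (Real.exp_pos _).le
  have hFbd : ∀ (B a : ℝ), 0 < a → F B a ≤ β (xm + g 0 * a) * Real.exp (-μ * a) := by
    intro B a ha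
    apply mul_le_mul_of_nonneg_right _ (Real.exp_pos _).le
    rw [hΒeq _ (by linarith [hInn B a ha.le])]
    exact hβmono.monotoneOn (mem_Ici.2 (by linarith [hInn B a ha.le]))
      (mem_Ici.2 (by nlinarith [hgpos 0 le_rfl]))
      (by linarith [hIle B a ha.le])
  have hFmeasa : ∀ B : ℝ, AEStronglyMeasurable (F B) (volume.restrict (Ioi (0 : ℝ))) :=
    fun B => ((hFcont.comp (Continuous.prodMk_right B)).aestronglyMeasurable).restrict
  have hFbd' : ∀ B : ℝ, ∀ᵐ a ∂(volume.restrict (Ioi (0 : ℝ))),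
      ‖F B a‖ ≤ β (xm + g 0 * a) * Real.exp (-μ * a) := by
    intro B
    rw [ae_restrict_iff' measurableSet_Ioi]
    filter_upwards with a ha
    rw [Real.norm_eq_abs, abs_of_nonneg (hFnn B a)]
    exact hFbd B a ha
  have hFint : ∀ B : ℝ, IntegrableOn (F B) (Ioi (0 : ℝ)) := fun B =>
    Integrable.mono' hβint (hFmeasa B) (hFbd' B)
  -- R' is the `F`-version of Rfun
  set R' : ℝ → ℝ := fun B => ∫ a in Ioi (0 : ℝ), F B a with hR'def
  have key : ∀ B : ℝ, 0 ≤ B → Rfun μ xm g β B = R' B := by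
    intro B hB
    apply setIntegral_congr_fun measurableSet_Ioi
    intro a ha
    have hinner : (∫ τ in (0 : ℝ)..a, g (B * Real.exp (-μ * τ) / μ)) = I B a := by
      apply intervalIntegral.integral_congr
      intro τ hτ
      rw [uIcc_of_le (le_of_lt ha)] at hτ
      have : (0 : ℝ) ≤ B * Real.exp (-μ * τ) / μ := by positivity
      exact (hGeq _ this).symm
    show β (xm + _) * _ = Β (xm + I B a) * _
    rw [hinner, hΒeq _ (by linarith [hInn B a (le_of_lt ha)])]
  -- R' is continuous
  have hR'cont : Continuous R' := by
    rw [continuous_iff_continuousAt]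
    intro B₀
    apply continuousAt_of_dominated (Eventually.of_forall hFmeasa)
      (Eventually.of_forall hFbd') hβint
    filter_upwards with a
    exact (hFcont.comp (continuous_id.prodMk continuous_const)).continuousAt
  -- R' is strictly decreasing on [0, ∞)
  have hR'anti : StrictAntiOn R' (Ici (0 : ℝ)) := by
    intro B₁ h₁ B₂ _ hlt
    rw [mem_Ici] at h₁
    have hsub : ∀ a ∈ Ioi (0 : ℝ), 0 < F B₁ a - F B₂ a := by
      intro a ha
      rw [mem_Ioi] at ha
      have hI₂ := hInn B₂ a ha.le
      have hIlt := hIanti B₁ B₂ a h₁ hlt ha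
      have hβlt : Β (xm + I B₂ a) < Β (xm + I B₁ a) := by
        rw [hΒeq _ (by linarith), hΒeq _ (by linarith)]
        exact hβmono (mem_Ici.2 (by linarith)) (mem_Ici.2 (by linarith))
          (by linarith)
      have := mul_lt_mul_of_pos_right hβlt (Real.exp_pos (-μ * a))
      simp only [hFdef]; linarith
    have hintsub : Integrable (fun a => F B₁ a - F B₂ a)
        (volume.restrict (Ioi (0 : ℝ))) := (hFint B₁).sub (hFint B₂)
    have hpos : 0 < ∫ a in Ioi (0 : ℝ), (F B₁ a - F B₂ a) := by
      rw [integral_pos_iff_support_of_nonneg_ae _ hintsub]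
      · rw [Measure.restrict_apply' measurableSet_Ioi]
        refine lt_of_lt_of_le ?_ (measure_mono (fun a ha =>
          mem_inter (fun h => (hsub a ha).ne' (by simpa using h)) ha))
        rw [Real.volume_Ioi]
        exact ENNReal.zero_lt_top
      · rw [EventuallyLE, ae_restrict_iff' measurableSet_Ioi]
        filter_upwards with a ha
        exact (hsub a ha).le
    rw [integral_sub (hFint B₁) (hFint B₂)] at hpos
    simp only [hR'def]
    linarith
  have hR'mono : AntitoneOn R' (Ici (0 : ℝ)) := hR'anti.antitoneOn
  -- R' tends to the ginf-integral at infinity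
  have hR'lim : Tendsto R' atTop
      (nhds (∫ a in Ioi (0 : ℝ), β (xm + ginf * a) * Real.exp (-μ * a))) := by
    apply tendsto_integral_filter_of_dominated_convergence
      (fun a => β (xm + g 0 * a) * Real.exp (-μ * a))
      (Eventually.of_forall hFmeasa) (Eventually.of_forall hFbd') hβint
    rw [ae_restrict_iff' measurableSet_Ioi]
    filter_upwards with a ha
    rw [mem_Ioi] at ha
    -- inner integral tends to ginf * a
    have hIlim : Tendsto (fun B => I B a) atTop (nhds (ginf * a)) := by
      have h0 : Tendsto (fun B : ℝ => I B a) atTop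
          (nhds (∫ τ in (0 : ℝ)..a, ginf)) := by
        apply intervalIntegral.tendsto_integral_filter_of_dominated_convergence
          (fun _ => g 0)
        · filter_upwards with B
          exact ((hGconta B).aestronglyMeasurable).restrict
        · filter_upwards with B
          filter_upwards with τ _
          rw [Real.norm_eq_abs, abs_of_nonneg (hGpos _).le]
          exact hGle _
        · exact intervalIntegrable_const
        · filter_upwards with τ _
          have harg : Tendsto (fun B : ℝ => B * Real.exp (-μ * τ) / μ) atTop atTop :=
            Tendsto.atTop_div_const hμ
              (tendsto_id.atTop_mul_const (Real.exp_pos _))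
          have hmax : Tendsto (fun z : ℝ => max z 0) atTop atTop :=
            tendsto_atTop_mono (fun z => le_max_left z 0) tendsto_id
          exact (hglim.comp hmax).comp harg
      simpa [mul_comm] using h0
    have h1 : Tendsto (fun B => Β (xm + I B a)) atTop (nhds (Β (xm + ginf * a))) :=
      hΒcont.continuousAt.tendsto.comp (tendsto_const_nhds.add hIlim)
    have h2 : Β (xm + ginf * a) = β (xm + ginf * a) :=
      hΒeq _ (by nlinarith)
    rw [← h2]
    exact h1.mul_const _
  refine ⟨⟨?_, ?_⟩, ?_⟩
  · -- forward direction of iff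
    rintro ⟨B, hB, hRB⟩
    rw [key B hB.le] at hRB
    constructor
    · rw [key 0 le_rfl]
      have := hR'anti self_mem_Ici (mem_Ici.2 hB.le) hB
      rw [hRB] at this
      exact this
    · have h1 : R' (B + 1) < R' B :=
        hR'anti (mem_Ici.2 hB.le) (mem_Ici.2 (by linarith)) (lt_add_one B)
      have h2 : (∫ a in Ioi (0 : ℝ), β (xm + ginf * a) * Real.exp (-μ * a))
          ≤ R' (B + 1) := by
        apply le_of_tendsto hR'lim
        rw [eventually_atTop]
        exact ⟨B + 1, fun x hx =>
          hR'mono (mem_Ici.2 (by linarith)) (mem_Ici.2 (by linarith)) hx⟩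
      linarith
  · -- backward direction of iff
    rintro ⟨h0, hL⟩
    rw [key 0 le_rfl] at h0
    obtain ⟨B₁, hB₁lt, hB₁pos⟩ :=
      ((hR'lim.eventually_lt_const hL).and (eventually_gt_atTop 0)).exists
    have hIVT := intermediate_value_Icc' hB₁pos.le hR'cont.continuousOn
    obtain ⟨B, hBmem, hRB⟩ := hIVT ⟨hB₁lt.le, h0.le⟩
    have hBpos : 0 < B := by
      rcases eq_or_lt_of_le hBmem.1 with h | h
      · exfalso; rw [← h] at hRB; rw [hRB] at h0; exact lt_irrefl _ h0
      · exact h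
    exact ⟨B, hBpos, by rw [key B hBpos.le]; exact hRB⟩
  · -- uniqueness
    intro B₁ B₂ h₁ h₂ e₁ e₂
    rw [key B₁ h₁.le] at e₁
    rw [key B₂ h₂.le] at e₂
    exact hR'anti.injOn (mem_Ici.2 h₁.le) (mem_Ici.2 h₂.le) (e₁.trans e₂.symm)
end

section
/- Let k, f, r, B : [0,∞) → [0,∞) be measurable and locally integrable, and write (φ*ψ)(t) = ∫₀^t φ(t−s)ψ(s) ds for the convolution on [0,∞). Assume r is the resolvent of k, i.e. r(t) = k(t) + (k*r)(t) for almost every t ≥ 0, and assume B(t) ≤ f(t) + (k*B)(t) for almost every t ≥ 0. Then B(t) ≤ y(t) for almost every t ≥ 0, where y(t) = f(t) + (r*f)(t) is the solution of the linear Volterra equation y = f + k*y. -/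
open MeasureTheory Set

/-- Convolution on `[0,∞)`: `(φ * ψ)(t) = ∫₀^t φ(t-s) ψ(s) ds`. -/
noncomputable def conv0 (φ ψ : ℝ → ℝ) (t : ℝ) : ℝ :=
  ∫ s in (0 : ℝ)..t, φ (t - s) * ψ s

open scoped ENNReal

/-- ENNReal-valued convolution on `[0,∞)`. -/
noncomputable def eConv (Φ Ψ : ℝ → ℝ≥0∞) (t : ℝ) : ℝ≥0∞ :=
  ∫⁻ s in Set.Ioc 0 t, Φ (t - s) * Ψ s

lemma eConv_measurable {Φ Ψ : ℝ → ℝ≥0∞} (hΦ : Measurable Φ) (hΨ : Measurable Ψ) :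
    Measurable (eConv Φ Ψ) := by
  have hF : Measurable fun p : ℝ × ℝ =>
      ({q : ℝ × ℝ | 0 < q.2 ∧ q.2 ≤ q.1}).indicator (fun q => Φ (q.1 - q.2) * Ψ q.2) p := by
    refine Measurable.indicator ?_ ?_
    · exact (hΦ.comp (measurable_fst.sub measurable_snd)).mul (hΨ.comp measurable_snd)
    · exact (measurableSet_lt measurable_const measurable_snd).inter
        (measurableSet_le measurable_snd measurable_fst)
  have h := Measurable.lintegral_prod_right' (ν := volume) hF
  have heq : eConv Φ Ψ = fun t => ∫⁻ s, ({q : ℝ × ℝ | 0 < q.2 ∧ q.2 ≤ q.1}).indicator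
      (fun q => Φ (q.1 - q.2) * Ψ q.2) (t, s) := by
    funext t
    rw [eConv, ← lintegral_indicator measurableSet_Ioc]
    congr 1
  rw [heq]
  exact h

lemma eConv_comm {Φ Ψ : ℝ → ℝ≥0∞} (hΦ : Measurable Φ) (hΨ : Measurable Ψ) (t : ℝ) :
    eConv Φ Ψ t = eConv Ψ Φ t := by
  have hmap : Measure.map (fun s : ℝ => t - s) volume = volume :=
    Measure.map_sub_left_eq_self volume t
  have hwrong : Measurable fun y : ℝ => Ψ y * Φ (t - y) :=
    hΨ.mul (hΦ.comp (measurable_const.sub measurable_id))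
  have hsub : Measurable fun s : ℝ => t - s := measurable_const.sub measurable_id
  have hpre : (fun s : ℝ => t - s) ⁻¹' (Set.Ioc 0 t) = Set.Ico 0 t := by
    ext x; simp only [Set.mem_preimage, Set.mem_Ioc, Set.mem_Ico]
    constructor
    · rintro ⟨h1, h2⟩; exact ⟨by linarith, by linarith⟩
    · rintro ⟨h1, h2⟩; exact ⟨by linarith, by linarith⟩
  calc eConv Φ Ψ t
      = ∫⁻ y in Set.Ioc 0 t, Ψ y * Φ (t - y)
          ∂(Measure.map (fun s : ℝ => t - s) volume) := by
        rw [hmap, eConv]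
        refine setLIntegral_congr_fun measurableSet_Ioc ?_
        intro s _; beta_reduce; rw [mul_comm]
    _ = ∫⁻ s in (fun s : ℝ => t - s) ⁻¹' (Set.Ioc 0 t), Ψ (t - s) * Φ (t - (t - s)) :=
        setLIntegral_map measurableSet_Ioc hwrong hsub
    _ = ∫⁻ s in Set.Ico 0 t, Ψ (t - s) * Φ s := by
        rw [hpre]
        refine setLIntegral_congr_fun measurableSet_Ico ?_
        intro s _; beta_reduce; rw [sub_sub_cancel]
    _ = ∫⁻ s in Set.Ioc 0 t, Ψ (t - s) * Φ s := setLIntegral_congr Ico_ae_eq_Ioc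
    _ = eConv Ψ Φ t := rfl

lemma eConv_assoc {Φ Ψ X : ℝ → ℝ≥0∞} (hΦ : Measurable Φ) (hΨ : Measurable Ψ)
    (hX : Measurable X) (t : ℝ) :
    eConv Φ (eConv Ψ X) t = eConv (eConv Φ Ψ) X t := by
  set G : ℝ → ℝ → ℝ≥0∞ := fun s u =>
    (Set.Ioc (0:ℝ) t).indicator (fun s' => (Set.Ioc (0:ℝ) s').indicator
      (fun u' => Φ (t - s') * (Ψ (s' - u') * X u')) u) s with hG
  have hGmeas : Measurable (Function.uncurry G) := by
    have huncurry : Function.uncurry G = fun p : ℝ × ℝ =>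
        ({q : ℝ × ℝ | (0 < q.1 ∧ q.1 ≤ t) ∧ (0 < q.2 ∧ q.2 ≤ q.1)}).indicator
          (fun q => Φ (t - q.1) * (Ψ (q.1 - q.2) * X q.2)) p := by
      funext p
      obtain ⟨s, u⟩ := p
      simp only [Function.uncurry, hG, Set.indicator_apply, Set.mem_Ioc, Set.mem_setOf_eq]
      split_ifs <;> tauto
    rw [huncurry]
    refine Measurable.indicator ?_ ?_
    · exact (hΦ.comp (measurable_const.sub measurable_fst)).mul
        ((hΨ.comp (measurable_fst.sub measurable_snd)).mul (hX.comp measurable_snd))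
    · exact (((measurableSet_lt measurable_const measurable_fst).inter
        (measurableSet_le measurable_fst measurable_const)).inter
        ((measurableSet_lt measurable_const measurable_snd).inter
        (measurableSet_le measurable_snd measurable_fst)))
  have lhs_eq : eConv Φ (eConv Ψ X) t = ∫⁻ s, ∫⁻ u, G s u := by
    rw [eConv, ← lintegral_indicator measurableSet_Ioc]
    congr 1
    funext s
    by_cases hs : s ∈ Set.Ioc (0:ℝ) t
    · rw [Set.indicator_of_mem hs]
      simp only [hG, Set.indicator_of_mem hs]
      have hmeas : Measurable fun u : ℝ =>
          (Set.Ioc (0:ℝ) s).indicator (fun u' => Ψ (s - u') * X u') u :=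
        Measurable.indicator ((hΨ.comp (measurable_const.sub measurable_id)).mul hX)
          measurableSet_Ioc
      have h1 : eConv Ψ X s
          = ∫⁻ u, (Set.Ioc (0:ℝ) s).indicator (fun u' => Ψ (s - u') * X u') u := by
        rw [eConv, ← lintegral_indicator measurableSet_Ioc]
      rw [h1, ← lintegral_const_mul (Φ (t - s)) hmeas]
      congr 1
      funext u
      simp only [Set.indicator_apply]
      split_ifs
      · rfl
      · rw [mul_zero]
    · simp only [hG, Set.indicator_of_notMem hs, lintegral_zero]
  have swap : (∫⁻ s, ∫⁻ u, G s u) = ∫⁻ u, ∫⁻ s, G s u :=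
    lintegral_lintegral_swap hGmeas.aemeasurable
  have inner_eq : ∀ u : ℝ, (∫⁻ s, G s u)
      = (Set.Ioc (0:ℝ) t).indicator (fun u' => eConv Φ Ψ (t - u') * X u') u := by
    intro u
    by_cases hu : u ∈ Set.Ioc (0:ℝ) t
    · rw [Set.indicator_of_mem hu]
      obtain ⟨hu0, hut⟩ := hu
      have hset : ∀ s : ℝ, G s u = (Set.Icc u t).indicator
          (fun s' => Φ (t - s') * (Ψ (s' - u) * X u)) s := by
        intro s
        simp only [hG, Set.indicator_apply, Set.mem_Ioc, Set.mem_Icc]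
        by_cases h1 : 0 < s ∧ s ≤ t
        · by_cases h2 : 0 < u ∧ u ≤ s
          · rw [if_pos h1, if_pos h2, if_pos ⟨h2.2, h1.2⟩]
          · rw [if_pos h1, if_neg h2,
              if_neg (fun h3 : u ≤ s ∧ s ≤ t => h2 ⟨hu0, h3.1⟩)]
        · rw [if_neg h1,
            if_neg (fun h3 : u ≤ s ∧ s ≤ t => h1 ⟨lt_of_lt_of_le hu0 h3.1, h3.2⟩)]
      have hmeasf : Measurable fun s : ℝ => Φ (t - s) * (Ψ (s - u) * X u) :=
        (hΦ.comp (measurable_const.sub measurable_id)).mul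
          ((hΨ.comp (measurable_id.sub measurable_const)).mul measurable_const)
      have hadd : Measurable fun v : ℝ => v + u := measurable_id.add_const u
      have hpre : (fun v : ℝ => v + u) ⁻¹' (Set.Icc u t) = Set.Icc 0 (t - u) := by
        ext x; simp only [Set.mem_preimage, Set.mem_Icc]
        constructor
        · rintro ⟨h1, h2⟩; exact ⟨by linarith, by linarith⟩
        · rintro ⟨h1, h2⟩; exact ⟨by linarith, by linarith⟩
      have hmeasg : Measurable fun v : ℝ => Φ (t - u - v) * Ψ v :=
        (hΦ.comp (measurable_const.sub measurable_id)).mul hΨ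
      calc (∫⁻ s, G s u)
          = ∫⁻ s in Set.Icc u t, Φ (t - s) * (Ψ (s - u) * X u) := by
            simp_rw [hset]; rw [lintegral_indicator measurableSet_Icc]
        _ = ∫⁻ s in Set.Icc u t, Φ (t - s) * (Ψ (s - u) * X u)
              ∂(Measure.map (fun v : ℝ => v + u) volume) := by
            rw [MeasureTheory.map_add_right_eq_self volume u]
        _ = ∫⁻ v in (fun v : ℝ => v + u) ⁻¹' (Set.Icc u t),
              Φ (t - (v + u)) * (Ψ (v + u - u) * X u) :=
            setLIntegral_map measurableSet_Icc hmeasf hadd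
        _ = ∫⁻ v in Set.Icc 0 (t - u), Φ (t - u - v) * Ψ v * X u := by
            rw [hpre]
            refine setLIntegral_congr_fun measurableSet_Icc ?_
            intro v _
            beta_reduce
            have hts : t - (v + u) = t - u - v := by ring
            rw [hts, add_sub_cancel_right, mul_assoc]
        _ = (∫⁻ v in Set.Icc 0 (t - u), Φ (t - u - v) * Ψ v) * X u :=
            lintegral_mul_const (X u) hmeasg
        _ = eConv Φ Ψ (t - u) * X u := by
            rw [eConv, ← setLIntegral_congr (Ioc_ae_eq_Icc (a := (0:ℝ)) (b := t - u))]
    · rw [Set.indicator_of_notMem hu]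
      have hz : ∀ s : ℝ, G s u = 0 := by
        intro s
        simp only [hG, Set.indicator_apply, Set.mem_Ioc]
        by_cases h1 : 0 < s ∧ s ≤ t
        · rw [if_pos h1, if_neg (fun h2 : 0 < u ∧ u ≤ s => hu ⟨h2.1, h2.2.trans h1.2⟩)]
        · rw [if_neg h1]
      simp_rw [hz]; exact lintegral_zero
  rw [lhs_eq, swap]
  simp_rw [inner_eq]
  rw [lintegral_indicator measurableSet_Ioc]
  rfl

lemma eConv_lintegral_le {Φ Ψ : ℝ → ℝ≥0∞} (hΦ : Measurable Φ) (hΨ : Measurable Ψ) (T : ℝ) :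
    (∫⁻ t in Set.Ioc 0 T, eConv Φ Ψ t)
      ≤ (∫⁻ x in Set.Ioc 0 T, Φ x) * ∫⁻ x in Set.Ioc 0 T, Ψ x := by
  have h1 : (∫⁻ t in Set.Ioc 0 T, eConv Φ Ψ t) = eConv (fun _ => 1) (eConv Φ Ψ) T := by
    rw [eConv]
    refine (setLIntegral_congr_fun measurableSet_Ioc
      (fun s _ => ?_)).symm
    rw [one_mul]
  rw [h1, eConv_assoc measurable_const hΦ hΨ, eConv]
  calc (∫⁻ s in Set.Ioc 0 T, eConv (fun _ => 1) Φ (T - s) * Ψ s)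
      ≤ ∫⁻ s in Set.Ioc 0 T, (∫⁻ x in Set.Ioc 0 T, Φ x) * Ψ s := by
        refine setLIntegral_mono' measurableSet_Ioc fun s hs => ?_
        refine mul_le_mul_left ?_ (Ψ s)
        calc eConv (fun _ => 1) Φ (T - s)
            = ∫⁻ u in Set.Ioc 0 (T - s), Φ u := by
              rw [eConv]
              exact setLIntegral_congr_fun measurableSet_Ioc
                (fun u _ => one_mul _)
          _ ≤ ∫⁻ x in Set.Ioc 0 T, Φ x :=
              lintegral_mono_set (Set.Ioc_subset_Ioc le_rfl (by linarith [hs.1]))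
    _ = (∫⁻ x in Set.Ioc 0 T, Φ x) * ∫⁻ x in Set.Ioc 0 T, Ψ x :=
        lintegral_const_mul _ hΨ

lemma eConv_ae_finite {Φ Ψ : ℝ → ℝ≥0∞} (hΦ : Measurable Φ) (hΨ : Measurable Ψ)
    (hΦf : ∀ T : ℝ, (∫⁻ x in Set.Ioc 0 T, Φ x) < ∞)
    (hΨf : ∀ T : ℝ, (∫⁻ x in Set.Ioc 0 T, Ψ x) < ∞) :
    ∀ᵐ t : ℝ ∂volume, 0 < t → eConv Φ Ψ t < ∞ := by
  have h : ∀ n : ℕ, ∀ᵐ t : ℝ ∂volume, t ∈ Set.Ioc (0:ℝ) n → eConv Φ Ψ t < ∞ := by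
    intro n
    have hfin : (∫⁻ t in Set.Ioc (0:ℝ) n, eConv Φ Ψ t) ≠ ∞ :=
      ((eConv_lintegral_le hΦ hΨ n).trans_lt (ENNReal.mul_lt_top (hΦf n) (hΨf n))).ne
    have h2 := ae_lt_top (eConv_measurable hΦ hΨ) hfin
    rwa [ae_restrict_iff' measurableSet_Ioc] at h2
  filter_upwards [ae_all_iff.mpr h] with t ht htpos
  obtain ⟨n, hn⟩ := exists_nat_ge t
  exact ht n ⟨htpos, hn⟩

lemma lint_fin {φ : ℝ → ℝ} (h : LocallyIntegrableOn φ (Set.Ici (0:ℝ))) (T : ℝ) :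
    (∫⁻ x in Set.Ioc 0 T, ENNReal.ofReal (φ x)) < ∞ := by
  have hint : IntegrableOn φ (Set.Icc 0 T) volume :=
    h.integrableOn_compact_subset Set.Icc_subset_Ici_self isCompact_Icc
  have hfi := hint.2
  rw [HasFiniteIntegral] at hfi
  refine lt_of_le_of_lt (lintegral_mono_set Set.Ioc_subset_Icc_self) (lt_of_le_of_lt ?_ hfi)
  refine lintegral_mono fun x => ?_
  exact ENNReal.ofReal_le_of_le_toReal (by simp [Real.norm_eq_abs, le_abs_self])

lemma conv0_eq_toReal {φ ψ : ℝ → ℝ} (hφm : Measurable φ) (hψm : Measurable ψ)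
    (hφ : ∀ x ≥ (0:ℝ), 0 ≤ φ x) (hψ : ∀ x ≥ (0:ℝ), 0 ≤ ψ x) {t : ℝ} (ht : 0 ≤ t) :
    conv0 φ ψ t = (eConv (fun x => ENNReal.ofReal (φ x))
      (fun x => ENNReal.ofReal (ψ x)) t).toReal := by
  rw [conv0, intervalIntegral.integral_of_le ht,
    integral_eq_lintegral_of_nonneg_ae ?hnn ?hm]
  case hnn =>
    exact (ae_restrict_iff' measurableSet_Ioc).mpr (Filter.Eventually.of_forall fun s hs =>
      mul_nonneg (hφ _ (by linarith [hs.1, hs.2])) (hψ _ hs.1.le))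
  case hm =>
    exact ((hφm.comp (measurable_const.sub measurable_id)).mul hψm).aestronglyMeasurable
  congr 1
  rw [eConv]
  refine (setLIntegral_congr_fun measurableSet_Ioc
    (fun s hs => ?_)).symm
  rw [ENNReal.ofReal_mul (hφ _ (by linarith [hs.1, hs.2]))]

theorem stmt_6 (k f r B : ℝ → ℝ)
    (hkm : Measurable k) (hfm : Measurable f) (hrm : Measurable r) (hBm : Measurable B)
    (hknn : ∀ t ≥ (0 : ℝ), 0 ≤ k t) (hfnn : ∀ t ≥ (0 : ℝ), 0 ≤ f t)
    (hrnn : ∀ t ≥ (0 : ℝ), 0 ≤ r t) (hBnn : ∀ t ≥ (0 : ℝ), 0 ≤ B t)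
    (hkli : LocallyIntegrableOn k (Set.Ici (0 : ℝ)))
    (hfli : LocallyIntegrableOn f (Set.Ici (0 : ℝ)))
    (hrli : LocallyIntegrableOn r (Set.Ici (0 : ℝ)))
    (hBli : LocallyIntegrableOn B (Set.Ici (0 : ℝ)))
    -- r is the resolvent of k :  r = k + k * r
    (hres : ∀ᵐ t : ℝ ∂volume, 0 ≤ t → r t = k t + conv0 k r t)
    -- B is a subsolution :  B ≤ f + k * B
    (hsub : ∀ᵐ t : ℝ ∂volume, 0 ≤ t → B t ≤ f t + conv0 k B t) :
    -- then B is dominated by the solution  y = f + r * f  of  y = f + k * y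
    ∀ᵐ t : ℝ ∂volume, 0 ≤ t → B t ≤ f t + conv0 r f t := by
  set K : ℝ → ℝ≥0∞ := fun x => ENNReal.ofReal (k x) with hK
  set F : ℝ → ℝ≥0∞ := fun x => ENNReal.ofReal (f x) with hF
  set R : ℝ → ℝ≥0∞ := fun x => ENNReal.ofReal (r x) with hR
  set Bb : ℝ → ℝ≥0∞ := fun x => ENNReal.ofReal (B x) with hBb
  have hKm : Measurable K := ENNReal.measurable_ofReal.comp hkm
  have hFm : Measurable F := ENNReal.measurable_ofReal.comp hfm
  have hRm : Measurable R := ENNReal.measurable_ofReal.comp hrm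
  have hBbm : Measurable Bb := ENNReal.measurable_ofReal.comp hBm
  have hKf := lint_fin hkli
  have hFf := lint_fin hfli
  have hRf := lint_fin hrli
  have hBf := lint_fin hBli
  have h1 : ∀ᵐ t : ℝ ∂volume, 0 < t → eConv K Bb t < ∞ := eConv_ae_finite hKm hBbm hKf hBf
  have h2 : ∀ᵐ t : ℝ ∂volume, 0 < t → eConv K R t < ∞ := eConv_ae_finite hKm hRm hKf hRf
  have h3 : ∀ᵐ t : ℝ ∂volume, 0 < t → eConv R Bb t < ∞ := eConv_ae_finite hRm hBbm hRf hBf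
  have h4 : ∀ᵐ t : ℝ ∂volume, 0 < t → eConv R F t < ∞ := eConv_ae_finite hRm hFm hRf hFf
  -- resolvent equation in ℝ≥0∞
  have hres' : ∀ᵐ s : ℝ ∂volume, 0 < s → K s + eConv K R s = R s := by
    filter_upwards [hres, h2] with s hrs h2s hspos
    have htr : conv0 k r s = (eConv K R s).toReal := conv0_eq_toReal hkm hrm hknn hrnn hspos.le
    have : R s = ENNReal.ofReal (k s + (eConv K R s).toReal) := by
      show ENNReal.ofReal (r s) = _
      rw [hrs hspos.le, htr]
    rw [this, ENNReal.ofReal_add (hknn s hspos.le) ENNReal.toReal_nonneg,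
      ENNReal.ofReal_toReal (h2s hspos).ne]
  -- subsolution inequality in ℝ≥0∞
  have hsub' : ∀ᵐ s : ℝ ∂volume, 0 < s → Bb s ≤ F s + eConv K Bb s := by
    filter_upwards [hsub] with s hss hspos
    have htr : conv0 k B s = (eConv K Bb s).toReal := conv0_eq_toReal hkm hBm hknn hBnn hspos.le
    calc Bb s ≤ ENNReal.ofReal (f s + (eConv K Bb s).toReal) := by
          rw [hBb]; exact ENNReal.ofReal_le_ofReal (by rw [← htr]; exact hss hspos.le)
      _ = F s + ENNReal.ofReal ((eConv K Bb s).toReal) := by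
          rw [ENNReal.ofReal_add (hfnn s hspos.le) ENNReal.toReal_nonneg]
      _ ≤ F s + eConv K Bb s := add_le_add_right ENNReal.ofReal_toReal_le _
  -- step 1 : convolve the subsolution inequality with R
  have hstep1 : ∀ t : ℝ, eConv R Bb t ≤ eConv R F t + eConv R (eConv K Bb) t := by
    intro t
    have hmono : eConv R Bb t ≤ ∫⁻ s in Set.Ioc 0 t, R (t - s) * (F s + eConv K Bb s) := by
      rw [eConv]
      refine lintegral_mono_ae ?_
      filter_upwards [ae_restrict_of_ae hsub', ae_restrict_mem measurableSet_Ioc]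
        with s hss hsmem
      exact mul_le_mul_right (hss hsmem.1) _
    refine hmono.trans (le_of_eq ?_)
    have hmeas : Measurable fun s : ℝ => R (t - s) * F s :=
      (hRm.comp (measurable_const.sub measurable_id)).mul hFm
    calc (∫⁻ s in Set.Ioc 0 t, R (t - s) * (F s + eConv K Bb s))
        = ∫⁻ s in Set.Ioc 0 t, (R (t - s) * F s + R (t - s) * eConv K Bb s) := by
          refine setLIntegral_congr_fun measurableSet_Ioc
            (fun s _ => ?_)
          rw [mul_add]
      _ = eConv R F t + eConv R (eConv K Bb) t := lintegral_add_left hmeas _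
  -- step 2 : the resolvent identity convolved with Bb
  have hstep2 : ∀ t : ℝ, eConv R (eConv K Bb) t + eConv K Bb t = eConv R Bb t := by
    intro t
    have hKBm : Measurable (eConv K Bb) := eConv_measurable hKm hBbm
    have hRKm : Measurable (eConv R K) := eConv_measurable hRm hKm
    rw [eConv_assoc hRm hKm hBbm, eConv_comm hRKm hBbm t, eConv_comm hKm hBbm t,
      eConv_comm hRm hBbm t]
    have hmeas : Measurable fun s : ℝ => Bb (t - s) * eConv R K s :=
      (hBbm.comp (measurable_const.sub measurable_id)).mul hRKm
    calc eConv Bb (eConv R K) t + eConv Bb K t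
        = ∫⁻ s in Set.Ioc 0 t, (Bb (t - s) * eConv R K s + Bb (t - s) * K s) :=
          (lintegral_add_left hmeas _).symm
      _ = ∫⁻ s in Set.Ioc 0 t, Bb (t - s) * R s := by
          refine lintegral_congr_ae ?_
          filter_upwards [ae_restrict_of_ae hres', ae_restrict_mem measurableSet_Ioc]
            with s hrs hsmem
          rw [← mul_add, eConv_comm hRm hKm s, ← add_comm (K s) (eConv K R s), hrs hsmem.1]
      _ = eConv Bb R t := rfl
  -- step 3 : cancel eConv R Bb
  have hcancel : ∀ᵐ t : ℝ ∂volume, 0 < t → eConv K Bb t ≤ eConv R F t := by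
    filter_upwards [h3] with t h3t htpos
    have key : eConv K Bb t + eConv R Bb t ≤ eConv R F t + eConv R Bb t := by
      calc eConv K Bb t + eConv R Bb t
          ≤ eConv K Bb t + (eConv R F t + eConv R (eConv K Bb) t) :=
            add_le_add_right (hstep1 t) _
        _ = eConv R F t + (eConv R (eConv K Bb) t + eConv K Bb t) := by ring
        _ = eConv R F t + eConv R Bb t := by rw [hstep2 t]
    exact (ENNReal.add_le_add_iff_right (h3t htpos).ne).mp key
  -- conclusion
  have h0 : ∀ᵐ t : ℝ ∂volume, t ≠ (0:ℝ) := by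
    refine ae_iff.mpr ?_
    have : {a : ℝ | ¬ a ≠ 0} = {0} := by ext a; simp
    rw [this]
    exact measure_singleton 0
  filter_upwards [hsub', hcancel, h4, h0] with t hsubt hcant h4t hne ht0
  have htpos : 0 < t := lt_of_le_of_ne ht0 (Ne.symm hne)
  have hBt : Bb t ≤ F t + eConv R F t :=
    (hsubt htpos).trans (add_le_add_right (hcant htpos) _)
  have hfin : F t + eConv R F t ≠ ∞ :=
    ENNReal.add_ne_top.mpr ⟨ENNReal.ofReal_ne_top, (h4t htpos).ne⟩
  calc B t = (Bb t).toReal := (ENNReal.toReal_ofReal (hBnn t ht0)).symm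
    _ ≤ (F t + eConv R F t).toReal := ENNReal.toReal_mono hfin hBt
    _ = f t + conv0 r f t := by
        rw [ENNReal.toReal_add ENNReal.ofReal_ne_top (h4t htpos).ne,
          ENNReal.toReal_ofReal (hfnn t ht0),
          ← conv0_eq_toReal hrm hfm hrnn hfnn ht0]
end

section
/- Let μ > 0, x_m ≥ 0 and 0 < ρ < μ/5. Let g : [0,∞) → (0,∞) be continuous, bounded and strictly decreasing, and let β : [x_m,∞) → [0,∞) be strictly increasing with a bounded and globally Lipschitz first derivative. Assume R₀ := ∫₀^∞ β(x_m + g(0)a) e^{−μa} da < 1. Let B : ℝ → [0,∞) be measurable and locally integrable with ∫_{−∞}^0 e^{ρs} B(s) ds < ∞, and suppose that for almost every t ≥ 0, B(t) = ∫₀^∞ β(S(a,t)) e^{−μa} B(t−a) da, where S(a,t) = x_m + ∫₀^a g( ∫_τ^∞ e^{−μα} B(t−a+τ−α) dα ) dτ. Then B tends to zero exponentially: there exist constants C > 0 and ε > 0 such that B(t) ≤ C e^{−εt} for almost every t ≥ 0. -/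
open MeasureTheory Set

/-- `S(a,t)`: the height at time `t` of an individual of age `a`, given the
population birth rate history `B`. -/
noncomputable def Sfun (μ xm : ℝ) (g : ℝ → ℝ) (B : ℝ → ℝ) (a t : ℝ) : ℝ :=
  xm + ∫ τ in (0 : ℝ)..a, g (∫ α in Set.Ioi τ, Real.exp (-μ * α) * B (t - a + τ - α))

/-- auxiliary: `w * exp (-δ w) ≤ 1/δ`. -/
lemma aux_wexp {δ w : ℝ} (hδ : 0 < δ) (hw : 0 ≤ w) : w * Real.exp (-δ * w) ≤ 1/δ := by
  have h1 : δ * w ≤ Real.exp (δ * w) := by nlinarith [Real.add_one_le_exp (δ * w)]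
  rw [neg_mul, Real.exp_neg, mul_inv_le_iff₀ (Real.exp_pos _), one_div]
  calc w = δ⁻¹ * (δ * w) := by field_simp
    _ ≤ δ⁻¹ * Real.exp (δ * w) := mul_le_mul_of_nonneg_left h1 (by positivity)

/-- auxiliary: `exp x - 1 ≤ x * exp x` for `x ≥ 0`. -/
lemma aux_exp_sub_one {x : ℝ} : Real.exp x - 1 ≤ x * Real.exp x := by
  have hu : Real.exp x * Real.exp (-x) = 1 := by rw [← Real.exp_add]; simp
  have h2 := mul_le_mul_of_nonneg_left (Real.add_one_le_exp (-x)) (Real.exp_pos x).le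
  nlinarith [Real.exp_pos x]

/-- auxiliary: `(c0 + c1 w) exp (-δ w) ≤ c0 + c1 / δ`. -/
lemma aux_lin_exp {c0 c1 δ w : ℝ} (hc0 : 0 ≤ c0) (hc1 : 0 ≤ c1) (hδ : 0 < δ)
    (hw : 0 ≤ w) : (c0 + c1 * w) * Real.exp (-δ * w) ≤ c0 + c1 * (1/δ) := by
  have e1 : Real.exp (-δ * w) ≤ 1 := by
    rw [← Real.exp_zero]; apply Real.exp_le_exp.2; nlinarith
  have e2 := aux_wexp hδ hw
  calc (c0 + c1 * w) * Real.exp (-δ * w)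
      = c0 * Real.exp (-δ * w) + c1 * (w * Real.exp (-δ * w)) := by ring
    _ ≤ c0 * 1 + c1 * (1/δ) :=
        add_le_add (mul_le_mul_of_nonneg_left e1 hc0) (mul_le_mul_of_nonneg_left e2 hc1)
    _ = c0 + c1 * (1/δ) := by ring

/-- auxiliary integrability of a linear-quadratic polynomial times decaying exponential. -/
lemma aux_poly_int {c0 c1 μ : ℝ} (hc0 : 0 ≤ c0) (hc1 : 0 ≤ c1) (hμ : 0 < μ) :
    MeasureTheory.IntegrableOn
      (fun a : ℝ => (c0 * a + c1 * a ^ 2) * Real.exp (-(μ/2) * a)) (Set.Ioi 0) := by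
  have hint : IntegrableOn (fun a : ℝ => Real.exp (-(μ/4) * a)) (Set.Ioi 0) :=
    exp_neg_integrableOn_Ioi 0 (by linarith)
  refine Integrable.mono' (hint.const_mul ((c0 * (8/μ) + c1 * (8/μ)^2))) ?_ ?_
  · exact (Continuous.aestronglyMeasurable (by continuity)).restrict
  · filter_upwards [ae_restrict_mem measurableSet_Ioi] with x hx
    have hx0 : (0:ℝ) < x := hx
    have A1 : x * Real.exp (-(μ/4) * x) ≤ 4/μ := by
      have h := aux_wexp (δ := μ/4) (by linarith : (0:ℝ) < μ/4) hx0.le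
      calc x * Real.exp (-(μ/4) * x) ≤ 1/(μ/4) := h
        _ = 4/μ := by field_simp
    have A2 : x * Real.exp (-(μ/8) * x) ≤ 8/μ := by
      have h := aux_wexp (δ := μ/8) (by linarith : (0:ℝ) < μ/8) hx0.le
      calc x * Real.exp (-(μ/8) * x) ≤ 1/(μ/8) := h
        _ = 8/μ := by field_simp
    have hE : Real.exp (-(μ/2)*x) = Real.exp (-(μ/4)*x) * Real.exp (-(μ/4)*x) := by
      rw [← Real.exp_add]; congr 1; ring
    have hE4 : Real.exp (-(μ/4)*x) = Real.exp (-(μ/8)*x) * Real.exp (-(μ/8)*x) := by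
      rw [← Real.exp_add]; congr 1; ring
    rw [Real.norm_eq_abs, abs_of_nonneg (by positivity)]
    have e4 := Real.exp_pos (-(μ/4)*x)
    have e8 := Real.exp_pos (-(μ/8)*x)
    have hμ4 : (4:ℝ)/μ ≤ 8/μ := by
      rw [div_le_div_iff₀ hμ hμ]; nlinarith
    have p1 : c0 * x * Real.exp (-(μ/2)*x) ≤ c0 * (8/μ) * Real.exp (-(μ/4)*x) := by
      rw [hE]
      nlinarith [mul_le_mul_of_nonneg_left (mul_le_mul_of_nonneg_right A1 e4.le) hc0,
        mul_le_mul_of_nonneg_left (mul_le_mul_of_nonneg_right hμ4 e4.le) hc0]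
    have p2 : c1 * x^2 * Real.exp (-(μ/2)*x) ≤ c1 * (8/μ)^2 * Real.exp (-(μ/4)*x) := by
      have sq : x^2 * Real.exp (-(μ/4)*x) ≤ (8/μ)^2 := by
        rw [hE4]; nlinarith [mul_le_mul A2 A2 (by positivity) (by positivity)]
      rw [hE]
      nlinarith [mul_le_mul_of_nonneg_left (mul_le_mul_of_nonneg_right sq e4.le) hc1]
    nlinarith [p1, p2]

/-- auxiliary pointwise kernel bound used for the `ε`-shifted kernel. -/
lemma aux_kernel_eps {b c0 c1 μ ε a : ℝ} (hb0 : 0 ≤ b) (hblin : b ≤ c0 + c1 * a)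
    (hc0 : 0 ≤ c0) (hc1 : 0 ≤ c1) (hε : 0 < ε) (hεμ : ε ≤ μ/4) (ha : 0 ≤ a) :
    b * Real.exp (-μ * a) * Real.exp (ε * a)
      ≤ b * Real.exp (-μ * a) + ε * ((c0 * a + c1 * a ^ 2) * Real.exp (-(μ/2) * a)) := by
  have h1 : Real.exp (ε*a) - 1 ≤ ε*a*Real.exp (ε*a) := aux_exp_sub_one
  have h2 : Real.exp (ε*a) ≤ Real.exp ((μ/4)*a) := Real.exp_le_exp.2 (by nlinarith)
  have t1 : Real.exp (ε*a) - 1 ≤ ε*a*Real.exp ((μ/4)*a) :=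
    h1.trans (mul_le_mul_of_nonneg_left h2 (by positivity))
  have hEE : Real.exp (-μ*a) * Real.exp ((μ/4)*a) ≤ Real.exp (-(μ/2)*a) := by
    rw [← Real.exp_add]; apply Real.exp_le_exp.2; nlinarith
  have hnn1 : 0 ≤ Real.exp (ε*a) - 1 := by
    have := Real.one_le_exp (by positivity : (0:ℝ) ≤ ε*a); linarith
  have s1 : b * Real.exp (-μ*a) * (Real.exp (ε*a) - 1)
      ≤ (c0 + c1*a) * Real.exp (-μ*a) * (ε*a*Real.exp ((μ/4)*a)) := by
    apply mul_le_mul (mul_le_mul_of_nonneg_right hblin (Real.exp_pos _).le) t1 hnn1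
    positivity
  have s2 : (c0 + c1*a) * Real.exp (-μ*a) * (ε*a*Real.exp ((μ/4)*a))
      = ε * ((c0*a + c1*a^2) * (Real.exp (-μ*a) * Real.exp ((μ/4)*a))) := by ring
  have s3 : ε * ((c0*a + c1*a^2) * (Real.exp (-μ*a)*Real.exp ((μ/4)*a)))
      ≤ ε * ((c0*a+c1*a^2)*Real.exp (-(μ/2)*a)) :=
    mul_le_mul_of_nonneg_left (mul_le_mul_of_nonneg_left hEE (by positivity)) hε.le
  have key : b * Real.exp (-μ*a) * Real.exp (ε*a)
      = b*Real.exp (-μ*a) + b*Real.exp (-μ*a)*(Real.exp (ε*a)-1) := by ring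
  rw [key]; rw [s2] at s1; linarith [s1, s3]

set_option maxHeartbeats 1000000 in
theorem stmt_7 (μ xm ρ : ℝ) (hμ : 0 < μ) (hxm : 0 ≤ xm) (hρ0 : 0 < ρ) (hρ : ρ < μ / 5)
    (g β β' : ℝ → ℝ)
    (hgc : ContinuousOn g (Set.Ici (0 : ℝ))) (hgpos : ∀ z ≥ (0 : ℝ), 0 < g z)
    (hgbd : ∃ C : ℝ, ∀ z ≥ (0 : ℝ), g z ≤ C)
    (hganti : StrictAntiOn g (Set.Ici (0 : ℝ)))
    (hβnn : ∀ x ≥ xm, 0 ≤ β x) (hβmono : StrictMonoOn β (Set.Ici xm))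
    (hβ' : ∀ s ∈ Set.Ici xm, HasDerivWithinAt β (β' s) (Set.Ici xm) s)
    (hβ'bd : ∃ C : ℝ, ∀ s ≥ xm, |β' s| ≤ C)
    (hβ'lip : ∃ L : NNReal, LipschitzOnWith L β' (Set.Ici xm))
    -- the kernel of the virgin-environment linearisation is integrable and R₀ < 1
    (hR0int : IntegrableOn (fun a => β (xm + g 0 * a) * Real.exp (-μ * a)) (Set.Ioi (0 : ℝ)))
    (hR0 : (∫ a in Set.Ioi (0 : ℝ), β (xm + g 0 * a) * Real.exp (-μ * a)) < 1)
    (B : ℝ → ℝ) (hBm : Measurable B) (hBnn : ∀ t : ℝ, 0 ≤ B t)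
    (hBli : LocallyIntegrable B volume)
    (hBhist : IntegrableOn (fun s => Real.exp (ρ * s) * B s) (Set.Iio (0 : ℝ)))
    -- B solves the renewal equation for t ≥ 0
    (hBeq : ∀ᵐ t : ℝ ∂volume, 0 ≤ t →
      B t = ∫ a in Set.Ioi (0 : ℝ), β (Sfun μ xm g B a t) * Real.exp (-μ * a) * B (t - a)) :
    -- then B tends to zero exponentially
    ∃ C : ℝ, 0 < C ∧ ∃ ε : ℝ, 0 < ε ∧
      ∀ᵐ t : ℝ ∂volume, 0 ≤ t → B t ≤ C * Real.exp (-ε * t) := by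
  obtain ⟨Cβ, hCβ⟩ := hβ'bd
  have hCβ0 : 0 ≤ Cβ := le_trans (abs_nonneg _) (hCβ xm le_rfl)
  have hg0 : 0 < g 0 := hgpos 0 le_rfl
  set c0 : ℝ := β xm with hc0def
  set c1 : ℝ := Cβ * g 0 with hc1def
  have hc0nn : 0 ≤ c0 := hβnn xm le_rfl
  have hc1nn : 0 ≤ c1 := mul_nonneg hCβ0 hg0.le
  have hβc : ContinuousOn β (Set.Ici xm) := fun s hs => (hβ' s hs).continuousWithinAt
  set βl : ℝ → ℝ := fun a => β (xm + g 0 * max a 0) with hβldef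
  have hmemβl : ∀ a : ℝ, xm + g 0 * max a 0 ∈ Set.Ici xm := by
    intro a
    have h0 : 0 ≤ g 0 * max a 0 := mul_nonneg hg0.le (le_max_right a 0)
    simp only [mem_Ici]; linarith
  have hβlc : Continuous βl := hβc.comp_continuous (by continuity) hmemβl
  have hβlnn : ∀ a : ℝ, 0 ≤ βl a := fun a => hβnn _ (hmemβl a)
  have hβlself : ∀ a : ℝ, 0 ≤ a → βl a = β (xm + g 0 * a) := by
    intro a ha; rw [hβldef]; simp only [max_eq_left ha]
  have hβllin : ∀ a : ℝ, 0 ≤ a → βl a ≤ c0 + c1 * a := by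
    intro a ha
    rw [hβlself a ha]
    have hy : xm ≤ xm + g 0 * a := by nlinarith
    have h := (convex_Ici xm).norm_image_sub_le_of_norm_hasDerivWithin_le hβ'
      (fun x hx => by simpa using hCβ x hx) (self_mem_Ici) hy
    rw [Real.norm_eq_abs, Real.norm_eq_abs, abs_of_nonneg (sub_nonneg.2 hy)] at h
    have h2 := (abs_le.1 h).2
    rw [hc1def, hc0def]; nlinarith [h2]
  -- bounds on Sfun
  have hS : ∀ t a : ℝ, 0 < a →
      xm ≤ Sfun μ xm g B a t ∧ Sfun μ xm g B a t ≤ xm + g 0 * a := by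
    intro t a ha
    have henv : ∀ τ : ℝ, 0 ≤ ∫ α in Set.Ioi τ, Real.exp (-μ * α) * B (t - a + τ - α) :=
      fun τ => setIntegral_nonneg measurableSet_Ioi fun α _ =>
        mul_nonneg (Real.exp_pos _).le (hBnn _)
    have hgle : ∀ τ : ℝ,
        g (∫ α in Set.Ioi τ, Real.exp (-μ * α) * B (t - a + τ - α)) ≤ g 0 :=
      fun τ => hganti.antitoneOn (self_mem_Ici) (henv τ) (henv τ)
    have hgnn : ∀ τ : ℝ,
        0 ≤ g (∫ α in Set.Ioi τ, Real.exp (-μ * α) * B (t - a + τ - α)) :=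
      fun τ => (hgpos _ (henv τ)).le
    constructor
    · have h0 : 0 ≤ ∫ τ in (0:ℝ)..a,
          g (∫ α in Set.Ioi τ, Real.exp (-μ * α) * B (t - a + τ - α)) :=
        intervalIntegral.integral_nonneg ha.le fun u _ => hgnn u
      unfold Sfun; linarith
    · have h := intervalIntegral.norm_integral_le_of_norm_le_const
        (C := g 0) (a := (0:ℝ)) (b := a)
        (f := fun τ => g (∫ α in Set.Ioi τ, Real.exp (-μ * α) * B (t - a + τ - α)))
        (fun x _ => by rw [Real.norm_eq_abs, abs_of_nonneg (hgnn x)]; exact hgle x)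
      rw [Real.norm_eq_abs] at h
      have h2 := (abs_le.1 h).2
      rw [sub_zero, abs_of_pos ha] at h2
      unfold Sfun; nlinarith [h2]
  have hβS : ∀ t a : ℝ, 0 < a →
      0 ≤ β (Sfun μ xm g B a t) ∧ β (Sfun μ xm g B a t) ≤ βl a := by
    intro t a ha
    obtain ⟨h1, h2⟩ := hS t a ha
    refine ⟨hβnn _ h1, ?_⟩
    rw [hβlself a ha.le]
    have hmem2 : xm + g 0 * a ∈ Set.Ici xm := by
      simp only [mem_Ici]; nlinarith
    exact hβmono.monotoneOn h1 hmem2 h2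
  -- basic objects
  set f : ℝ → ENNReal := fun t => ENNReal.ofReal (B t) with hfdef
  have hfm : Measurable f := ENNReal.measurable_ofReal.comp hBm
  set k : ℝ → ENNReal := fun a => ENNReal.ofReal (βl a * Real.exp (-μ * a)) with hkdef
  have hexpc : ∀ c : ℝ, Continuous fun a : ℝ => Real.exp (c * a) :=
    fun c => Real.continuous_exp.comp (continuous_const.mul continuous_id)
  have hkc : Continuous fun a => βl a * Real.exp (-μ * a) := hβlc.mul (hexpc (-μ))
  have hkm : Measurable k := ENNReal.measurable_ofReal.comp hkc.measurable
  -- step 1: the comparison renewal inequality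
  have key1 : ∀ᵐ t : ℝ ∂volume, 0 ≤ t →
      f t ≤ ∫⁻ a in Set.Ioi (0:ℝ), k a * f (t - a) := by
    filter_upwards [hBeq] with t hBt ht
    rw [hfdef]; simp only
    rw [hBt ht]
    set F : ℝ → ℝ := fun a => β (Sfun μ xm g B a t) * Real.exp (-μ * a) * B (t - a)
      with hFdef
    have hFnn : ∀ a ∈ Set.Ioi (0:ℝ), 0 ≤ F a := fun a ha =>
      mul_nonneg (mul_nonneg ((hβS t a ha).1) (Real.exp_pos _).le) (hBnn _)
    have hFle : ∀ a ∈ Set.Ioi (0:ℝ), ENNReal.ofReal (F a) ≤ k a * f (t - a) := by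
      intro a ha
      rw [hkdef, hfdef]; simp only
      rw [← ENNReal.ofReal_mul (mul_nonneg (hβlnn a) (Real.exp_pos _).le)]
      refine ENNReal.ofReal_le_ofReal ?_
      exact mul_le_mul_of_nonneg_right
        (mul_le_mul_of_nonneg_right ((hβS t a ha).2) (Real.exp_pos _).le) (hBnn _)
    by_cases hInt : IntegrableOn F (Set.Ioi 0) volume
    · rw [ofReal_integral_eq_lintegral_ofReal hInt
        ((ae_restrict_iff' measurableSet_Ioi).2 (ae_of_all _ hFnn))]
      refine lintegral_mono_ae ?_
      filter_upwards [ae_restrict_mem measurableSet_Ioi] with a ha using hFle a ha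
    · rw [integral_undef hInt]; simp
  -- choice of ε
  set R0 : ℝ := ∫ a in Set.Ioi (0:ℝ), β (xm + g 0 * a) * Real.exp (-μ * a) with hR0def
  have hR0nn : 0 ≤ R0 := setIntegral_nonneg measurableSet_Ioi fun a ha =>
    mul_nonneg (hβnn _ (by nlinarith [(mem_Ioi.1 ha).le] : xm ≤ xm + g 0 * a))
      (Real.exp_pos _).le
  set h2f : ℝ → ℝ := fun a => (c0 * a + c1 * a ^ 2) * Real.exp (-(μ/2) * a) with hh2def
  have hh2c : Continuous h2f := by
    rw [hh2def]
    exact ((continuous_const.mul continuous_id).add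
      (continuous_const.mul (continuous_pow 2))).mul (hexpc (-(μ/2)))
  have hMint : IntegrableOn h2f (Set.Ioi 0) := by
    rw [hh2def]; exact aux_poly_int hc0nn hc1nn hμ
  set M : ℝ := ∫ a in Set.Ioi (0:ℝ), h2f a with hMdef
  have hMnn : 0 ≤ M := setIntegral_nonneg measurableSet_Ioi fun a ha => by
    have : (0:ℝ) < a := ha
    rw [hh2def]; positivity
  set ε : ℝ := min (ρ/2) (min (μ/4) ((1 - R0)/(M+1))) with hεdef
  have hε0 : 0 < ε := by
    refine lt_min (by linarith) (lt_min (by linarith) ?_)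
    have h1 : 0 < 1 - R0 := by rw [hR0def]; linarith [hR0]
    positivity
  have hερ : ε ≤ ρ/2 := min_le_left _ _
  have hεμ : ε ≤ μ/4 := le_trans (min_le_right _ _) (min_le_left _ _)
  have hsum : R0 + ε * M < 1 := by
    have h1 : 0 < 1 - R0 := by rw [hR0def]; linarith [hR0]
    have h2 : ε ≤ (1 - R0)/(M+1) := le_trans (min_le_right _ _) (min_le_right _ _)
    have h3 : ε * (M+1) ≤ 1 - R0 := by
      rw [← le_div_iff₀ (by linarith : (0:ℝ) < M+1)]; exact h2
    nlinarith
  -- the ε-shifted kernel and its integral θ < 1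
  set kε : ℝ → ENNReal := fun a => k a * ENNReal.ofReal (Real.exp (ε * a)) with hkεdef
  have hkεm : Measurable kε :=
    hkm.mul (ENNReal.measurable_ofReal.comp (hexpc ε).measurable)
  have hkεne : ∀ a, kε a ≠ ⊤ := fun a =>
    ENNReal.mul_ne_top ENNReal.ofReal_ne_top ENNReal.ofReal_ne_top
  set θ : ENNReal := ∫⁻ a in Set.Ioi (0:ℝ), kε a with hθdef
  have hθle : θ ≤ ENNReal.ofReal (R0 + ε * M) := by
    have hptwise : ∀ a ∈ Set.Ioi (0:ℝ),
        kε a ≤ k a + ENNReal.ofReal (ε * h2f a) := by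
      intro a ha
      have ha0 : (0:ℝ) < a := ha
      have hreal := aux_kernel_eps (hβlnn a) (hβllin a ha0.le) hc0nn hc1nn hε0 hεμ ha0.le
      calc kε a = ENNReal.ofReal (βl a * Real.exp (-μ * a) * Real.exp (ε * a)) := by
            rw [hkεdef, hkdef]; simp only
            rw [← ENNReal.ofReal_mul (mul_nonneg (hβlnn a) (Real.exp_pos _).le)]
        _ ≤ ENNReal.ofReal (βl a * Real.exp (-μ * a) + ε * h2f a) :=
            ENNReal.ofReal_le_ofReal (by rw [hh2def]; exact hreal)
        _ ≤ k a + ENNReal.ofReal (ε * h2f a) := by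
            rw [hkdef]; exact ENNReal.ofReal_add_le
    have hint1 : (∫⁻ a in Set.Ioi (0:ℝ), k a) = ENNReal.ofReal R0 := by
      rw [setLIntegral_congr_fun_ae measurableSet_Ioi (ae_of_all _
        (fun a (ha : a ∈ Set.Ioi (0:ℝ)) => by
          rw [hkdef]; simp only
          rw [hβlself a (le_of_lt ha)] :
        ∀ a ∈ Set.Ioi (0:ℝ), k a
          = ENNReal.ofReal (β (xm + g 0 * a) * Real.exp (-μ * a))))]
      exact (ofReal_integral_eq_lintegral_ofReal hR0int
        ((ae_restrict_iff' measurableSet_Ioi).2 (ae_of_all _ fun a ha =>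
          mul_nonneg (hβnn _ (by nlinarith [(mem_Ioi.1 ha).le] : xm ≤ xm + g 0 * a))
            (Real.exp_pos _).le))).symm
    have hint2 : (∫⁻ a in Set.Ioi (0:ℝ), ENNReal.ofReal (ε * h2f a))
        = ENNReal.ofReal ε * ENNReal.ofReal M := by
      have : ∀ a : ℝ, ENNReal.ofReal (ε * h2f a)
          = ENNReal.ofReal ε * ENNReal.ofReal (h2f a) :=
        fun a => ENNReal.ofReal_mul hε0.le
      rw [lintegral_congr this, lintegral_const_mul' _ _ ENNReal.ofReal_ne_top]
      congr 1
      exact (ofReal_integral_eq_lintegral_ofReal hMint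
        ((ae_restrict_iff' measurableSet_Ioi).2 (ae_of_all _ fun a ha => by
          have : (0:ℝ) < a := ha
          rw [hh2def]; positivity))).symm
    calc θ ≤ ∫⁻ a in Set.Ioi (0:ℝ), (k a + ENNReal.ofReal (ε * h2f a)) := by
          rw [hθdef]
          refine lintegral_mono_ae ?_
          filter_upwards [ae_restrict_mem measurableSet_Ioi] with a ha using hptwise a ha
      _ = ENNReal.ofReal R0 + ENNReal.ofReal ε * ENNReal.ofReal M := by
          rw [lintegral_add_left hkm, hint1, hint2]
      _ = ENNReal.ofReal (R0 + ε * M) := by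
          rw [← ENNReal.ofReal_mul hε0.le,
            ← ENNReal.ofReal_add hR0nn (by positivity)]
  have hθ1 : θ < 1 := hθle.trans_lt (by rw [ENNReal.ofReal_lt_one]; exact hsum)
  have hθtop : θ ≠ ⊤ := (lt_of_lt_of_le hθ1 le_top).ne
  -- the history integral
  set Hist : ENNReal := ∫⁻ s in Set.Iio (0:ℝ), ENNReal.ofReal (Real.exp (ρ * s) * B s)
    with hHdef
  have hHist : Hist ≠ ⊤ := by
    have h1 : Hist ≤ ∫⁻ s in Set.Iio (0:ℝ), (‖Real.exp (ρ * s) * B s‖₊ : ENNReal) := by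
      rw [hHdef]; exact lintegral_mono fun s => Real.ofReal_le_enorm _
    exact (lt_of_le_of_lt h1 hBhist.2).ne
  -- pointwise bound for the history part of the kernel
  have hμρ : 0 < μ - ρ := by linarith
  set C2 : ℝ := c0 + c1 * (1/(μ - ρ)) with hC2def
  have hC2nn : 0 ≤ C2 := by
    rw [hC2def]
    exact add_nonneg hc0nn (mul_nonneg hc1nn (le_of_lt (one_div_pos.2 hμρ)))
  have hker2 : ∀ t s : ℝ, 0 ≤ t → s < 0 →
      βl (t - s) * Real.exp (-μ * (t - s)) ≤ C2 * Real.exp (-ρ * t) * Real.exp (ρ * s) := by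
    intro t s ht hs
    have hw : 0 < t - s := by linarith
    have hlin := hβllin (t - s) hw.le
    have key := aux_lin_exp hc0nn hc1nn hμρ hw.le
    have hsplit : Real.exp (-μ * (t-s))
        = Real.exp (-(μ-ρ) * (t-s)) * Real.exp (-ρ * (t-s)) := by
      rw [← Real.exp_add]; congr 1; ring
    have hρsplit : Real.exp (-ρ * t) * Real.exp (ρ * s) = Real.exp (-ρ * (t-s)) := by
      rw [← Real.exp_add]; congr 1; ring
    have step1 : βl (t-s) * Real.exp (-μ * (t-s))
        ≤ ((c0 + c1 * (t-s)) * Real.exp (-(μ-ρ) * (t-s))) * Real.exp (-ρ * (t-s)) := by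
      rw [hsplit, ← mul_assoc]
      exact mul_le_mul_of_nonneg_right
        (mul_le_mul_of_nonneg_right hlin (Real.exp_pos _).le) (Real.exp_pos _).le
    have step2 : ((c0 + c1 * (t-s)) * Real.exp (-(μ-ρ) * (t-s))) * Real.exp (-ρ * (t-s))
        ≤ C2 * Real.exp (-ρ * (t-s)) := by
      rw [hC2def]
      exact mul_le_mul_of_nonneg_right key (Real.exp_pos _).le
    calc βl (t-s) * Real.exp (-μ * (t-s)) ≤ C2 * Real.exp (-ρ * (t-s)) :=
          step1.trans step2
      _ = C2 * Real.exp (-ρ * t) * Real.exp (ρ * s) := by rw [mul_assoc, hρsplit]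
  -- split the renewal inequality at a = t
  have key2 : ∀ᵐ t : ℝ ∂volume, 0 ≤ t →
      f t ≤ (∫⁻ a in Set.Ioc (0:ℝ) t, k a * f (t - a))
        + ENNReal.ofReal (C2 * Real.exp (-ρ * t)) * Hist := by
    filter_upwards [key1] with t h1 ht
    refine (h1 ht).trans ?_
    rw [← Ioc_union_Ioi_eq_Ioi ht,
      lintegral_union measurableSet_Ioi Ioc_disjoint_Ioi_same]
    refine add_le_add le_rfl ?_
    have hrefl : (∫⁻ a in Set.Ioi t, k a * f (t - a))
        = ∫⁻ s in Set.Iio (0:ℝ), k (t - s) * f s := by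
      have h := (Measure.measurePreserving_sub_left volume t).setLIntegral_comp_emb
        (MeasurableEquiv.subLeft t).measurableEmbedding
        (fun a => k a * f (t - a)) (Set.Iio 0)
      simp only [sub_sub_cancel] at h
      have himg : (fun s : ℝ => t - s) '' Set.Iio 0 = Set.Ioi t := by
        rw [Set.image_const_sub_Iio]; norm_num
      rw [himg] at h
      exact h.symm
    rw [hrefl]
    have hbd : ∀ s ∈ Set.Iio (0:ℝ), k (t - s) * f s
        ≤ ENNReal.ofReal (C2 * Real.exp (-ρ * t)) * ENNReal.ofReal (Real.exp (ρ * s) * B s) := by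
      intro s hs
      have hs0 : s < 0 := hs
      rw [hkdef, hfdef]; simp only
      rw [← ENNReal.ofReal_mul (mul_nonneg (hβlnn _) (Real.exp_pos _).le),
        ← ENNReal.ofReal_mul (by positivity)]
      refine ENNReal.ofReal_le_ofReal ?_
      have := mul_le_mul_of_nonneg_right (hker2 t s ht hs0) (hBnn s)
      calc βl (t - s) * Real.exp (-μ * (t - s)) * B s
          ≤ C2 * Real.exp (-ρ * t) * Real.exp (ρ * s) * B s := this
        _ = C2 * Real.exp (-ρ * t) * (Real.exp (ρ * s) * B s) := by ring
    calc (∫⁻ s in Set.Iio (0:ℝ), k (t - s) * f s)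
        ≤ ∫⁻ s in Set.Iio (0:ℝ), ENNReal.ofReal (C2 * Real.exp (-ρ * t))
            * ENNReal.ofReal (Real.exp (ρ * s) * B s) := by
          refine lintegral_mono_ae ?_
          filter_upwards [ae_restrict_mem measurableSet_Iio] with s hs using hbd s hs
      _ = ENNReal.ofReal (C2 * Real.exp (-ρ * t)) * Hist := by
          rw [hHdef, lintegral_const_mul' _ _ ENNReal.ofReal_ne_top]
  -- the weighted function G and its renewal inequality
  set G : ℝ → ENNReal :=
    (Set.Ici (0:ℝ)).indicator (fun u => ENNReal.ofReal (Real.exp (ε * u)) * f u) with hGdef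
  have hGm : Measurable G :=
    Measurable.indicator ((ENNReal.measurable_ofReal.comp (hexpc ε).measurable).mul hfm)
      measurableSet_Ici
  have hGeq : ∀ s : ℝ, 0 ≤ s → G s = ENNReal.ofReal (Real.exp (ε * s)) * f s := by
    intro s hs; rw [hGdef]; exact Set.indicator_of_mem hs _
  have hGzero : ∀ s : ℝ, s < 0 → G s = 0 := by
    intro s hs; rw [hGdef]; exact Set.indicator_of_notMem (not_le.2 hs) _
  have expfact : ∀ x y : ℝ, ENNReal.ofReal (Real.exp x) * ENNReal.ofReal (Real.exp y)
      = ENNReal.ofReal (Real.exp (x + y)) := by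
    intro x y
    rw [← ENNReal.ofReal_mul (Real.exp_pos _).le, ← Real.exp_add]
  have key3 : ∀ᵐ t : ℝ ∂volume,
      G t ≤ (∫⁻ a in Set.Ioi (0:ℝ), kε a * G (t - a))
        + (ENNReal.ofReal C2 * Hist) * ENNReal.ofReal (Real.exp (-(ρ - ε) * t)) := by
    filter_upwards [key2] with t h2
    by_cases ht : 0 ≤ t
    · rw [hGeq t ht]
      have hfirst : ENNReal.ofReal (Real.exp (ε * t))
          * (∫⁻ a in Set.Ioc (0:ℝ) t, k a * f (t - a))
          ≤ ∫⁻ a in Set.Ioi (0:ℝ), kε a * G (t - a) := by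
        have heq : ENNReal.ofReal (Real.exp (ε * t))
            * (∫⁻ a in Set.Ioc (0:ℝ) t, k a * f (t - a))
            = ∫⁻ a in Set.Ioc (0:ℝ) t, kε a * G (t - a) := by
          rw [← lintegral_const_mul' _ _ ENNReal.ofReal_ne_top]
          refine setLIntegral_congr_fun_ae measurableSet_Ioc (ae_of_all _ ?_)
          intro a ha
          rw [hGeq (t - a) (by linarith [ha.2] : (0:ℝ) ≤ t - a), hkεdef]
          have hsplit : ENNReal.ofReal (Real.exp (ε * t))
              = ENNReal.ofReal (Real.exp (ε * a)) * ENNReal.ofReal (Real.exp (ε * (t - a))) := by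
            rw [expfact]; congr 1; ring
          rw [hsplit]; ring
        exact heq.le.trans (lintegral_mono_set Set.Ioc_subset_Ioi_self)
      have hsecond : ENNReal.ofReal (Real.exp (ε * t))
          * (ENNReal.ofReal (C2 * Real.exp (-ρ * t)) * Hist)
          = (ENNReal.ofReal C2 * Hist) * ENNReal.ofReal (Real.exp (-(ρ - ε) * t)) := by
        have h3 : ENNReal.ofReal (Real.exp (ε * t)) * ENNReal.ofReal (Real.exp (-ρ * t))
            = ENNReal.ofReal (Real.exp (-(ρ - ε) * t)) := by
          rw [expfact]; congr 1; ring
        calc ENNReal.ofReal (Real.exp (ε * t))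
            * (ENNReal.ofReal (C2 * Real.exp (-ρ * t)) * Hist)
            = (ENNReal.ofReal C2 * Hist)
              * (ENNReal.ofReal (Real.exp (ε * t)) * ENNReal.ofReal (Real.exp (-ρ * t))) := by
              rw [ENNReal.ofReal_mul hC2nn]; ring
          _ = (ENNReal.ofReal C2 * Hist) * ENNReal.ofReal (Real.exp (-(ρ - ε) * t)) := by
              rw [h3]
      calc ENNReal.ofReal (Real.exp (ε * t)) * f t
          ≤ ENNReal.ofReal (Real.exp (ε * t))
            * ((∫⁻ a in Set.Ioc (0:ℝ) t, k a * f (t - a))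
              + ENNReal.ofReal (C2 * Real.exp (-ρ * t)) * Hist) :=
            mul_le_mul_right (h2 ht) _
        _ = ENNReal.ofReal (Real.exp (ε * t)) * (∫⁻ a in Set.Ioc (0:ℝ) t, k a * f (t - a))
            + ENNReal.ofReal (Real.exp (ε * t))
              * (ENNReal.ofReal (C2 * Real.exp (-ρ * t)) * Hist) := by rw [mul_add]
        _ ≤ (∫⁻ a in Set.Ioi (0:ℝ), kε a * G (t - a))
            + (ENNReal.ofReal C2 * Hist) * ENNReal.ofReal (Real.exp (-(ρ - ε) * t)) :=
            add_le_add hfirst hsecond.le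
    · rw [hGzero t (not_le.1 ht)]
      exact zero_le
  -- bootstrap: uniform bound on ∫ G over [0,T]
  have hδρ : 0 < ρ - ε := by
    have := hερ; linarith
  have hintρ : IntegrableOn (fun u : ℝ => Real.exp (-(ρ - ε) * u)) (Set.Ici 0) :=
    (integrableOn_Ici_iff_integrableOn_Ioi).2 (exp_neg_integrableOn_Ioi 0 hδρ)
  set Hconst : ℝ := ∫ u in Set.Ici (0:ℝ), Real.exp (-(ρ - ε) * u) with hHcdef
  have hHconst : (∫⁻ u in Set.Ici (0:ℝ), ENNReal.ofReal (Real.exp (-(ρ - ε) * u)))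
      = ENNReal.ofReal Hconst :=
    (ofReal_integral_eq_lintegral_ofReal hintρ
      (ae_of_all _ fun u => (Real.exp_pos _).le)).symm
  set Hb : ENNReal := ENNReal.ofReal C2 * Hist * ENNReal.ofReal Hconst with hHbdef
  have hHbne : Hb ≠ ⊤ :=
    ENNReal.mul_ne_top (ENNReal.mul_ne_top ENNReal.ofReal_ne_top hHist)
      ENNReal.ofReal_ne_top
  -- indicator bookkeeping
  have hGind : ∀ A : Set ℝ, MeasurableSet A → (∫⁻ s in A, G s)
      = ∫⁻ s in Set.Ici 0 ∩ A, ENNReal.ofReal (Real.exp (ε * s)) * f s := by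
    intro A hA
    rw [hGdef, lintegral_indicator measurableSet_Ici,
      Measure.restrict_restrict measurableSet_Ici]
  have hfin : ∀ T : ℝ, (∫⁻ t in Set.Icc (0:ℝ) T, G t) ≠ ⊤ := by
    intro T
    have hBint : IntegrableOn B (Set.Icc 0 T) := hBli.integrableOn_isCompact isCompact_Icc
    have hf_fin : (∫⁻ t in Set.Icc (0:ℝ) T, f t) < ⊤ := by
      refine lt_of_le_of_lt (lintegral_mono fun t => ?_) hBint.2
      exact Real.ofReal_le_enorm _
    have hb1 : (∫⁻ t in Set.Icc (0:ℝ) T, G t)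
        ≤ ENNReal.ofReal (Real.exp (ε * T)) * ∫⁻ t in Set.Icc (0:ℝ) T, f t := by
      rw [← lintegral_const_mul' _ _ ENNReal.ofReal_ne_top]
      refine lintegral_mono_ae ?_
      filter_upwards [ae_restrict_mem measurableSet_Icc] with t ht
      rw [hGeq t ht.1]
      exact mul_le_mul_left
        (ENNReal.ofReal_le_ofReal (Real.exp_le_exp.2
          (mul_le_mul_of_nonneg_left ht.2 hε0.le))) _
    exact (lt_of_le_of_lt hb1 (ENNReal.mul_lt_top ENNReal.ofReal_lt_top hf_fin)).ne
  have hFm : Measurable fun t : ℝ => ∫⁻ a in Set.Ioi (0:ℝ), kε a * G (t - a) := by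
    apply Measurable.lintegral_prod_right (f := fun t a => kε a * G (t - a))
    exact (hkεm.comp measurable_snd).mul (hGm.comp (measurable_fst.sub measurable_snd))
  have htrans : ∀ T a : ℝ, 0 < a →
      (∫⁻ t in Set.Icc (0:ℝ) T, G (t - a)) ≤ ∫⁻ t in Set.Icc (0:ℝ) T, G t := by
    intro T a ha
    have h := (measurePreserving_sub_right volume a).setLIntegral_comp_emb
      (MeasurableEquiv.subRight a).measurableEmbedding G (Set.Icc 0 T)
    rw [h, Set.image_sub_const_Icc]
    rw [hGind _ measurableSet_Icc, hGind _ measurableSet_Icc]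
    refine lintegral_mono_set fun x hx => ?_
    exact ⟨hx.1, ⟨hx.1, le_trans hx.2.2 (by linarith)⟩⟩
  have IBound : ∀ T : ℝ, (∫⁻ t in Set.Icc (0:ℝ) T, G t)
      ≤ θ * (∫⁻ t in Set.Icc (0:ℝ) T, G t) + Hb := by
    intro T
    set I : ENNReal := ∫⁻ t in Set.Icc (0:ℝ) T, G t with hIdef
    have step1 : I ≤ ∫⁻ t in Set.Icc (0:ℝ) T,
        ((∫⁻ a in Set.Ioi (0:ℝ), kε a * G (t - a))
          + (ENNReal.ofReal C2 * Hist) * ENNReal.ofReal (Real.exp (-(ρ - ε) * t))) := by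
      rw [hIdef]
      exact lintegral_mono_ae (ae_restrict_of_ae key3)
    have step2 : (∫⁻ t in Set.Icc (0:ℝ) T,
        ∫⁻ a in Set.Ioi (0:ℝ), kε a * G (t - a)) ≤ θ * I := by
      rw [lintegral_lintegral_swap
        (((hkεm.comp measurable_snd).mul
          (hGm.comp (measurable_fst.sub measurable_snd))).aemeasurable)]
      have hin : ∀ a ∈ Set.Ioi (0:ℝ),
          (∫⁻ t in Set.Icc (0:ℝ) T, kε a * G (t - a)) ≤ kε a * I := by
        intro a ha
        rw [lintegral_const_mul' _ _ (hkεne a)]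
        exact mul_le_mul_right (htrans T a ha) _
      calc (∫⁻ a in Set.Ioi (0:ℝ), ∫⁻ t in Set.Icc (0:ℝ) T, kε a * G (t - a))
          ≤ ∫⁻ a in Set.Ioi (0:ℝ), kε a * I := by
            refine lintegral_mono_ae ?_
            filter_upwards [ae_restrict_mem measurableSet_Ioi] with a ha using hin a ha
        _ = θ * I := by rw [lintegral_mul_const _ hkεm, hθdef]
    have step3 : (∫⁻ t in Set.Icc (0:ℝ) T,
        (ENNReal.ofReal C2 * Hist) * ENNReal.ofReal (Real.exp (-(ρ - ε) * t))) ≤ Hb := by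
      rw [lintegral_const_mul' _ _
        (ENNReal.mul_ne_top ENNReal.ofReal_ne_top hHist), hHbdef]
      refine mul_le_mul_right ?_ _
      rw [← hHconst]
      exact lintegral_mono_set fun x hx => hx.1
    calc I ≤ ∫⁻ t in Set.Icc (0:ℝ) T,
        ((∫⁻ a in Set.Ioi (0:ℝ), kε a * G (t - a))
          + (ENNReal.ofReal C2 * Hist) * ENNReal.ofReal (Real.exp (-(ρ - ε) * t))) := step1
      _ = (∫⁻ t in Set.Icc (0:ℝ) T, ∫⁻ a in Set.Ioi (0:ℝ), kε a * G (t - a))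
          + ∫⁻ t in Set.Icc (0:ℝ) T,
            (ENNReal.ofReal C2 * Hist) * ENNReal.ofReal (Real.exp (-(ρ - ε) * t)) :=
          lintegral_add_left hFm _
      _ ≤ θ * I + Hb := add_le_add step2 step3
  -- solve the bootstrap inequality
  set θ' : ℝ := θ.toReal with hθ'def
  have hθ'1 : θ' < 1 := by
    rw [hθ'def]
    rw [show (1:ℝ) = (1:ENNReal).toReal by simp]
    exact (ENNReal.toReal_lt_toReal hθtop ENNReal.one_ne_top).2 hθ1
  have hθ'0 : 0 ≤ θ' := ENNReal.toReal_nonneg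
  set Kreal : ℝ := Hb.toReal / (1 - θ') with hKdef
  have hKnn : 0 ≤ Kreal := by
    rw [hKdef]
    exact div_nonneg ENNReal.toReal_nonneg (by linarith)
  have KT : ∀ T : ℝ, (∫⁻ t in Set.Icc (0:ℝ) T, G t) ≤ ENNReal.ofReal Kreal := by
    intro T
    set I : ENNReal := ∫⁻ t in Set.Icc (0:ℝ) T, G t with hIdef
    have hIne : I ≠ ⊤ := hfin T
    have hIB := IBound T
    have hx : I.toReal ≤ θ' * I.toReal + Hb.toReal := by
      have h1 : (θ * I + Hb).toReal = θ' * I.toReal + Hb.toReal := by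
        rw [ENNReal.toReal_add (ENNReal.mul_ne_top hθtop hIne) hHbne, ENNReal.toReal_mul]
      calc I.toReal ≤ (θ * I + Hb).toReal := by
            refine ENNReal.toReal_mono ?_ hIB
            exact ENNReal.add_ne_top.2 ⟨ENNReal.mul_ne_top hθtop hIne, hHbne⟩
        _ = θ' * I.toReal + Hb.toReal := h1
    have hxK : I.toReal ≤ Kreal := by
      rw [hKdef, le_div_iff₀ (by linarith : (0:ℝ) < 1 - θ')]
      nlinarith
    calc I = ENNReal.ofReal I.toReal := (ENNReal.ofReal_toReal hIne).symm
      _ ≤ ENNReal.ofReal Kreal := ENNReal.ofReal_le_ofReal hxK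
  -- pass to the full half line
  have Itot : (∫⁻ t in Set.Ici (0:ℝ), G t) ≤ ENNReal.ofReal Kreal := by
    have hU : Set.Ici (0:ℝ) = ⋃ n : ℕ, Set.Icc (0:ℝ) n := by
      ext x; simp only [mem_Ici, mem_iUnion, mem_Icc]
      exact ⟨fun hx => (exists_nat_ge x).imp fun n hn => ⟨hx, hn⟩, fun ⟨n, hn⟩ => hn.1⟩
    have hmono : Monotone (fun n : ℕ => Set.Icc (0:ℝ) n) := fun m n hmn =>
      Set.Icc_subset_Icc le_rfl (by exact_mod_cast hmn)
    calc (∫⁻ t in Set.Ici (0:ℝ), G t) = (volume.withDensity G) (Set.Ici 0) := by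
          rw [withDensity_apply _ measurableSet_Ici]
      _ = ⨆ n : ℕ, (volume.withDensity G) (Set.Icc (0:ℝ) n) := by
          rw [hU, hmono.measure_iUnion]
      _ ≤ ENNReal.ofReal Kreal := iSup_le fun n => by
          rw [withDensity_apply _ measurableSet_Icc]; exact KT n
  -- uniform bound on the ε-shifted kernel
  have hμε : 0 < μ - ε := by
    have := hεμ; linarith
  set Ck : ℝ := c0 + c1 * (1/(μ - ε)) with hCkdef
  have hCknn : 0 ≤ Ck := by
    rw [hCkdef]
    exact add_nonneg hc0nn (mul_nonneg hc1nn (le_of_lt (one_div_pos.2 hμε)))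
  have kmax : ∀ a : ℝ, 0 < a → kε a ≤ ENNReal.ofReal Ck := by
    intro a ha
    have hsplit : Real.exp (-μ * a) * Real.exp (ε * a) = Real.exp (-(μ - ε) * a) := by
      rw [← Real.exp_add]; congr 1; ring
    have h1 : βl a * Real.exp (-(μ - ε) * a)
        ≤ (c0 + c1 * a) * Real.exp (-(μ - ε) * a) :=
      mul_le_mul_of_nonneg_right (hβllin a ha.le) (Real.exp_pos _).le
    have h2 := aux_lin_exp hc0nn hc1nn hμε ha.le
    calc kε a = ENNReal.ofReal (βl a * (Real.exp (-μ * a) * Real.exp (ε * a))) := by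
          rw [hkεdef, hkdef]; simp only
          rw [← ENNReal.ofReal_mul (mul_nonneg (hβlnn a) (Real.exp_pos _).le)]
          congr 1; ring
      _ ≤ ENNReal.ofReal Ck := by
          rw [hsplit, hCkdef]
          exact ENNReal.ofReal_le_ofReal (h1.trans h2)
  -- final constant
  set Creal : ℝ := Ck * Kreal + C2 * Hist.toReal + 1 with hCrdef
  have hCreal : 0 < Creal := by
    rw [hCrdef]
    have h1 : 0 ≤ Ck * Kreal := mul_nonneg hCknn hKnn
    have h2 : 0 ≤ C2 * Hist.toReal := mul_nonneg hC2nn ENNReal.toReal_nonneg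
    linarith
  refine ⟨Creal, hCreal, ε, hε0, ?_⟩
  filter_upwards [key2] with t h2 ht
  have hmain := h2 ht
  -- first term
  have hGrefl : (∫⁻ a in Set.Ioc (0:ℝ) t, G (t - a)) ≤ ENNReal.ofReal Kreal := by
    have h := (Measure.measurePreserving_sub_left volume t).setLIntegral_comp_emb
      (MeasurableEquiv.subLeft t).measurableEmbedding G (Set.Ioc 0 t)
    rw [h, Set.image_const_sub_Ioc]
    refine le_trans (lintegral_mono_set ?_) Itot
    intro x hx
    have := hx.1
    simp only [mem_Ici]
    linarith [hx.1, sub_self t]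
  have heqP1 : (∫⁻ a in Set.Ioc (0:ℝ) t, k a * f (t - a))
      = ENNReal.ofReal (Real.exp (-ε * t))
        * ∫⁻ a in Set.Ioc (0:ℝ) t, kε a * G (t - a) := by
    rw [← lintegral_const_mul' _ _ ENNReal.ofReal_ne_top]
    refine setLIntegral_congr_fun_ae measurableSet_Ioc (ae_of_all _ ?_)
    intro a ha
    rw [hGeq (t - a) (by linarith [ha.2] : (0:ℝ) ≤ t - a), hkεdef]
    have hone : ENNReal.ofReal (Real.exp (-ε * t))
        * (ENNReal.ofReal (Real.exp (ε * a)) * ENNReal.ofReal (Real.exp (ε * (t - a)))) = 1 := by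
      rw [expfact, expfact, show -ε * t + (ε * a + ε * (t - a)) = 0 by ring]
      simp [Real.exp_zero]
    calc k a * f (t - a)
        = (ENNReal.ofReal (Real.exp (-ε * t))
            * (ENNReal.ofReal (Real.exp (ε * a)) * ENNReal.ofReal (Real.exp (ε * (t - a)))))
          * (k a * f (t - a)) := by rw [hone, one_mul]
      _ = ENNReal.ofReal (Real.exp (-ε * t))
          * (k a * ENNReal.ofReal (Real.exp (ε * a))
            * (ENNReal.ofReal (Real.exp (ε * (t - a))) * f (t - a))) := by ring
  have hP1 : (∫⁻ a in Set.Ioc (0:ℝ) t, k a * f (t - a))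
      ≤ ENNReal.ofReal (Real.exp (-ε * t)) * ENNReal.ofReal (Ck * Kreal) := by
    rw [heqP1]
    refine mul_le_mul_right ?_ _
    calc (∫⁻ a in Set.Ioc (0:ℝ) t, kε a * G (t - a))
        ≤ ∫⁻ a in Set.Ioc (0:ℝ) t, ENNReal.ofReal Ck * G (t - a) := by
          refine lintegral_mono_ae ?_
          filter_upwards [ae_restrict_mem measurableSet_Ioc] with a ha
          exact mul_le_mul_left (kmax a ha.1) _
      _ = ENNReal.ofReal Ck * ∫⁻ a in Set.Ioc (0:ℝ) t, G (t - a) :=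
          lintegral_const_mul' _ _ ENNReal.ofReal_ne_top
      _ ≤ ENNReal.ofReal Ck * ENNReal.ofReal Kreal := mul_le_mul_right hGrefl _
      _ = ENNReal.ofReal (Ck * Kreal) := (ENNReal.ofReal_mul hCknn).symm
  -- second term
  have hP2 : ENNReal.ofReal (C2 * Real.exp (-ρ * t)) * Hist
      ≤ ENNReal.ofReal (Real.exp (-ε * t)) * ENNReal.ofReal (C2 * Hist.toReal) := by
    have hexple : Real.exp (-ρ * t) ≤ Real.exp (-ε * t) := by
      apply Real.exp_le_exp.2
      nlinarith [hερ, hρ0, ht]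
    calc ENNReal.ofReal (C2 * Real.exp (-ρ * t)) * Hist
        ≤ ENNReal.ofReal (C2 * Real.exp (-ε * t)) * Hist :=
          mul_le_mul_left (ENNReal.ofReal_le_ofReal
            (mul_le_mul_of_nonneg_left hexple hC2nn)) _
      _ = ENNReal.ofReal (Real.exp (-ε * t)) * (ENNReal.ofReal C2 * Hist) := by
          rw [show C2 * Real.exp (-ε * t) = Real.exp (-ε * t) * C2 from mul_comm _ _,
            ENNReal.ofReal_mul (Real.exp_pos _).le, mul_assoc]
      _ ≤ ENNReal.ofReal (Real.exp (-ε * t)) * ENNReal.ofReal (C2 * Hist.toReal) := by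
          refine mul_le_mul_right ?_ _
          rw [ENNReal.ofReal_mul hC2nn]
          exact mul_le_mul_right (le_of_eq (ENNReal.ofReal_toReal hHist).symm) _
  -- combine
  have hcomb : f t ≤ ENNReal.ofReal (Creal * Real.exp (-ε * t)) := by
    calc f t ≤ (∫⁻ a in Set.Ioc (0:ℝ) t, k a * f (t - a))
        + ENNReal.ofReal (C2 * Real.exp (-ρ * t)) * Hist := hmain
      _ ≤ ENNReal.ofReal (Real.exp (-ε * t)) * ENNReal.ofReal (Ck * Kreal)
          + ENNReal.ofReal (Real.exp (-ε * t)) * ENNReal.ofReal (C2 * Hist.toReal) :=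
          add_le_add hP1 hP2
      _ = ENNReal.ofReal (Real.exp (-ε * t))
          * (ENNReal.ofReal (Ck * Kreal) + ENNReal.ofReal (C2 * Hist.toReal)) := by
          rw [mul_add]
      _ = ENNReal.ofReal (Real.exp (-ε * t))
          * ENNReal.ofReal (Ck * Kreal + C2 * Hist.toReal) := by
          rw [ENNReal.ofReal_add (mul_nonneg hCknn hKnn)
            (mul_nonneg hC2nn ENNReal.toReal_nonneg)]
      _ ≤ ENNReal.ofReal (Real.exp (-ε * t)) * ENNReal.ofReal Creal := by
          refine mul_le_mul_right (ENNReal.ofReal_le_ofReal ?_) _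
          rw [hCrdef]; linarith
      _ = ENNReal.ofReal (Creal * Real.exp (-ε * t)) := by
          rw [← ENNReal.ofReal_mul (Real.exp_pos _).le, mul_comm]
  have hft : f t = ENNReal.ofReal (B t) := by rw [hfdef]
  rw [hft] at hcomb
  exact (ENNReal.ofReal_le_ofReal_iff
    (mul_nonneg hCreal.le (Real.exp_pos _).le)).1 hcomb
end

section
/- Let μ > 0, x_A ≥ 0, β₀₀ > 0 and b₁ ≥ β₀₀, and set x_m = 0. Let g : [0,∞) → (0,∞) be bounded, continuously differentiable with g'(s) < 0 for all s ≥ 0 and lim_{z→∞} g(z) = 0. Define β₀(s) = β₀₀ max{0, s − x_A}, β₁(s) = b₁ s, and R(β, B) := ∫₀^∞ β( ∫₀^a g(B e^{−μτ}/μ) dτ ) e^{−μa} da. Let β : [0,∞) → [0,∞) be continuously differentiable, strictly increasing, with β(0) = 0 and sup_{s≥0} |β'(s)| ≤ b₁, and assume R(β₀, 0) > 1 and R(β, 0) > 1. Let B̄(β), B̄(β₀) and B̃ denote the (unique) positive solutions of R(β, B) = 1, R(β₀, B) = 1 and R(β₁, B) = 1 respectively, and let ã ≥ 0 be defined by ∫₀^{ã}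 g(B̃ e^{−μτ}/μ) dτ = x_A. Then |B̄(β) − B̄(β₀)| ≤ C ‖β − β₀‖_∞, where C = 2 μ² e^{μã} / ( β₀₀ · min_{s∈[0, B̃/μ]} |g'(s)| ) and ‖β − β₀‖_∞ = sup_{s≥0} |β(s) − β₀(s)|. -/
open MeasureTheory Set Filter

/-- Expected lifetime offspring number `R(β, B)` at stationary birth rate `B` under
fertility function `β` (with minimal size `x_m = 0`). -/
noncomputable def Rtwo (μ : ℝ) (g β : ℝ → ℝ) (B : ℝ) : ℝ :=
  ∫ a in Set.Ioi (0 : ℝ),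
    β (∫ τ in (0 : ℝ)..a, g (B * Real.exp (-μ * τ) / μ)) * Real.exp (-μ * a)

namespace S8
-- exponential integral on Ioi
lemma exp_int (μ : ℝ) (hμ : 0 < μ) (t : ℝ) :
    ∫ a in Set.Ioi t, Real.exp (-μ * a) = Real.exp (-μ * t) / μ := by
  have hd : ∀ x ∈ Set.Ici t, HasDerivAt (fun a => -Real.exp (-μ * a) / μ)
      (Real.exp (-μ * x)) x := by
    intro x _
    have h1 : HasDerivAt (fun a : ℝ => -μ * a) (-μ) x := by
      simpa using (hasDerivAt_id x).const_mul (-μ)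
    have h2 := (h1.exp).neg.div_const μ
    convert h2 using 1
    all_goals try rfl
    field_simp
  have hint : IntegrableOn (fun a => Real.exp (-μ * a)) (Set.Ioi t) :=
    exp_neg_integrableOn_Ioi t hμ
  have htend : Tendsto (fun a => -Real.exp (-μ * a) / μ) atTop (nhds 0) := by
    have : Tendsto (fun a : ℝ => -μ * a) atTop atBot :=
      Tendsto.const_mul_atTop_of_neg (neg_neg_iff_pos.mpr hμ) tendsto_id
    have := (Real.tendsto_exp_atBot.comp this).neg.div_const μ
    simpa using this
  have := integral_Ioi_of_hasDerivAt_of_tendsto' hd hint htend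
  rw [this]
  ring

lemma mul_exp_int (μ : ℝ) (hμ : 0 < μ) :
    IntegrableOn (fun a => a * Real.exp (-μ * a)) (Set.Ioi 0) := by
  have hi : IntegrableOn (fun a => (2 / μ) * Real.exp (-(μ / 2) * a)) (Set.Ioi 0) :=
    (exp_neg_integrableOn_Ioi 0 (half_pos hμ)).const_mul _
  refine hi.mono' ?_ ?_
  · exact (continuous_id.mul (Real.continuous_exp.comp (by continuity))).aestronglyMeasurable.restrict
  · filter_upwards [ae_restrict_mem measurableSet_Ioi] with a ha
    have ha0 : (0:ℝ) < a := ha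
    have hle : a ≤ (2 / μ) * Real.exp (μ / 2 * a) := by
      have h1 : μ / 2 * a + 1 ≤ Real.exp (μ / 2 * a) := Real.add_one_le_exp _
      have h2 : μ / 2 * a ≤ Real.exp (μ / 2 * a) := by linarith
      calc a = (2 / μ) * (μ / 2 * a) := by field_simp
        _ ≤ (2 / μ) * Real.exp (μ / 2 * a) :=
            mul_le_mul_of_nonneg_left h2 (by positivity)
    have : a * Real.exp (-μ * a) ≤ (2 / μ) * Real.exp (μ / 2 * a) * Real.exp (-μ * a) :=
      mul_le_mul_of_nonneg_right hle (Real.exp_pos _).le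
    rw [Real.norm_eq_abs, abs_of_nonneg (by positivity)]
    calc a * Real.exp (-μ * a) ≤ (2 / μ) * Real.exp (μ / 2 * a) * Real.exp (-μ * a) := this
      _ = (2 / μ) * Real.exp (-(μ / 2) * a) := by
          rw [mul_assoc, ← Real.exp_add]; ring_nf

variable {g g' : ℝ → ℝ}

lemma m_pos (hg'c : ContinuousOn g' (Set.Ici (0:ℝ)))
    (hg'neg : ∀ z ≥ (0:ℝ), g' z < 0) {M : ℝ} (hM : 0 ≤ M) :
    0 < sInf ((fun s => |g' s|) '' Set.Icc (0:ℝ) M) := by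
  have hne : (Set.Icc (0:ℝ) M).Nonempty := ⟨0, le_refl _, hM⟩
  obtain ⟨x₀, hx₀, hmin⟩ := isCompact_Icc.exists_isMinOn hne
    ((hg'c.mono (fun x hx => hx.1)).abs)
  have hpos : 0 < |g' x₀| := abs_pos.mpr (hg'neg x₀ hx₀.1).ne
  refine lt_of_lt_of_le hpos (le_csInf (hne.image _) ?_)
  rintro y ⟨x, hx, rfl⟩
  exact hmin hx

lemma m_le (hg'c : ContinuousOn g' (Set.Ici (0:ℝ))) {M x : ℝ}
    (hx : x ∈ Set.Icc (0:ℝ) M) :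
    sInf ((fun s => |g' s|) '' Set.Icc (0:ℝ) M) ≤ |g' x| :=
  csInf_le ⟨0, by rintro y ⟨z, _, rfl⟩; exact abs_nonneg _⟩ ⟨x, hx, rfl⟩

lemma g_slope (hg' : ∀ z ∈ Set.Ici (0:ℝ), HasDerivWithinAt g (g' z) (Set.Ici (0:ℝ)) z)
    (hg'c : ContinuousOn g' (Set.Ici (0:ℝ)))
    (hg'neg : ∀ z ≥ (0:ℝ), g' z < 0)
    {M u v : ℝ} (hu : 0 ≤ u) (huv : u ≤ v) (hvM : v ≤ M) :
    sInf ((fun s => |g' s|) '' Set.Icc (0:ℝ) M) * (v - u) ≤ g u - g v := by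
  rcases eq_or_lt_of_le huv with rfl | hlt
  · simp
  have gcont : ContinuousOn g (Set.Ici (0:ℝ)) := fun z hz => (hg' z hz).continuousWithinAt
  obtain ⟨c, hc, hslope⟩ := exists_hasDerivAt_eq_slope g g' hlt
    (gcont.mono (fun x hx => le_trans hu hx.1))
    (fun x hx => (hg' x (le_of_lt (lt_of_le_of_lt hu hx.1))).hasDerivAt
      (Ici_mem_nhds (lt_of_le_of_lt hu hx.1)))
  have hc0 : 0 ≤ c := le_trans hu hc.1.le
  have hcM : c ≤ M := le_trans hc.2.le hvM
  have hgc : g' c < 0 := hg'neg c hc0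
  have hne : v - u ≠ 0 := sub_ne_zero.mpr hlt.ne'
  have h1 : g u - g v = |g' c| * (v - u) := by
    rw [abs_of_neg hgc, hslope, neg_mul, div_mul_cancel₀ _ hne, neg_sub]
  rw [h1]
  exact mul_le_mul_of_nonneg_right (m_le hg'c ⟨hc0, hcM⟩) (by linarith)

lemma g_anti (hg' : ∀ z ∈ Set.Ici (0:ℝ), HasDerivWithinAt g (g' z) (Set.Ici (0:ℝ)) z)
    (hg'c : ContinuousOn g' (Set.Ici (0:ℝ)))
    (hg'neg : ∀ z ≥ (0:ℝ), g' z < 0)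
    {u v : ℝ} (hu : 0 ≤ u) (huv : u ≤ v) : g v ≤ g u := by
  have := g_slope hg' hg'c hg'neg hu huv (le_refl v)
  nlinarith [m_pos hg'c hg'neg (le_trans hu huv), sub_nonneg.mpr huv]

lemma g_anti_strict (hg' : ∀ z ∈ Set.Ici (0:ℝ), HasDerivWithinAt g (g' z) (Set.Ici (0:ℝ)) z)
    (hg'c : ContinuousOn g' (Set.Ici (0:ℝ)))
    (hg'neg : ∀ z ≥ (0:ℝ), g' z < 0)
    {u v : ℝ} (hu : 0 ≤ u) (huv : u < v) : g v < g u := by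
  have := g_slope hg' hg'c hg'neg hu huv.le (le_refl v)
  nlinarith [m_pos hg'c hg'neg (le_trans hu huv.le), sub_pos.mpr huv]

-- MVT bound for β : β s ≤ b1 s
lemma lin_bound {β β' : ℝ → ℝ} {b1 : ℝ}
    (hβ' : ∀ s ∈ Set.Ici (0:ℝ), HasDerivWithinAt β (β' s) (Set.Ici (0:ℝ)) s)
    (hβzero : β 0 = 0) (hβ'bd : ∀ s ≥ (0:ℝ), |β' s| ≤ b1)
    {s : ℝ} (hs : 0 ≤ s) : β s ≤ b1 * s := by
  rcases eq_or_lt_of_le hs with rfl | hlt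
  · simp [hβzero]
  have βcont : ContinuousOn β (Set.Ici (0:ℝ)) := fun z hz => (hβ' z hz).continuousWithinAt
  obtain ⟨c, hc, hslope⟩ := exists_hasDerivAt_eq_slope β β' hlt
    (βcont.mono (fun x hx => hx.1))
    (fun x hx => (hβ' x hx.1.le).hasDerivAt (Ici_mem_nhds hx.1))
  have h1 : β s = β' c * s := by
    rw [hslope, hβzero, sub_zero, sub_zero, div_mul_cancel₀ _ hlt.ne']
  have h2 : β' c ≤ b1 := le_trans (le_abs_self _) (hβ'bd c hc.1.le)
  rw [h1]
  exact mul_le_mul_of_nonneg_right h2 hlt.le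


noncomputable def X (μ : ℝ) (g : ℝ → ℝ) (B a : ℝ) : ℝ :=
  ∫ τ in (0:ℝ)..a, g (B * Real.exp (-μ * τ) / μ)

lemma expD {μ : ℝ} (hμ : 0 < μ) (x : ℝ) :
    HasDerivAt (fun a => -Real.exp (-μ * a) / μ) (Real.exp (-μ * x)) x := by
  have h1 : HasDerivAt (fun a : ℝ => -μ * a) (-μ) x := by
    simpa using (hasDerivAt_id x).const_mul (-μ)
  have h2 := (h1.exp).neg.div_const μ
  convert h2 using 1
  all_goals try rfl
  field_simp

lemma exp_primitive {μ : ℝ} (hμ : 0 < μ) (a : ℝ) :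
    ∫ τ in (0:ℝ)..a, Real.exp (-μ * τ) = (1 - Real.exp (-μ * a)) / μ := by
  have := intervalIntegral.integral_eq_sub_of_hasDerivAt
    (f := fun a => -Real.exp (-μ * a) / μ) (f' := fun x => Real.exp (-μ * x))
    (fun x _ => expD hμ x)
    ((Real.continuous_exp.comp (by continuity)).intervalIntegrable 0 a)
  rw [this]
  simp
  ring

variable {μ : ℝ} {g g' : ℝ → ℝ}

lemma arg_nonneg (hμ : 0 < μ) {B : ℝ} (hB : 0 ≤ B) (τ : ℝ) :
    0 ≤ B * Real.exp (-μ * τ) / μ :=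
  div_nonneg (mul_nonneg hB (Real.exp_pos _).le) hμ.le

lemma arg_le (hμ : 0 < μ) {B Bt : ℝ} (hB : 0 ≤ B) (hBt : B ≤ Bt) {τ : ℝ} (hτ : 0 ≤ τ) :
    B * Real.exp (-μ * τ) / μ ≤ Bt / μ := by
  have h1 : Real.exp (-μ * τ) ≤ 1 :=
    Real.exp_le_one_iff.mpr (by nlinarith)
  have h2 : B * Real.exp (-μ * τ) ≤ Bt := by nlinarith [Real.exp_pos (-μ * τ)]
  gcongr

lemma integrand_cont (hμ : 0 < μ)
    (hg' : ∀ z ∈ Set.Ici (0:ℝ), HasDerivWithinAt g (g' z) (Set.Ici (0:ℝ)) z)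
    {B : ℝ} (hB : 0 ≤ B) :
    Continuous fun τ => g (B * Real.exp (-μ * τ) / μ) := by
  have gcont : ContinuousOn g (Set.Ici (0:ℝ)) := fun z hz => (hg' z hz).continuousWithinAt
  exact gcont.comp_continuous (by continuity) (fun τ => arg_nonneg hμ hB τ)

lemma X_intable (hμ : 0 < μ)
    (hg' : ∀ z ∈ Set.Ici (0:ℝ), HasDerivWithinAt g (g' z) (Set.Ici (0:ℝ)) z)
    {B : ℝ} (hB : 0 ≤ B) (a b : ℝ) :
    IntervalIntegrable (fun τ => g (B * Real.exp (-μ * τ) / μ)) volume a b :=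
  (integrand_cont hμ hg' hB).intervalIntegrable a b

lemma X_cont (hμ : 0 < μ)
    (hg' : ∀ z ∈ Set.Ici (0:ℝ), HasDerivWithinAt g (g' z) (Set.Ici (0:ℝ)) z)
    {B : ℝ} (hB : 0 ≤ B) : Continuous (X μ g B) :=
  intervalIntegral.continuous_primitive (X_intable hμ hg' hB) 0

lemma X_nonneg (hμ : 0 < μ) (hgpos : ∀ z ≥ (0:ℝ), 0 < g z)
    {B a : ℝ} (hB : 0 ≤ B) (ha : 0 ≤ a) : 0 ≤ X μ g B a :=
  intervalIntegral.integral_nonneg ha (fun u _ => (hgpos _ (arg_nonneg hμ hB u)).le)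

lemma X_le (hμ : 0 < μ)
    (hg' : ∀ z ∈ Set.Ici (0:ℝ), HasDerivWithinAt g (g' z) (Set.Ici (0:ℝ)) z)
    {C : ℝ} (hC : ∀ z ≥ (0:ℝ), g z ≤ C)
    {B a : ℝ} (hB : 0 ≤ B) (ha : 0 ≤ a) : X μ g B a ≤ C * a := by
  have h := intervalIntegral.integral_mono_on (μ := volume) ha
    (X_intable hμ hg' hB 0 a) (intervalIntegrable_const (c := C))
    (fun τ _ => hC _ (arg_nonneg hμ hB τ))
  rw [intervalIntegral.integral_const, sub_zero, smul_eq_mul, mul_comm] at h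
  exact h

lemma X_anti (hμ : 0 < μ)
    (hg' : ∀ z ∈ Set.Ici (0:ℝ), HasDerivWithinAt g (g' z) (Set.Ici (0:ℝ)) z)
    (hg'c : ContinuousOn g' (Set.Ici (0:ℝ))) (hg'neg : ∀ z ≥ (0:ℝ), g' z < 0)
    {B1 B2 a : ℝ} (hB1 : 0 ≤ B1) (hB : B1 ≤ B2) (ha : 0 ≤ a) :
    X μ g B2 a ≤ X μ g B1 a := by
  refine intervalIntegral.integral_mono_on ha (X_intable hμ hg' (hB1.trans hB) 0 a)
    (X_intable hμ hg' hB1 0 a) (fun τ _ => ?_)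
  refine g_anti hg' hg'c hg'neg (arg_nonneg hμ hB1 τ) ?_
  have h2 : B1 * Real.exp (-μ * τ) ≤ B2 * Real.exp (-μ * τ) := by
    nlinarith [(Real.exp_pos (-μ * τ)).le]
  gcongr

lemma X_mono_a (hμ : 0 < μ) (hgpos : ∀ z ≥ (0:ℝ), 0 < g z)
    (hg' : ∀ z ∈ Set.Ici (0:ℝ), HasDerivWithinAt g (g' z) (Set.Ici (0:ℝ)) z)
    {B a1 a2 : ℝ} (hB : 0 ≤ B) (ha : a1 ≤ a2) :
    X μ g B a1 ≤ X μ g B a2 := by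
  have hsplit := intervalIntegral.integral_add_adjacent_intervals
    (X_intable hμ hg' hB 0 a1) (X_intable hμ hg' hB a1 a2)
  have hpos : 0 ≤ ∫ τ in a1..a2, g (B * Real.exp (-μ * τ) / μ) :=
    intervalIntegral.integral_nonneg ha (fun u _ => (hgpos _ (arg_nonneg hμ hB u)).le)
  show X μ g B a1 ≤ X μ g B a2
  unfold X
  rw [← hsplit]
  linarith

lemma X_quant (hμ : 0 < μ)
    (hg' : ∀ z ∈ Set.Ici (0:ℝ), HasDerivWithinAt g (g' z) (Set.Ici (0:ℝ)) z)
    (hg'c : ContinuousOn g' (Set.Ici (0:ℝ))) (hg'neg : ∀ z ≥ (0:ℝ), g' z < 0)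
    {B1 B2 Bt a : ℝ} (hB1 : 0 ≤ B1) (hB : B1 ≤ B2) (hBt : B2 ≤ Bt) (ha : 0 ≤ a) :
    sInf ((fun s => |g' s|) '' Set.Icc (0:ℝ) (Bt / μ)) * (B2 - B1) *
      (1 - Real.exp (-μ * a)) / μ ^ 2 ≤ X μ g B1 a - X μ g B2 a := by
  set m := sInf ((fun s => |g' s|) '' Set.Icc (0:ℝ) (Bt / μ)) with hm
  have hB2 : 0 ≤ B2 := hB1.trans hB
  have key : ∀ τ ∈ Set.Icc 0 a,
      m * (B2 - B1) / μ * Real.exp (-μ * τ) ≤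
        g (B1 * Real.exp (-μ * τ) / μ) - g (B2 * Real.exp (-μ * τ) / μ) := by
    intro τ hτ
    have h := g_slope hg' hg'c hg'neg (arg_nonneg hμ hB1 τ)
      (by have h2 : B1 * Real.exp (-μ * τ) ≤ B2 * Real.exp (-μ * τ) := by
            nlinarith [(Real.exp_pos (-μ * τ)).le]
          gcongr)
      (arg_le hμ hB2 hBt hτ.1)
    calc m * (B2 - B1) / μ * Real.exp (-μ * τ)
        = m * (B2 * Real.exp (-μ * τ) / μ - B1 * Real.exp (-μ * τ) / μ) := by
          field_simp
      _ ≤ _ := h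
  have hsub : X μ g B1 a - X μ g B2 a =
      ∫ τ in (0:ℝ)..a, (g (B1 * Real.exp (-μ * τ) / μ) - g (B2 * Real.exp (-μ * τ) / μ)) := by
    unfold X
    rw [intervalIntegral.integral_sub (X_intable hμ hg' hB1 0 a) (X_intable hμ hg' hB2 0 a)]
  have hlow := intervalIntegral.integral_mono_on (μ := volume) ha
    (((by fun_prop : Continuous fun τ : ℝ => m * (B2 - B1) / μ * Real.exp (-μ * τ))).intervalIntegrable 0 a)
    (((X_intable hμ hg' hB1 0 a).sub (X_intable hμ hg' hB2 0 a))) key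
  rw [hsub]
  refine le_trans (le_of_eq ?_) hlow
  rw [intervalIntegral.integral_const_mul, exp_primitive hμ]
  ring


lemma Rtwo_eq (μ : ℝ) (g φ : ℝ → ℝ) (B : ℝ) :
    Rtwo μ g φ B = ∫ a in Set.Ioi (0:ℝ), φ (X μ g B a) * Real.exp (-μ * a) := rfl

variable {μ : ℝ} {g g' : ℝ → ℝ}

lemma R_intable (hμ : 0 < μ) (hgpos : ∀ z ≥ (0:ℝ), 0 < g z)
    (hg' : ∀ z ∈ Set.Ici (0:ℝ), HasDerivWithinAt g (g' z) (Set.Ici (0:ℝ)) z)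
    {C : ℝ} (hC : ∀ z ≥ (0:ℝ), g z ≤ C)
    {φ : ℝ → ℝ} (hφc : ContinuousOn φ (Set.Ici (0:ℝ))) {D : ℝ}
    (hφb : ∀ s ≥ (0:ℝ), |φ s| ≤ D * s) {B : ℝ} (hB : 0 ≤ B) :
    IntegrableOn (fun a => φ (X μ g B a) * Real.exp (-μ * a)) (Set.Ioi (0:ℝ)) := by
  have hmeas : AEStronglyMeasurable (fun a => φ (X μ g B a) * Real.exp (-μ * a))
      (volume.restrict (Set.Ioi (0:ℝ))) := by
    apply ContinuousOn.aestronglyMeasurable _ measurableSet_Ioi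
    apply ContinuousOn.mul
    · exact hφc.comp (X_cont hμ hg' hB).continuousOn
        (fun a ha => X_nonneg hμ hgpos hB (le_of_lt ha))
    · exact ((by fun_prop : Continuous fun a : ℝ => Real.exp (-μ * a))).continuousOn
  have hD : 0 ≤ D := le_trans (abs_nonneg (φ 1)) (by simpa using hφb 1 (by norm_num))
  refine ((mul_exp_int μ hμ).const_mul (D * C)).mono' hmeas ?_
  filter_upwards [ae_restrict_mem measurableSet_Ioi] with a ha
  have ha0 : (0:ℝ) ≤ a := le_of_lt ha
  have h1 : |φ (X μ g B a)| ≤ D * X μ g B a := hφb _ (X_nonneg hμ hgpos hB ha0)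
  have h2 : X μ g B a ≤ C * a := X_le hμ hg' hC hB ha0
  rw [Real.norm_eq_abs, abs_mul, abs_of_pos (Real.exp_pos _)]
  calc |φ (X μ g B a)| * Real.exp (-μ * a)
      ≤ (D * (C * a)) * Real.exp (-μ * a) := by
        apply mul_le_mul_of_nonneg_right _ (Real.exp_pos _).le
        exact le_trans h1 (mul_le_mul_of_nonneg_left h2 hD)
    _ = D * C * (a * Real.exp (-μ * a)) := by ring

lemma R_mono (hμ : 0 < μ) (hgpos : ∀ z ≥ (0:ℝ), 0 < g z)
    (hg' : ∀ z ∈ Set.Ici (0:ℝ), HasDerivWithinAt g (g' z) (Set.Ici (0:ℝ)) z)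
    {C : ℝ} (hC : ∀ z ≥ (0:ℝ), g z ≤ C)
    {φ ψ : ℝ → ℝ} (hφc : ContinuousOn φ (Set.Ici (0:ℝ)))
    (hψc : ContinuousOn ψ (Set.Ici (0:ℝ))) {D : ℝ}
    (hφb : ∀ s ≥ (0:ℝ), |φ s| ≤ D * s) (hψb : ∀ s ≥ (0:ℝ), |ψ s| ≤ D * s)
    (hle : ∀ s ≥ (0:ℝ), φ s ≤ ψ s) {B : ℝ} (hB : 0 ≤ B) :
    Rtwo μ g φ B ≤ Rtwo μ g ψ B := by
  rw [Rtwo_eq, Rtwo_eq]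
  refine setIntegral_mono_on (R_intable hμ hgpos hg' hC hφc hφb hB)
    (R_intable hμ hgpos hg' hC hψc hψb hB) measurableSet_Ioi (fun a ha => ?_)
  exact mul_le_mul_of_nonneg_right (hle _ (X_nonneg hμ hgpos hB (le_of_lt ha)))
    (Real.exp_pos _).le

lemma R_close (hμ : 0 < μ) (hgpos : ∀ z ≥ (0:ℝ), 0 < g z)
    (hg' : ∀ z ∈ Set.Ici (0:ℝ), HasDerivWithinAt g (g' z) (Set.Ici (0:ℝ)) z)
    {C : ℝ} (hC : ∀ z ≥ (0:ℝ), g z ≤ C)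
    {φ ψ : ℝ → ℝ} (hφc : ContinuousOn φ (Set.Ici (0:ℝ)))
    (hψc : ContinuousOn ψ (Set.Ici (0:ℝ))) {D : ℝ}
    (hφb : ∀ s ≥ (0:ℝ), |φ s| ≤ D * s) (hψb : ∀ s ≥ (0:ℝ), |ψ s| ≤ D * s)
    {K : ℝ} (hK : ∀ s ≥ (0:ℝ), |φ s - ψ s| ≤ K) {B : ℝ} (hB : 0 ≤ B) :
    |Rtwo μ g φ B - Rtwo μ g ψ B| ≤ K / μ := by
  have hφi := R_intable hμ hgpos hg' hC hφc hφb hB (g := g) (μ := μ)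
  have hψi := R_intable hμ hgpos hg' hC hψc hψb hB (g := g) (μ := μ)
  rw [Rtwo_eq, Rtwo_eq, ← integral_sub hφi hψi]
  have h1 : |∫ a in Set.Ioi (0:ℝ),
      (φ (X μ g B a) * Real.exp (-μ * a) - ψ (X μ g B a) * Real.exp (-μ * a))| ≤
      ∫ a in Set.Ioi (0:ℝ),
        |φ (X μ g B a) * Real.exp (-μ * a) - ψ (X μ g B a) * Real.exp (-μ * a)| := by
    simpa [Real.norm_eq_abs] using norm_integral_le_integral_norm (μ := volume.restrict (Set.Ioi (0:ℝ)))
      (fun a => φ (X μ g B a) * Real.exp (-μ * a) - ψ (X μ g B a) * Real.exp (-μ * a))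
  refine le_trans h1 ?_
  have h2 : ∫ a in Set.Ioi (0:ℝ),
      |φ (X μ g B a) * Real.exp (-μ * a) - ψ (X μ g B a) * Real.exp (-μ * a)| ≤
      ∫ a in Set.Ioi (0:ℝ), K * Real.exp (-μ * a) := by
    refine setIntegral_mono_on (hφi.sub hψi).abs
      ((exp_neg_integrableOn_Ioi 0 hμ).const_mul K) measurableSet_Ioi (fun a ha => ?_)
    have : φ (X μ g B a) * Real.exp (-μ * a) - ψ (X μ g B a) * Real.exp (-μ * a)
        = (φ (X μ g B a) - ψ (X μ g B a)) * Real.exp (-μ * a) := by ring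
    rw [this, abs_mul, abs_of_pos (Real.exp_pos _)]
    exact mul_le_mul_of_nonneg_right
      (hK _ (X_nonneg hμ hgpos hB (le_of_lt ha))) (Real.exp_pos _).le
  refine le_trans h2 ?_
  rw [integral_const_mul, exp_int μ hμ 0]
  simp [div_eq_mul_inv]

lemma R1_anti (hμ : 0 < μ) (hgpos : ∀ z ≥ (0:ℝ), 0 < g z)
    (hg' : ∀ z ∈ Set.Ici (0:ℝ), HasDerivWithinAt g (g' z) (Set.Ici (0:ℝ)) z)
    (hg'c : ContinuousOn g' (Set.Ici (0:ℝ))) (hg'neg : ∀ z ≥ (0:ℝ), g' z < 0)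
    {C : ℝ} (hC : ∀ z ≥ (0:ℝ), g z ≤ C) {b1 : ℝ} (hb1 : 0 < b1) {B B' : ℝ}
    (hB : 0 ≤ B) (hlt : B < B') :
    Rtwo μ g (fun s => b1 * s) B' < Rtwo μ g (fun s => b1 * s) B := by
  have hB' : 0 ≤ B' := hB.trans hlt.le
  have hb : ∀ s ≥ (0:ℝ), |b1 * s| ≤ b1 * s := fun s hs => le_of_eq (abs_of_nonneg (by positivity))
  have hc : ContinuousOn (fun s : ℝ => b1 * s) (Set.Ici (0:ℝ)) := by fun_prop
  have hiB := R_intable hμ hgpos hg' hC hc hb hB (g := g) (μ := μ)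
  have hiB' := R_intable hμ hgpos hg' hC hc hb hB' (g := g) (μ := μ)
  have key : 0 < Rtwo μ g (fun s => b1 * s) B - Rtwo μ g (fun s => b1 * s) B' := by
    rw [Rtwo_eq, Rtwo_eq, ← integral_sub hiB hiB']
    set f : ℝ → ℝ := fun a =>
      b1 * X μ g B a * Real.exp (-μ * a) - b1 * X μ g B' a * Real.exp (-μ * a) with hf
    have hfpos : ∀ a ∈ Set.Ioi (0:ℝ), 0 < f a := by
      intro a ha
      have ha0 : (0:ℝ) < a := ha
      have hXlt : X μ g B' a < X μ g B a := by
        have hdiff : X μ g B a - X μ g B' a = ∫ τ in (0:ℝ)..a,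
            (g (B * Real.exp (-μ * τ) / μ) - g (B' * Real.exp (-μ * τ) / μ)) := by
          unfold X
          rw [intervalIntegral.integral_sub (X_intable hμ hg' hB 0 a)
            (X_intable hμ hg' hB' 0 a)]
        have hpos : 0 < ∫ τ in (0:ℝ)..a,
            (g (B * Real.exp (-μ * τ) / μ) - g (B' * Real.exp (-μ * τ) / μ)) := by
          refine intervalIntegral.intervalIntegral_pos_of_pos_on
            ((X_intable hμ hg' hB 0 a).sub (X_intable hμ hg' hB' 0 a)) (fun τ hτ => ?_) ha0
          have harg : B * Real.exp (-μ * τ) / μ < B' * Real.exp (-μ * τ) / μ := by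
            have hE := Real.exp_pos (-μ * τ)
            gcongr
          exact sub_pos.mpr (g_anti_strict hg' hg'c hg'neg (arg_nonneg hμ hB τ) harg)
        linarith [hdiff ▸ hpos]
      have := Real.exp_pos (-μ * a)
      rw [hf]
      dsimp only
      nlinarith [mul_pos (mul_pos hb1 this) (sub_pos.mpr hXlt)]
    have hfnn : 0 ≤ᵐ[volume.restrict (Set.Ioi (0:ℝ))] f := by
      filter_upwards [ae_restrict_mem measurableSet_Ioi] with a ha
      exact (hfpos a ha).le
    rw [setIntegral_pos_iff_support_of_nonneg_ae hfnn (hiB.sub hiB')]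
    have hsub : Set.Ioi (0:ℝ) ⊆ Function.support f ∩ Set.Ioi (0:ℝ) :=
      fun a ha => ⟨(hfpos a ha).ne', ha⟩
    have h0 : (0:ENNReal) < volume (Set.Ioi (0:ℝ)) := by
      rw [Real.volume_Ioi]; exact ENNReal.zero_lt_top
    exact lt_of_lt_of_le h0 (measure_mono hsub)
  linarith

lemma R0_decr (hμ : 0 < μ) (hgpos : ∀ z ≥ (0:ℝ), 0 < g z)
    (hg' : ∀ z ∈ Set.Ici (0:ℝ), HasDerivWithinAt g (g' z) (Set.Ici (0:ℝ)) z)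
    (hg'c : ContinuousOn g' (Set.Ici (0:ℝ))) (hg'neg : ∀ z ≥ (0:ℝ), g' z < 0)
    {C : ℝ} (hC : ∀ z ≥ (0:ℝ), g z ≤ C)
    {β00 xA Bt aTil : ℝ} (hβ00 : 0 < β00) (hxA : 0 ≤ xA)
    (haTil0 : 0 ≤ aTil) (hxa : X μ g Bt aTil = xA)
    {B1 B2 : ℝ} (hB1 : 0 ≤ B1) (hB12 : B1 ≤ B2) (hB2t : B2 ≤ Bt) :
    β00 * sInf ((fun s => |g' s|) '' Set.Icc (0:ℝ) (Bt / μ)) * (B2 - B1) *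
      Real.exp (-μ * aTil) / (2 * μ ^ 3)
      ≤ Rtwo μ g (fun s => β00 * max 0 (s - xA)) B1
        - Rtwo μ g (fun s => β00 * max 0 (s - xA)) B2 := by
  set m := sInf ((fun s => |g' s|) '' Set.Icc (0:ℝ) (Bt / μ)) with hm
  have hB2 : 0 ≤ B2 := hB1.trans hB12
  have hBt0 : 0 ≤ Bt := hB2.trans hB2t
  have hmpos : 0 < m := m_pos hg'c hg'neg (by positivity)
  have hβ0c : ContinuousOn (fun s : ℝ => β00 * max 0 (s - xA)) (Set.Ici (0:ℝ)) := by
    fun_prop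
  have hβ0b : ∀ s ≥ (0:ℝ), |(fun s : ℝ => β00 * max 0 (s - xA)) s| ≤ β00 * s := by
    intro s hs
    have h1 : max 0 (s - xA) ≤ s := max_le hs (by linarith)
    have h2 : (0:ℝ) ≤ max 0 (s - xA) := le_max_left _ _
    rw [abs_of_nonneg (by positivity)]
    exact mul_le_mul_of_nonneg_left h1 hβ00.le
  have hi1 := R_intable hμ hgpos hg' hC hβ0c hβ0b hB1 (g := g) (μ := μ)
  have hi2 := R_intable hμ hgpos hg' hC hβ0c hβ0b hB2 (g := g) (μ := μ)
  set f : ℝ → ℝ := fun a => β00 * max 0 (X μ g B1 a - xA) * Real.exp (-μ * a)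
      - β00 * max 0 (X μ g B2 a - xA) * Real.exp (-μ * a) with hf
  have hfi : IntegrableOn f (Set.Ioi (0:ℝ)) := hi1.sub hi2
  have hdiff : Rtwo μ g (fun s => β00 * max 0 (s - xA)) B1
      - Rtwo μ g (fun s => β00 * max 0 (s - xA)) B2 = ∫ a in Set.Ioi (0:ℝ), f a := by
    rw [Rtwo_eq, Rtwo_eq, ← integral_sub hi1 hi2]
  have hfnn : ∀ a ∈ Set.Ioi (0:ℝ), 0 ≤ f a := by
    intro a ha
    have hX : X μ g B2 a ≤ X μ g B1 a := X_anti hμ hg' hg'c hg'neg hB1 hB12 (le_of_lt ha)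
    have h1 : max 0 (X μ g B2 a - xA) ≤ max 0 (X μ g B1 a - xA) :=
      max_le_max le_rfl (by linarith)
    have h2 := (Real.exp_pos (-μ * a)).le
    rw [hf]
    dsimp only
    have h3 := mul_le_mul_of_nonneg_right (mul_le_mul_of_nonneg_left h1 hβ00.le) h2
    linarith
  -- lower bound function on Ioi aTil
  set lo : ℝ → ℝ := fun a => β00 * m * (B2 - B1) / μ ^ 2 *
      (Real.exp (-μ * a) - Real.exp (-(2 * μ) * a)) with hlo
  have hstep2 : ∀ a ∈ Set.Ioi aTil, lo a ≤ f a := by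
    intro a ha
    have haa : aTil < a := ha
    have ha0 : (0:ℝ) ≤ a := haTil0.trans haa.le
    have hxa2 : xA ≤ X μ g B2 a := by
      calc xA = X μ g Bt aTil := hxa.symm
        _ ≤ X μ g Bt a := X_mono_a hμ hgpos hg' hBt0 haa.le
        _ ≤ X μ g B2 a := X_anti hμ hg' hg'c hg'neg hB2 hB2t ha0
    have hxa1 : xA ≤ X μ g B1 a :=
      hxa2.trans (X_anti hμ hg' hg'c hg'neg hB1 hB12 ha0)
    have hq := X_quant hμ hg' hg'c hg'neg hB1 hB12 hB2t ha0
    rw [hf, hlo]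
    dsimp only
    rw [max_eq_right (sub_nonneg.mpr hxa1), max_eq_right (sub_nonneg.mpr hxa2)]
    have hE2 : Real.exp (-(2 * μ) * a) = Real.exp (-μ * a) * Real.exp (-μ * a) := by
      rw [← Real.exp_add]; ring_nf
    have hE := (Real.exp_pos (-μ * a)).le
    have key : m * (B2 - B1) * (1 - Real.exp (-μ * a)) / μ ^ 2 * Real.exp (-μ * a)
        ≤ (X μ g B1 a - X μ g B2 a) * Real.exp (-μ * a) :=
      mul_le_mul_of_nonneg_right hq hE
    calc β00 * m * (B2 - B1) / μ ^ 2 * (Real.exp (-μ * a) - Real.exp (-(2 * μ) * a))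
        = β00 * (m * (B2 - B1) * (1 - Real.exp (-μ * a)) / μ ^ 2 * Real.exp (-μ * a)) := by
          rw [hE2]; ring
      _ ≤ β00 * ((X μ g B1 a - X μ g B2 a) * Real.exp (-μ * a)) :=
          mul_le_mul_of_nonneg_left key hβ00.le
      _ = β00 * (X μ g B1 a - xA) * Real.exp (-μ * a)
          - β00 * (X μ g B2 a - xA) * Real.exp (-μ * a) := by ring
  have hloi : IntegrableOn lo (Set.Ioi aTil) := by
    have h := ((exp_neg_integrableOn_Ioi aTil hμ).sub
      (exp_neg_integrableOn_Ioi aTil (by linarith : (0:ℝ) < 2 * μ))).const_mul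
      (β00 * m * (B2 - B1) / μ ^ 2)
    exact h
  have hstep3 : ∫ a in Set.Ioi aTil, lo a ≤ ∫ a in Set.Ioi aTil, f a :=
    setIntegral_mono_on hloi (hfi.mono_set (Set.Ioi_subset_Ioi haTil0))
      measurableSet_Ioi hstep2
  have hstep1 : ∫ a in Set.Ioi aTil, f a ≤ ∫ a in Set.Ioi (0:ℝ), f a := by
    refine setIntegral_mono_set hfi ?_ ((Set.Ioi_subset_Ioi haTil0).eventuallyLE)
    filter_upwards [ae_restrict_mem measurableSet_Ioi] with a ha
    exact hfnn a ha
  have hstep4 : ∫ a in Set.Ioi aTil, lo a = β00 * m * (B2 - B1) / μ ^ 2 *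
      (Real.exp (-μ * aTil) / μ - Real.exp (-(2 * μ) * aTil) / (2 * μ)) := by
    rw [hlo]
    rw [integral_const_mul]
    rw [integral_sub (exp_neg_integrableOn_Ioi aTil hμ)
      (exp_neg_integrableOn_Ioi aTil (by linarith : (0:ℝ) < 2 * μ))]
    rw [exp_int μ hμ aTil, exp_int (2 * μ) (by linarith) aTil]
  have hstep5 : β00 * m * (B2 - B1) * Real.exp (-μ * aTil) / (2 * μ ^ 3)
      ≤ ∫ a in Set.Ioi aTil, lo a := by
    rw [hstep4]
    have hE2 : Real.exp (-(2 * μ) * aTil) = Real.exp (-μ * aTil) * Real.exp (-μ * aTil) := by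
      rw [← Real.exp_add]; ring_nf
    have hE1 : Real.exp (-μ * aTil) ≤ 1 := Real.exp_le_one_iff.mpr (by nlinarith)
    have hEpos := Real.exp_pos (-μ * aTil)
    rw [hE2]
    have hfac : (0:ℝ) ≤ β00 * m * (B2 - B1) / μ ^ 2 :=
      div_nonneg (mul_nonneg (mul_nonneg hβ00.le hmpos.le) (by linarith)) (by positivity)
    have hkey : Real.exp (-μ * aTil) / (2 * μ)
        ≤ Real.exp (-μ * aTil) / μ - Real.exp (-μ * aTil) * Real.exp (-μ * aTil) / (2 * μ) := by
      rw [div_sub_div _ _ hμ.ne' (by linarith : (0:ℝ) < 2 * μ).ne', div_le_div_iff₀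
        (by linarith) (by positivity)]
      nlinarith [mul_nonneg (sub_nonneg.mpr (by nlinarith :
        Real.exp (-μ * aTil) * Real.exp (-μ * aTil) ≤ Real.exp (-μ * aTil)))
        (mul_pos hμ hμ).le]
    calc β00 * m * (B2 - B1) * Real.exp (-μ * aTil) / (2 * μ ^ 3)
        = β00 * m * (B2 - B1) / μ ^ 2 * (Real.exp (-μ * aTil) / (2 * μ)) := by ring
      _ ≤ β00 * m * (B2 - B1) / μ ^ 2 *
          (Real.exp (-μ * aTil) / μ - Real.exp (-μ * aTil) * Real.exp (-μ * aTil) / (2 * μ)) :=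
          mul_le_mul_of_nonneg_left hkey hfac
  rw [hdiff]
  exact le_trans (le_trans hstep5 hstep3) hstep1

end S8

theorem stmt_8 (μ xA β00 b1 : ℝ) (hμ : 0 < μ) (hxA : 0 ≤ xA) (hβ00 : 0 < β00)
    (hb1 : β00 ≤ b1)
    (g g' : ℝ → ℝ)
    (hgpos : ∀ z ≥ (0 : ℝ), 0 < g z) (hgbd : ∃ C : ℝ, ∀ z ≥ (0 : ℝ), g z ≤ C)
    (hg' : ∀ z ∈ Set.Ici (0 : ℝ), HasDerivWithinAt g (g' z) (Set.Ici (0 : ℝ)) z)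
    (hg'c : ContinuousOn g' (Set.Ici (0 : ℝ)))
    (hg'neg : ∀ z ≥ (0 : ℝ), g' z < 0)
    (hglim : Tendsto g atTop (nhds 0))
    (β β' : ℝ → ℝ)
    (hβnn : ∀ s ≥ (0 : ℝ), 0 ≤ β s)
    (hβ' : ∀ s ∈ Set.Ici (0 : ℝ), HasDerivWithinAt β (β' s) (Set.Ici (0 : ℝ)) s)
    (hβ'c : ContinuousOn β' (Set.Ici (0 : ℝ)))
    (hβmono : StrictMonoOn β (Set.Ici (0 : ℝ))) (hβzero : β 0 = 0)
    (hβ'bd : ∀ s ≥ (0 : ℝ), |β' s| ≤ b1)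
    -- R(β₀, 0) > 1 and R(β, 0) > 1, with β₀(s) = β₀₀ max{0, s - x_A}
    (hR00 : 1 < Rtwo μ g (fun s => β00 * max 0 (s - xA)) 0)
    (hR0 : 1 < Rtwo μ g β 0)
    -- B̄(β), B̄(β₀) and B̃ : the positive stationary birth rates for β, β₀ and β₁(s) = b₁ s
    (Bβ Bβ0 Bt aTil : ℝ)
    (hBβ : 0 < Bβ ∧ Rtwo μ g β Bβ = 1)
    (hBβ0 : 0 < Bβ0 ∧ Rtwo μ g (fun s => β00 * max 0 (s - xA)) Bβ0 = 1)
    (hBt : 0 < Bt ∧ Rtwo μ g (fun s => b1 * s) Bt = 1)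
    -- ã : the age defined by ∫₀^{ã} g(B̃ e^{-μτ}/μ) dτ = x_A
    (haTil : 0 ≤ aTil ∧ (∫ τ in (0 : ℝ)..aTil, g (Bt * Real.exp (-μ * τ) / μ)) = xA) :
    -- conclusion: |B̄(β) - B̄(β₀)| ≤ C ‖β - β₀‖_∞ with
    -- C = 2 μ² e^{μ ã} / (β₀₀ · min_{s ∈ [0, B̃/μ]} |g'(s)|)
    ∀ K : ℝ, (∀ s ≥ (0 : ℝ), |β s - β00 * max 0 (s - xA)| ≤ K) →
      |Bβ - Bβ0| ≤
        2 * μ ^ 2 * Real.exp (μ * aTil) /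
          (β00 * sInf ((fun s => |g' s|) '' Set.Icc (0 : ℝ) (Bt / μ))) * K := by
  intro K hK
  obtain ⟨hBβpos, hRβ⟩ := hBβ
  obtain ⟨hBβ0pos, hRβ0⟩ := hBβ0
  obtain ⟨hBtpos, hRt⟩ := hBt
  obtain ⟨haTil0, haTilEq⟩ := haTil
  obtain ⟨C, hC⟩ := hgbd
  set m := sInf ((fun s => |g' s|) '' Set.Icc (0:ℝ) (Bt / μ)) with hm
  have hmpos : 0 < m := S8.m_pos hg'c hg'neg (div_nonneg hBtpos.le hμ.le)
  have hb1pos : 0 < b1 := lt_of_lt_of_le hβ00 hb1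
  have hβc : ContinuousOn β (Set.Ici (0:ℝ)) := fun z hz => (hβ' z hz).continuousWithinAt
  have hβleβ1 : ∀ s ≥ (0:ℝ), β s ≤ b1 * s := fun s hs =>
    S8.lin_bound hβ' hβzero hβ'bd hs
  have hβb : ∀ s ≥ (0:ℝ), |β s| ≤ b1 * s := fun s hs => by
    rw [abs_of_nonneg (hβnn s hs)]; exact hβleβ1 s hs
  have hβ0c : ContinuousOn (fun s : ℝ => β00 * max 0 (s - xA)) (Set.Ici (0:ℝ)) := by
    fun_prop
  have hβ0leβ1 : ∀ s ≥ (0:ℝ), β00 * max 0 (s - xA) ≤ b1 * s := by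
    intro s hs
    have h1 : max 0 (s - xA) ≤ s := max_le hs (by linarith)
    have h2 : (0:ℝ) ≤ max 0 (s - xA) := le_max_left _ _
    nlinarith
  have hβ0b : ∀ s ≥ (0:ℝ), |(fun s : ℝ => β00 * max 0 (s - xA)) s| ≤ b1 * s := by
    intro s hs
    rw [abs_of_nonneg (by positivity)]
    exact hβ0leβ1 s hs
  have hβ1c : ContinuousOn (fun s : ℝ => b1 * s) (Set.Ici (0:ℝ)) := by fun_prop
  have hβ1b : ∀ s ≥ (0:ℝ), |b1 * s| ≤ b1 * s := fun s hs =>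
    le_of_eq (abs_of_nonneg (by positivity))
  -- Bβ ≤ Bt
  have hBβle : Bβ ≤ Bt := by
    by_contra hcon
    push_neg at hcon
    have h1 : Rtwo μ g β Bβ ≤ Rtwo μ g (fun s => b1 * s) Bβ :=
      S8.R_mono hμ hgpos hg' hC hβc hβ1c hβb hβ1b hβleβ1 hBβpos.le
    have h2 : Rtwo μ g (fun s => b1 * s) Bβ < Rtwo μ g (fun s => b1 * s) Bt :=
      S8.R1_anti hμ hgpos hg' hg'c hg'neg hC hb1pos hBtpos.le hcon
    rw [hRβ] at h1
    rw [hRt] at h2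
    linarith
  have hBβ0le : Bβ0 ≤ Bt := by
    by_contra hcon
    push_neg at hcon
    have h1 : Rtwo μ g (fun s => β00 * max 0 (s - xA)) Bβ0 ≤
        Rtwo μ g (fun s => b1 * s) Bβ0 :=
      S8.R_mono hμ hgpos hg' hC hβ0c hβ1c hβ0b hβ1b hβ0leβ1 hBβ0pos.le
    have h2 : Rtwo μ g (fun s => b1 * s) Bβ0 < Rtwo μ g (fun s => b1 * s) Bt :=
      S8.R1_anti hμ hgpos hg' hg'c hg'neg hC hb1pos hBtpos.le hcon
    rw [hRβ0] at h1
    rw [hRt] at h2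
    linarith
  have hxa : S8.X μ g Bt aTil = xA := haTilEq
  have hclose : |Rtwo μ g β Bβ - Rtwo μ g (fun s => β00 * max 0 (s - xA)) Bβ| ≤ K / μ :=
    S8.R_close hμ hgpos hg' hC hβc hβ0c hβb hβ0b hK hBβpos.le
  rw [hRβ] at hclose
  have habs := abs_le.mp hclose
  -- common final step
  have main : ∀ B1 B2 : ℝ, 0 ≤ B1 → B1 ≤ B2 → B2 ≤ Bt →
      Rtwo μ g (fun s => β00 * max 0 (s - xA)) B1
        - Rtwo μ g (fun s => β00 * max 0 (s - xA)) B2 ≤ K / μ →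
      B2 - B1 ≤ 2 * μ ^ 2 * Real.exp (μ * aTil) / (β00 * m) * K := by
    intro B1 B2 hB1 hB12 hB2t hKbd
    have hdec := S8.R0_decr hμ hgpos hg' hg'c hg'neg hC hβ00 hxA haTil0 hxa hB1 hB12 hB2t
    have hfin : β00 * m * (B2 - B1) * Real.exp (-μ * aTil) / (2 * μ ^ 3) ≤ K / μ :=
      le_trans hdec hKbd
    set E := Real.exp (-μ * aTil) with hE
    set E' := Real.exp (μ * aTil) with hE'
    have hEE' : E * E' = 1 := by rw [hE, hE', ← Real.exp_add]; ring_nf; exact Real.exp_zero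
    have hEpos : 0 < E := Real.exp_pos _
    have hE'pos : 0 < E' := Real.exp_pos _
    rw [div_le_div_iff₀ (by positivity) hμ] at hfin
    -- hfin : β00 * m * (B2 - B1) * E * μ ≤ K * (2 * μ ^ 3)
    have h3 : β00 * m * (B2 - B1) * E ≤ 2 * μ ^ 2 * K := by nlinarith
    rw [div_mul_eq_mul_div, le_div_iff₀ (by positivity : (0:ℝ) < β00 * m)]
    calc (B2 - B1) * (β00 * m) = (β00 * m * (B2 - B1) * E) * E' := by
          rw [mul_assoc (β00 * m * (B2 - B1)) E E', hEE', mul_one]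
          ring
      _ ≤ (2 * μ ^ 2 * K) * E' := mul_le_mul_of_nonneg_right h3 hE'pos.le
      _ = 2 * μ ^ 2 * E' * K := by ring
  rcases le_total Bβ0 Bβ with hord | hord
  · have hKbd : Rtwo μ g (fun s => β00 * max 0 (s - xA)) Bβ0
        - Rtwo μ g (fun s => β00 * max 0 (s - xA)) Bβ ≤ K / μ := by
      rw [hRβ0]; linarith [habs.2]
    have := main Bβ0 Bβ hBβ0pos.le hord hBβle hKbd
    rw [abs_of_nonneg (sub_nonneg.mpr hord)]
    exact this
  · have hKbd : Rtwo μ g (fun s => β00 * max 0 (s - xA)) Bβ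
        - Rtwo μ g (fun s => β00 * max 0 (s - xA)) Bβ0 ≤ K / μ := by
      rw [hRβ0]; linarith [habs.1]
    have := main Bβ Bβ0 hBβpos.le hord hBβ0le hKbd
    rw [abs_of_nonpos (sub_nonpos.mpr hord), neg_sub]
    exact this
end

section
/- Let μ > 0, x_A ≥ 0, β₀₀ > 0 and b₁ ≥ β₀₀, and set x_m = 0. Let g : [0,∞) → (0,∞) be bounded, continuously differentiable with bounded and globally Lipschitz derivative, g'(s) < 0 for all s ≥ 0, and lim_{z→∞} g(z) = 0. Define β₀(s) = β₀₀ max{0, s − x_A}, β₁(s) = b₁ s, and R(β, B) := ∫₀^∞ β( ∫₀^a g(B e^{−μτ}/μ) dτ ) e^{−μa} da. Let β : [0,∞) → [0,∞) be continuously differentiable with bounded Lipschitz derivative, strictly increasing, β(0) = 0 and sup |β'| ≤ b₁, and assume R(β₀,0) > 1 and R(β,0) > 1. Let B̄(β), B̄(β₀), B̃ be the unique positive solutions of R(β,·) = 1, R(β₀,·) = 1, R(β₁,·) = 1, let ā satisfy ∫₀^{ā} g(B̄(β₀)e^{−μτ}/μ) dτ = x_A and ã satisfy ∫₀^{ã}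 g(B̃ e^{−μτ}/μ) dτ = x_A, and set S̄(a;β) = ∫₀^a g(B̄(β) e^{−μτ}/μ) dτ. Define r := 2 g(0) b₁/μ and M := (μ²/r²)(1 − (β₀₀/μ²) g(B̄(β₀)/μ) e^{−μā}) (which is positive). Assume (g(0)/μ²)·sup_{s≥0, s≠x_A}|β'(s) − β₀₀·1_{(x_A,∞)}(s)| + (2/μ) e^{μ(ã−ā)} ( sup_{s≥0}|g'(s)| / min_{s∈[0,B̃/μ]} |g'(s)| ) · ‖β − β₀‖_∞ < M. Then every λ ∈ ℂ with Re λ > −μ satisfying the characteristic equation 1 = (1/(λ+μ)) g(B̄(β)/μ) ∫₀^∞ β'(S̄(a;β)) e^{−(λ+μ)a} da has Re λ < 0; i.e. all characteristic roots at the unique positive stationary birth rate B̄(β) have negative real part. -/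
open MeasureTheory Set Filter
open Topology

noncomputable def auxS (μ : ℝ) (g : ℝ → ℝ) (B : ℝ) (a : ℝ) : ℝ :=
  ∫ τ in (0:ℝ)..a, g (B * Real.exp (-μ * τ) / μ)

theorem aux_main (μ b1 : ℝ) (hμ : 0 < μ)
    (g g' : ℝ → ℝ)
    (hgpos : ∀ z ≥ (0 : ℝ), 0 < g z) (hgbd : ∃ C : ℝ, ∀ z ≥ (0 : ℝ), g z ≤ C)
    (hg' : ∀ z ∈ Set.Ici (0 : ℝ), HasDerivWithinAt g (g' z) (Set.Ici (0 : ℝ)) z)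
    (hg'neg : ∀ z ≥ (0 : ℝ), g' z < 0)
    (β β' : ℝ → ℝ)
    (hβnn : ∀ s ≥ (0 : ℝ), 0 ≤ β s)
    (hβ' : ∀ s ∈ Set.Ici (0 : ℝ), HasDerivWithinAt β (β' s) (Set.Ici (0 : ℝ)) s)
    (hβ'bd : ∀ s ≥ (0 : ℝ), |β' s| ≤ b1)
    (hβ'lip : ∃ L : NNReal, LipschitzOnWith L β' (Set.Ici (0 : ℝ)))
    (hβmono : StrictMonoOn β (Set.Ici (0 : ℝ))) (hβzero : β 0 = 0)
    (Bβ : ℝ) (hBpos : 0 < Bβ) (hReq : Rtwo μ g β Bβ = 1)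
    (z : ℂ) (hz : 0 ≤ z.re)
    (hchar : (1 : ℂ) = (g (Bβ / μ) : ℂ) / (z + (μ : ℂ)) *
        ∫ a in Set.Ioi (0 : ℝ),
          ((β' (auxS μ g Bβ a) : ℝ) : ℂ) * Complex.exp (-(z + (μ : ℂ)) * (a : ℂ))) :
    False := by
  have hb1nn : 0 ≤ b1 := (abs_nonneg _).trans (hβ'bd 0 le_rfl)
  obtain ⟨Cg, hCg⟩ := hgbd
  have hCgpos : 0 < Cg := lt_of_lt_of_le (hgpos 0 le_rfl) (hCg 0 le_rfl)
  have hargpos : ∀ τ : ℝ, 0 < Bβ * Real.exp (-μ * τ) / μ := fun τ => by positivity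
  have hhpos : ∀ τ : ℝ, 0 < g (Bβ * Real.exp (-μ * τ) / μ) := fun τ => hgpos _ (hargpos τ).le
  have hgcontAt : ∀ y : ℝ, 0 < y → ContinuousAt g y := fun y hy =>
    ((hg' y hy.le).hasDerivAt (Ici_mem_nhds hy)).continuousAt
  have hargcont : Continuous (fun τ : ℝ => Bβ * Real.exp (-μ * τ) / μ) :=
    (continuous_const.mul (Real.continuous_exp.comp (by continuity))).div_const μ
  have hhcont : Continuous (fun τ : ℝ => g (Bβ * Real.exp (-μ * τ) / μ)) := by
    rw [continuous_iff_continuousAt]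
    intro τ
    exact ContinuousAt.comp (hgcontAt _ (hargpos τ)) (hargcont.continuousAt (x := τ))
  have hhle : ∀ τ : ℝ, g (Bβ * Real.exp (-μ * τ) / μ) ≤ Cg := fun τ => hCg _ (hargpos τ).le
  have hganti : StrictAntiOn g (Set.Ici (0:ℝ)) := by
    apply strictAntiOn_of_deriv_neg (convex_Ici 0)
      (fun x hx => (hg' x hx).continuousWithinAt)
    intro x hx
    rw [interior_Ici] at hx
    rw [((hg' x (mem_Ici.2 (le_of_lt hx))).hasDerivAt (Ici_mem_nhds hx)).deriv]
    exact hg'neg x (le_of_lt hx)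
  have hGpos : 0 < g (Bβ / μ) := hgpos _ (by positivity)
  have hhG : ∀ τ : ℝ, 0 ≤ τ → g (Bβ / μ) ≤ g (Bβ * Real.exp (-μ * τ) / μ) := by
    intro τ hτ
    rcases eq_or_lt_of_le hτ with rfl | hτ
    · simp
    · apply le_of_lt
      apply hganti (hargpos τ).le (mem_Ici.2 (le_of_lt (by positivity)))
      have h1 : Real.exp (-μ * τ) < 1 := by
        apply Real.exp_lt_one_iff.2
        nlinarith
      calc Bβ * Real.exp (-μ * τ) / μ < Bβ * 1 / μ := by gcongr
        _ = Bβ / μ := by ring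
  -- S facts
  have hSderiv : ∀ a : ℝ, HasDerivAt (auxS μ g Bβ) (g (Bβ * Real.exp (-μ * a) / μ)) a := by
    intro a
    exact intervalIntegral.integral_hasDerivAt_right (hhcont.intervalIntegrable _ _)
      (hhcont.stronglyMeasurableAtFilter _ _) hhcont.continuousAt
  have hScont : Continuous (auxS μ g Bβ) := by
    rw [continuous_iff_continuousAt]; exact fun a => (hSderiv a).continuousAt
  have hS0 : auxS μ g Bβ 0 = 0 := intervalIntegral.integral_same
  have hSnonneg : ∀ a : ℝ, 0 ≤ a → 0 ≤ auxS μ g Bβ a := fun a ha =>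
    intervalIntegral.integral_nonneg ha (fun τ _ => (hhpos τ).le)
  have hSle : ∀ a : ℝ, 0 ≤ a → auxS μ g Bβ a ≤ Cg * a := by
    intro a ha
    calc auxS μ g Bβ a ≤ ∫ _ in (0:ℝ)..a, Cg :=
          intervalIntegral.integral_mono_on ha (hhcont.intervalIntegrable _ _)
            intervalIntegrable_const (fun τ _ => hhle τ)
      _ = Cg * a := by simp [mul_comm]
  have hSmaps : Set.MapsTo (auxS μ g Bβ) (Set.Ici 0) (Set.Ici 0) := fun a ha => hSnonneg a ha
  obtain ⟨L, hL⟩ := hβ'lip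
  have hβ'contOn : ContinuousOn β' (Set.Ici 0) := hL.continuousOn
  have hφcont : ContinuousOn (fun a => β' (auxS μ g Bβ a)) (Set.Ici 0) :=
    hβ'contOn.comp hScont.continuousOn hSmaps
  have hβ'nonneg : ∀ s : ℝ, 0 ≤ s → 0 ≤ β' s := by
    intro s hs
    have hd : HasDerivWithinAt β (β' s) (Set.Ioi s) s :=
      (hβ' s hs).mono (fun t ht => le_trans hs (le_of_lt ht))
    apply ge_of_tendsto ((hasDerivWithinAt_iff_tendsto_slope' (notMem_Ioi_self)).mp hd)
    filter_upwards [self_mem_nhdsWithin] with t ht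
    rw [slope_def_field]
    apply div_nonneg
    · have := hβmono hs (le_trans hs (le_of_lt ht)) ht
      linarith
    · have : s < t := ht
      linarith
  have hφnn : ∀ a : ℝ, 0 ≤ a → 0 ≤ β' (auxS μ g Bβ a) := fun a ha => hβ'nonneg _ (hSnonneg a ha)
  have hφbd : ∀ a : ℝ, 0 ≤ a → β' (auxS μ g Bβ a) ≤ b1 := fun a ha =>
    (abs_le.mp (hβ'bd _ (hSnonneg a ha))).2
  have hβcontOn : ContinuousOn β (Set.Ici 0) := fun x hx => (hβ' x hx).continuousWithinAt
  have hβScont : ContinuousOn (fun a => β (auxS μ g Bβ a)) (Set.Ici 0) :=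
    hβcontOn.comp hScont.continuousOn hSmaps
  have hβSnn : ∀ a : ℝ, 0 ≤ a → 0 ≤ β (auxS μ g Bβ a) := fun a ha => hβnn _ (hSnonneg a ha)
  -- derivative of F a = β (S a) * exp (-μ a)
  have hFderiv : ∀ a ∈ Set.Ici (0:ℝ), HasDerivWithinAt
      (fun a => β (auxS μ g Bβ a) * Real.exp (-μ * a))
      (β' (auxS μ g Bβ a) * g (Bβ * Real.exp (-μ * a) / μ) * Real.exp (-μ * a)
        - μ * (β (auxS μ g Bβ a) * Real.exp (-μ * a))) (Set.Ici 0) a := by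
    intro a ha
    have hcomp : HasDerivWithinAt (fun a => β (auxS μ g Bβ a))
        (β' (auxS μ g Bβ a) * g (Bβ * Real.exp (-μ * a) / μ)) (Set.Ici 0) a :=
      HasDerivWithinAt.comp a (hβ' _ (hSnonneg a ha)) ((hSderiv a).hasDerivWithinAt) hSmaps
    have he : HasDerivAt (fun a : ℝ => Real.exp (-μ * a)) (Real.exp (-μ * a) * (-μ * 1)) a :=
      HasDerivAt.exp ((hasDerivAt_id a).const_mul (-μ))
    have this : HasDerivWithinAt (fun a => β (auxS μ g Bβ a) * Real.exp (-μ * a)) _ (Set.Ici 0) a :=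
      hcomp.mul he.hasDerivWithinAt
    convert this using 1
    ring
  -- integrability on compact intervals
  have hecont : Continuous (fun a : ℝ => Real.exp (-μ * a)) :=
    Real.continuous_exp.comp (continuous_const.mul continuous_id)
  have hIIφh : ∀ T : ℝ, 0 ≤ T → IntervalIntegrable
      (fun a => β' (auxS μ g Bβ a) * g (Bβ * Real.exp (-μ * a) / μ) * Real.exp (-μ * a))
      volume 0 T := by
    intro T hT
    apply ContinuousOn.intervalIntegrable
    rw [uIcc_of_le hT]
    exact ((hφcont.mono (Icc_subset_Ici_self)).mul
      (hhcont.continuousOn)).mul hecont.continuousOn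
  have hIIβS : ∀ T : ℝ, 0 ≤ T → IntervalIntegrable
      (fun a => β (auxS μ g Bβ a) * Real.exp (-μ * a)) volume 0 T := by
    intro T hT
    apply ContinuousOn.intervalIntegrable
    rw [uIcc_of_le hT]
    exact (hβScont.mono (Icc_subset_Ici_self)).mul
      hecont.continuousOn
  have hIIφ : ∀ T : ℝ, 0 ≤ T → IntervalIntegrable
      (fun a => β' (auxS μ g Bβ a) * Real.exp (-μ * a)) volume 0 T := by
    intro T hT
    apply ContinuousOn.intervalIntegrable
    rw [uIcc_of_le hT]
    exact (hφcont.mono (Icc_subset_Ici_self)).mul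
      hecont.continuousOn
  -- FTC
  have hFTC : ∀ T : ℝ, 0 ≤ T →
      (∫ a in (0:ℝ)..T, β' (auxS μ g Bβ a) * g (Bβ * Real.exp (-μ * a) / μ) * Real.exp (-μ * a))
        = β (auxS μ g Bβ T) * Real.exp (-μ * T)
          + μ * ∫ a in (0:ℝ)..T, β (auxS μ g Bβ a) * Real.exp (-μ * a) := by
    intro T hT
    have hcont : ContinuousOn (fun a => β (auxS μ g Bβ a) * Real.exp (-μ * a)) (Set.Icc 0 T) :=
      (hβScont.mono (Icc_subset_Ici_self)).mul
        hecont.continuousOn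
    have hder : ∀ x ∈ Set.Ioo (0:ℝ) T, HasDerivWithinAt
        (fun a => β (auxS μ g Bβ a) * Real.exp (-μ * a))
        (β' (auxS μ g Bβ x) * g (Bβ * Real.exp (-μ * x) / μ) * Real.exp (-μ * x)
          - μ * (β (auxS μ g Bβ x) * Real.exp (-μ * x))) (Set.Ioi x) x := by
      intro x hx
      exact (hFderiv x hx.1.le).mono (fun t ht => (hx.1.trans ht).le)
    have hint : IntervalIntegrable
        (fun a => β' (auxS μ g Bβ a) * g (Bβ * Real.exp (-μ * a) / μ) * Real.exp (-μ * a)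
          - μ * (β (auxS μ g Bβ a) * Real.exp (-μ * a))) volume 0 T :=
      (hIIφh T hT).sub ((hIIβS T hT).const_mul μ)
    have heq := intervalIntegral.integral_eq_sub_of_hasDeriv_right_of_le hT hcont hder hint
    rw [intervalIntegral.integral_sub (hIIφh T hT) ((hIIβS T hT).const_mul μ),
      intervalIntegral.integral_const_mul] at heq
    rw [hS0, hβzero] at heq
    simp only [mul_zero, zero_mul, sub_zero] at heq
    linarith [heq]
  have hReq' : (∫ a in Set.Ioi (0:ℝ), β (auxS μ g Bβ a) * Real.exp (-μ * a)) = 1 := hReq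
  have hRint : IntegrableOn (fun a => β (auxS μ g Bβ a) * Real.exp (-μ * a)) (Set.Ioi 0) := by
    by_contra hc
    rw [MeasureTheory.integral_undef hc] at hReq'
    norm_num at hReq'
  have hle1 : ∀ T : ℝ, 0 ≤ T →
      (∫ a in (0:ℝ)..T, β (auxS μ g Bβ a) * Real.exp (-μ * a)) ≤ 1 := by
    intro T hT
    rw [intervalIntegral.integral_of_le hT, ← hReq']
    apply setIntegral_mono_set hRint
    · exact (ae_restrict_iff' measurableSet_Ioi).2 (ae_of_all _ (fun a ha =>
        mul_nonneg (hβSnn a (le_of_lt ha)) (Real.exp_pos _).le))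
    · exact HasSubset.Subset.eventuallyLE Ioc_subset_Ioi_self
  have hJint : IntegrableOn (fun a => β' (auxS μ g Bβ a) * Real.exp (-μ * a)) (Set.Ioi 0) := by
    apply Integrable.mono ((exp_neg_integrableOn_Ioi 0 hμ).const_mul b1)
    · exact ((hφcont.mono Ioi_subset_Ici_self).mul
        hecont.continuousOn).aestronglyMeasurable measurableSet_Ioi
    · apply (ae_restrict_iff' measurableSet_Ioi).2 (ae_of_all _ (fun a ha => ?_))
      have ha : (0:ℝ) ≤ a := le_of_lt ha
      rw [Real.norm_eq_abs, Real.norm_eq_abs, abs_mul, abs_of_nonneg (Real.exp_pos _).le,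
        abs_of_nonneg (mul_nonneg hb1nn (Real.exp_pos _).le)]
      exact mul_le_mul_of_nonneg_right (hβ'bd _ (hSnonneg a ha)) (Real.exp_pos _).le
  -- β s ≤ b1 * s
  have hβle : ∀ s : ℝ, 0 ≤ s → β s ≤ b1 * s := by
    intro s hs
    have := Convex.norm_image_sub_le_of_norm_hasDerivWithin_le hβ'
      (fun x hx => by rw [Real.norm_eq_abs]; exact hβ'bd x hx) (convex_Ici 0)
      (self_mem_Ici : (0:ℝ) ∈ Set.Ici 0) hs
    rw [hβzero, sub_zero, sub_zero, Real.norm_eq_abs, Real.norm_eq_abs] at this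
    calc β s ≤ |β s| := le_abs_self _
      _ ≤ b1 * |s| := this
      _ = b1 * s := by rw [abs_of_nonneg hs]
  -- F tends to 0
  have hFtend : Tendsto (fun T => β (auxS μ g Bβ T) * Real.exp (-μ * T)) atTop (𝓝 0) := by
    have h1 : Tendsto (fun x : ℝ => x * Real.exp (-x)) atTop (𝓝 0) := by
      simpa using Real.tendsto_pow_mul_exp_neg_atTop_nhds_zero 1
    have h2 : Tendsto (fun T : ℝ => μ * T) atTop atTop :=
      Tendsto.const_mul_atTop hμ tendsto_id
    have h3 : Tendsto (fun T : ℝ => b1 * Cg / μ * ((μ * T) * Real.exp (-(μ * T)))) atTop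
        (𝓝 (b1 * Cg / μ * 0)) := Tendsto.const_mul _ (h1.comp h2)
    rw [mul_zero] at h3
    apply squeeze_zero' (g := fun T : ℝ => b1 * Cg / μ * ((μ * T) * Real.exp (-(μ * T))))
      ?_ ?_ h3
    · filter_upwards [eventually_ge_atTop (0:ℝ)] with T hT
      exact mul_nonneg (hβSnn T hT) (Real.exp_pos _).le
    · filter_upwards [eventually_ge_atTop (0:ℝ)] with T hT
      have hb : β (auxS μ g Bβ T) ≤ b1 * (Cg * T) :=
        (hβle _ (hSnonneg T hT)).trans (mul_le_mul_of_nonneg_left (hSle T hT) hb1nn)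
      have : b1 * Cg / μ * ((μ * T) * Real.exp (-(μ * T))) = b1 * (Cg * T) * Real.exp (-μ * T) := by
        rw [neg_mul]
        field_simp
      rw [this]
      exact mul_le_mul_of_nonneg_right hb (Real.exp_pos _).le
  have hJtend : Tendsto (fun T => ∫ a in (0:ℝ)..T, β' (auxS μ g Bβ a) * Real.exp (-μ * a))
      atTop (𝓝 (∫ a in Set.Ioi (0:ℝ), β' (auxS μ g Bβ a) * Real.exp (-μ * a))) :=
    intervalIntegral_tendsto_integral_Ioi 0 hJint tendsto_id
  have hkey : g (Bβ / μ) * ∫ a in Set.Ioi (0:ℝ), β' (auxS μ g Bβ a) * Real.exp (-μ * a) < μ := by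
    by_cases hex : ∃ a₀ : ℝ, 0 < a₀ ∧ 0 < β' (auxS μ g Bβ a₀)
    case neg =>
      push_neg at hex
      have hzero : Set.EqOn (fun a => β' (auxS μ g Bβ a) * Real.exp (-μ * a))
          (fun _ => (0:ℝ)) (Set.Ioi 0) := by
        intro a ha
        have h1 : β' (auxS μ g Bβ a) ≤ 0 := hex a ha
        have h2 : 0 ≤ β' (auxS μ g Bβ a) := hφnn a (le_of_lt ha)
        simp only
        rw [le_antisymm h1 h2, zero_mul]
      rw [setIntegral_congr_fun measurableSet_Ioi hzero]
      simpa using hμ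
    case pos =>
      obtain ⟨a₀, ha₀, hφa₀⟩ := hex
      set ψ : ℝ → ℝ := fun a => (g (Bβ * Real.exp (-μ * a) / μ) - g (Bβ / μ)) *
        (β' (auxS μ g Bβ a) * Real.exp (-μ * a)) with hψdef
      have hψcontOn : ContinuousOn ψ (Set.Ici 0) :=
        (hhcont.continuousOn.sub continuousOn_const).mul (hφcont.mul hecont.continuousOn)
      have hψnn : ∀ a : ℝ, 0 ≤ a → 0 ≤ ψ a := fun a ha =>
        mul_nonneg (sub_nonneg.2 (hhG a ha)) (mul_nonneg (hφnn a ha) (Real.exp_pos _).le)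
      have hhGlt : g (Bβ / μ) < g (Bβ * Real.exp (-μ * a₀) / μ) := by
        apply hganti (hargpos a₀).le (mem_Ici.2 (le_of_lt (by positivity)))
        have h1 : Real.exp (-μ * a₀) < 1 := Real.exp_lt_one_iff.2 (by nlinarith)
        calc Bβ * Real.exp (-μ * a₀) / μ < Bβ * 1 / μ := by gcongr
          _ = Bβ / μ := by ring
      have hψa₀ : 0 < ψ a₀ :=
        mul_pos (sub_pos.2 hhGlt) (mul_pos hφa₀ (Real.exp_pos _))
      have hψAt : ContinuousAt ψ a₀ := hψcontOn.continuousAt (Ici_mem_nhds ha₀)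
      have hev : ∀ᶠ x in 𝓝 a₀, ψ a₀ / 2 < ψ x :=
        hψAt.eventually (eventually_gt_nhds (by linarith))
      rw [Metric.eventually_nhds_iff] at hev
      obtain ⟨ε, hε, hball⟩ := hev
      set δ : ℝ := min (ε / 2) (a₀ / 2) with hδdef
      have hδpos : 0 < δ := lt_min (by linarith) (by linarith)
      have hδa₀ : 0 < a₀ - δ := by
        have : δ ≤ a₀ / 2 := min_le_right _ _
        linarith
      have hδε : δ < ε := lt_of_le_of_lt (min_le_left _ _) (by linarith)
      have hψII : ∀ u v : ℝ, 0 ≤ u → u ≤ v → IntervalIntegrable ψ volume u v := by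
        intro u v hu huv
        apply ContinuousOn.intervalIntegrable
        rw [uIcc_of_le huv]
        exact hψcontOn.mono (fun x hx => le_trans hu hx.1)
      have hd : 0 < ∫ a in (a₀ - δ)..(a₀ + δ), ψ a := by
        apply intervalIntegral.intervalIntegral_pos_of_pos_on
          (hψII _ _ (le_of_lt hδa₀) (by linarith)) ?_ (by linarith)
        intro x hx
        obtain ⟨hx1, hx2⟩ := hx
        have hdist : dist x a₀ < ε := by
          rw [Real.dist_eq, abs_lt]
          constructor <;> linarith
        have := hball hdist
        linarith
      have hDT : ∀ T : ℝ, a₀ + δ ≤ T →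
          (∫ a in (a₀ - δ)..(a₀ + δ), ψ a) ≤ ∫ a in (0:ℝ)..T, ψ a := by
        intro T hT
        have h01 : IntervalIntegrable ψ volume 0 (a₀ - δ) := hψII _ _ le_rfl (le_of_lt hδa₀)
        have h12 : IntervalIntegrable ψ volume (a₀ - δ) (a₀ + δ) :=
          hψII _ _ (le_of_lt hδa₀) (by linarith)
        have h23 : IntervalIntegrable ψ volume (a₀ + δ) T := hψII _ _ (by linarith) hT
        have e1 := intervalIntegral.integral_add_adjacent_intervals h01 h12
        have e2 := intervalIntegral.integral_add_adjacent_intervals (h01.trans h12) h23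
        have n1 : 0 ≤ ∫ a in (0:ℝ)..(a₀ - δ), ψ a :=
          intervalIntegral.integral_nonneg (le_of_lt hδa₀) (fun x hx => hψnn x hx.1)
        have n3 : 0 ≤ ∫ a in (a₀ + δ)..T, ψ a :=
          intervalIntegral.integral_nonneg hT (fun x hx => hψnn x (le_trans (by linarith) hx.1))
        linarith
      have hGJT : ∀ T : ℝ, 0 ≤ T →
          g (Bβ / μ) * ∫ a in (0:ℝ)..T, β' (auxS μ g Bβ a) * Real.exp (-μ * a)
            = (∫ a in (0:ℝ)..T,
                β' (auxS μ g Bβ a) * g (Bβ * Real.exp (-μ * a) / μ) * Real.exp (-μ * a))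
              - ∫ a in (0:ℝ)..T, ψ a := by
        intro T hT
        rw [← intervalIntegral.integral_const_mul,
          ← intervalIntegral.integral_sub (hIIφh T hT) (hψII 0 T le_rfl hT)]
        apply intervalIntegral.integral_congr
        intro a _
        simp only [hψdef]
        ring
      have hbound : ∀ᶠ T in atTop,
          g (Bβ / μ) * (∫ a in (0:ℝ)..T, β' (auxS μ g Bβ a) * Real.exp (-μ * a))
            ≤ β (auxS μ g Bβ T) * Real.exp (-μ * T) + μ
              - ∫ a in (a₀ - δ)..(a₀ + δ), ψ a := by
        filter_upwards [eventually_ge_atTop (a₀ + δ)] with T hT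
        have hT0 : (0:ℝ) ≤ T := le_trans (by linarith) hT
        have h1 := hGJT T hT0
        have h2 := hFTC T hT0
        have h3 := hle1 T hT0
        have h4 := hDT T hT
        rw [h1, h2]
        have h5 : μ * (∫ a in (0:ℝ)..T, β (auxS μ g Bβ a) * Real.exp (-μ * a)) ≤ μ * 1 :=
          mul_le_mul_of_nonneg_left h3 hμ.le
        linarith
      have hlim := le_of_tendsto_of_tendsto (hJtend.const_mul (g (Bβ / μ)))
        ((hFtend.add_const μ).sub_const (∫ a in (a₀ - δ)..(a₀ + δ), ψ a)) hbound
      rw [zero_add] at hlim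
      linarith
  -- final contradiction
  have hwre : (μ:ℝ) ≤ (z + (μ:ℂ)).re := by
    rw [Complex.add_re, Complex.ofReal_re]; linarith
  have hwabs : (μ:ℝ) ≤ ‖z + (μ:ℂ)‖ := le_trans hwre (Complex.re_le_norm _)
  have hnorm : ∀ a ∈ Set.Ioi (0:ℝ),
      ‖((β' (auxS μ g Bβ a) : ℝ) : ℂ) * Complex.exp (-(z + (μ:ℂ)) * (a:ℂ))‖
        ≤ β' (auxS μ g Bβ a) * Real.exp (-μ * a) := by
    intro a ha
    have ha0 : (0:ℝ) ≤ a := le_of_lt ha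
    rw [norm_mul, Complex.norm_real, Complex.norm_exp,
      Real.norm_eq_abs, abs_of_nonneg (hφnn a ha0)]
    have hre : (-(z + (μ:ℂ)) * (a:ℂ)).re = -(z.re + μ) * a := by
      simp [Complex.mul_re, Complex.add_re, Complex.add_im, Complex.neg_re, Complex.neg_im,
        Complex.ofReal_re, Complex.ofReal_im]
    rw [hre]
    apply mul_le_mul_of_nonneg_left ?_ (hφnn a ha0)
    apply Real.exp_le_exp.2
    nlinarith
  have hCcont : ContinuousOn
      (fun a : ℝ => ((β' (auxS μ g Bβ a) : ℝ) : ℂ) * Complex.exp (-(z + (μ:ℂ)) * (a:ℂ)))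
      (Set.Ioi 0) := by
    apply ContinuousOn.mul
    · exact Complex.continuous_ofReal.comp_continuousOn (hφcont.mono Ioi_subset_Ici_self)
    · exact (Complex.continuous_exp.comp
        (continuous_const.mul Complex.continuous_ofReal)).continuousOn
  have hCint : IntegrableOn
      (fun a : ℝ => ((β' (auxS μ g Bβ a) : ℝ) : ℂ) * Complex.exp (-(z + (μ:ℂ)) * (a:ℂ)))
      (Set.Ioi 0) := by
    apply Integrable.mono hJint (hCcont.aestronglyMeasurable measurableSet_Ioi)
    apply (ae_restrict_iff' measurableSet_Ioi).2 (ae_of_all _ (fun a ha => ?_))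
    have ha0 : (0:ℝ) ≤ a := le_of_lt ha
    refine (hnorm a ha).trans (le_of_eq ?_)
    rw [Real.norm_eq_abs, abs_of_nonneg (mul_nonneg (hφnn a ha0) (Real.exp_pos _).le)]
  have hI : ‖∫ a in Set.Ioi (0:ℝ),
      ((β' (auxS μ g Bβ a) : ℝ) : ℂ) * Complex.exp (-(z + (μ:ℂ)) * (a:ℂ))‖
      ≤ ∫ a in Set.Ioi (0:ℝ), β' (auxS μ g Bβ a) * Real.exp (-μ * a) := by
    exact (norm_integral_le_integral_norm _).trans
      (setIntegral_mono_on hCint.norm hJint measurableSet_Ioi hnorm)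
  have hJnn : 0 ≤ ∫ a in Set.Ioi (0:ℝ), β' (auxS μ g Bβ a) * Real.exp (-μ * a) :=
    le_trans (norm_nonneg _) hI
  have habs := congrArg (fun w : ℂ => ‖w‖) hchar
  rw [norm_one, norm_mul, norm_div, Complex.norm_real, Real.norm_of_nonneg hGpos.le] at habs
  have hfrac : g (Bβ / μ) / ‖z + (μ:ℂ)‖ ≤ g (Bβ / μ) / μ :=
    div_le_div_of_nonneg_left hGpos.le hμ hwabs
  have hchain : (1:ℝ) ≤ g (Bβ / μ) / μ *
      ∫ a in Set.Ioi (0:ℝ), β' (auxS μ g Bβ a) * Real.exp (-μ * a) := by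
    rw [habs]
    exact mul_le_mul hfrac hI (norm_nonneg _) (div_nonneg hGpos.le hμ.le)
  have hlt : g (Bβ / μ) / μ *
      (∫ a in Set.Ioi (0:ℝ), β' (auxS μ g Bβ a) * Real.exp (-μ * a)) < 1 := by
    rw [div_mul_eq_mul_div]
    exact (div_lt_one hμ).2 hkey
  linarith


theorem stmt_9 (μ xA β00 b1 : ℝ) (hμ : 0 < μ) (hxA : 0 ≤ xA) (hβ00 : 0 < β00)
    (hb1 : β00 ≤ b1)
    (g g' : ℝ → ℝ)
    (hgpos : ∀ z ≥ (0 : ℝ), 0 < g z) (hgbd : ∃ C : ℝ, ∀ z ≥ (0 : ℝ), g z ≤ C)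
    (hg' : ∀ z ∈ Set.Ici (0 : ℝ), HasDerivWithinAt g (g' z) (Set.Ici (0 : ℝ)) z)
    (hg'bd : ∃ C : ℝ, ∀ z ≥ (0 : ℝ), |g' z| ≤ C)
    (hg'lip : ∃ L : NNReal, LipschitzOnWith L g' (Set.Ici (0 : ℝ)))
    (hg'neg : ∀ z ≥ (0 : ℝ), g' z < 0)
    (hglim : Tendsto g atTop (nhds 0))
    (β β' : ℝ → ℝ)
    (hβnn : ∀ s ≥ (0 : ℝ), 0 ≤ β s)
    (hβ' : ∀ s ∈ Set.Ici (0 : ℝ), HasDerivWithinAt β (β' s) (Set.Ici (0 : ℝ)) s)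
    (hβ'bd : ∀ s ≥ (0 : ℝ), |β' s| ≤ b1)
    (hβ'lip : ∃ L : NNReal, LipschitzOnWith L β' (Set.Ici (0 : ℝ)))
    (hβmono : StrictMonoOn β (Set.Ici (0 : ℝ))) (hβzero : β 0 = 0)
    -- R(β₀, 0) > 1 and R(β, 0) > 1, with β₀(s) = β₀₀ max{0, s - x_A}
    (hR00 : 1 < Rtwo μ g (fun s => β00 * max 0 (s - xA)) 0)
    (hR0 : 1 < Rtwo μ g β 0)
    -- B̄(β), B̄(β₀) and B̃ : the positive stationary birth rates for β, β₀ and β₁(s) = b₁ s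
    (Bβ Bβ0 Bt aBar aTil : ℝ)
    (hBβ : 0 < Bβ ∧ Rtwo μ g β Bβ = 1)
    (hBβ0 : 0 < Bβ0 ∧ Rtwo μ g (fun s => β00 * max 0 (s - xA)) Bβ0 = 1)
    (hBt : 0 < Bt ∧ Rtwo μ g (fun s => b1 * s) Bt = 1)
    -- ā and ã : ages at which reproduction begins at the respective equilibria
    (haBar : 0 ≤ aBar ∧ (∫ τ in (0 : ℝ)..aBar, g (Bβ0 * Real.exp (-μ * τ) / μ)) = xA)
    (haTil : 0 ≤ aTil ∧ (∫ τ in (0 : ℝ)..aTil, g (Bt * Real.exp (-μ * τ) / μ)) = xA)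
    -- the smallness condition: with r := 2 g(0) b₁/μ and
    -- M := (μ²/r²)(1 − (β₀₀/μ²) g(B̄(β₀)/μ) e^{−μ ā}),
    -- (g(0)/μ²)·sup_{s≥0, s≠x_A}|β'(s) − β₀₀·1_{(x_A,∞)}(s)|
    --   + (2/μ) e^{μ(ã−ā)} (sup|g'| / min_{[0,B̃/μ]}|g'|) ‖β − β₀‖_∞ < M
    (hsmall : ∃ K1 K2 : ℝ,
      (∀ s ≥ (0 : ℝ), s ≠ xA → |β' s - (if xA < s then β00 else 0)| ≤ K1) ∧
      (∀ s ≥ (0 : ℝ), |β s - β00 * max 0 (s - xA)| ≤ K2) ∧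
      g 0 / μ ^ 2 * K1 +
          2 / μ * Real.exp (μ * (aTil - aBar)) *
            ((⨆ s : Set.Ici (0 : ℝ), |g' s|) /
              sInf ((fun s => |g' s|) '' Set.Icc (0 : ℝ) (Bt / μ))) * K2 <
        μ ^ 2 / (2 * g 0 * b1 / μ) ^ 2 *
          (1 - β00 / μ ^ 2 * g (Bβ0 / μ) * Real.exp (-μ * aBar))) :
    -- M is positive, and every characteristic root has negative real part
    0 < μ ^ 2 / (2 * g 0 * b1 / μ) ^ 2 *
        (1 - β00 / μ ^ 2 * g (Bβ0 / μ) * Real.exp (-μ * aBar)) ∧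
    ∀ z : ℂ, -μ < z.re →
      ((1 : ℂ) = (g (Bβ / μ) : ℂ) / (z + (μ : ℂ)) *
          ∫ a in Set.Ioi (0 : ℝ),
            ((β' (∫ τ in (0 : ℝ)..a, g (Bβ * Real.exp (-μ * τ) / μ)) : ℝ) : ℂ) *
              Complex.exp (-(z + (μ : ℂ)) * (a : ℂ))) →
      z.re < 0 := by
  obtain ⟨K1, K2, h1, h2, hlt⟩ := hsmall
  have hg0 : 0 < g 0 := hgpos 0 le_rfl
  have hK1 : 0 ≤ K1 := le_trans (abs_nonneg _)
    (h1 (xA + 1) (by linarith) (by linarith : xA < xA + 1).ne')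
  have hK2 : 0 ≤ K2 := le_trans (abs_nonneg _) (h2 0 le_rfl)
  have hterm1 : 0 ≤ g 0 / μ ^ 2 * K1 := mul_nonneg (div_nonneg hg0.le (by positivity)) hK1
  have hsup : 0 ≤ (⨆ s : Set.Ici (0:ℝ), |g' s|) := Real.iSup_nonneg fun s => abs_nonneg _
  have hinf : 0 ≤ sInf ((fun s => |g' s|) '' Set.Icc (0:ℝ) (Bt / μ)) := by
    apply Real.sInf_nonneg
    rintro x ⟨s, _, rfl⟩
    exact abs_nonneg _
  have hterm2 : 0 ≤ 2 / μ * Real.exp (μ * (aTil - aBar)) *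
      ((⨆ s : Set.Ici (0:ℝ), |g' s|) /
        sInf ((fun s => |g' s|) '' Set.Icc (0:ℝ) (Bt / μ))) * K2 :=
    mul_nonneg (mul_nonneg (mul_nonneg (by positivity) (Real.exp_pos _).le)
      (div_nonneg hsup hinf)) hK2
  refine ⟨lt_of_le_of_lt (by linarith) hlt, ?_⟩
  intro z hz hchar
  by_contra hcon
  push_neg at hcon
  exact aux_main μ b1 hμ g g' hgpos hgbd hg' hg'neg β β' hβnn hβ' hβ'bd hβ'lip hβmono hβzero
    Bβ hBβ.1 hBβ.2 z hcon hchar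
end

section
/- Let μ > 0, b₁ > 0 and B̄ > 0. Let g : [0,∞) → (0,∞) be non-increasing (so g(z) ≤ g(0) for all z ≥ 0), let β : [0,∞) → [0,∞) be continuously differentiable with β(0) = 0 and 0 ≤ β'(s) ≤ b₁ for all s, and set S̄(a) = ∫₀^a g(B̄ e^{−μτ}/μ) dτ. Then every λ ∈ ℂ with Re λ > −μ/2 satisfying the characteristic equation 1 = (1/(λ+μ)) g(B̄/μ) ∫₀^∞ β'(S̄(a)) e^{−(λ+μ)a} da satisfies |λ + μ| < 2 g(0) b₁ / μ. -/
open MeasureTheory Set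

lemma aux_integral_exp (c : ℝ) (hc : 0 < c) :
    ∫ x in Set.Ioi (0 : ℝ), Real.exp (-c * x) = 1 / c := by
  have hderiv : ∀ x ∈ Set.Ici (0 : ℝ),
      HasDerivAt (fun x => -Real.exp (-c * x) / c) (Real.exp (-c * x)) x := by
    intro x _
    have h1 : HasDerivAt (fun x : ℝ => -c * x) (-c) x := by
      simpa using (hasDerivAt_id x).const_mul (-c)
    have h2 := (Real.hasDerivAt_exp (-c * x)).comp x h1
    have h3 := (h2.neg).div_const c
    exact h3.congr_deriv (by rw [div_eq_iff hc.ne']; ring)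
  have hint : IntegrableOn (fun x : ℝ => Real.exp (-c * x)) (Set.Ioi 0) :=
    exp_neg_integrableOn_Ioi 0 hc
  have htend : Filter.Tendsto (fun x => -Real.exp (-c * x) / c) Filter.atTop (nhds 0) := by
    have h0 : Filter.Tendsto (fun x : ℝ => c * x) Filter.atTop Filter.atTop := by
      exact Filter.Tendsto.const_mul_atTop hc Filter.tendsto_id
    have : Filter.Tendsto (fun x : ℝ => Real.exp (-c * x)) Filter.atTop (nhds 0) := by
      rw [show (fun x : ℝ => Real.exp (-c * x)) =
          (fun x => Real.exp (-x)) ∘ (fun x : ℝ => c * x) from by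
        funext x; simp [Function.comp, neg_mul]]
      exact Real.tendsto_exp_neg_atTop_nhds_zero.comp h0
    have := (this.neg).div_const c
    simpa using this
  have := MeasureTheory.integral_Ioi_of_hasDerivAt_of_tendsto' hderiv hint htend
  simp at this
  simp only [neg_mul] at *
  rw [this]
  ring

theorem stmt_10 (μ b1 Bb : ℝ) (hμ : 0 < μ) (hb1 : 0 < b1) (hBb : 0 < Bb)
    (g β β' : ℝ → ℝ)
    (hgpos : ∀ z ≥ (0 : ℝ), 0 < g z)
    (hganti : AntitoneOn g (Set.Ici (0 : ℝ)))
    (hβnn : ∀ s ≥ (0 : ℝ), 0 ≤ β s) (hβzero : β 0 = 0)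
    (hβ' : ∀ s ∈ Set.Ici (0 : ℝ), HasDerivWithinAt β (β' s) (Set.Ici (0 : ℝ)) s)
    (hβ'c : ContinuousOn β' (Set.Ici (0 : ℝ)))
    (hβ'bd : ∀ s ≥ (0 : ℝ), 0 ≤ β' s ∧ β' s ≤ b1) :
    -- every characteristic root to the right of Re λ = -μ/2 satisfies |λ+μ| < 2 g(0) b₁/μ
    ∀ z : ℂ, -(μ / 2) < z.re →
      ((1 : ℂ) = (g (Bb / μ) : ℂ) / (z + (μ : ℂ)) *
          ∫ a in Set.Ioi (0 : ℝ),
            ((β' (∫ τ in (0 : ℝ)..a, g (Bb * Real.exp (-μ * τ) / μ)) : ℝ) : ℂ) *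
              Complex.exp (-(z + (μ : ℂ)) * (a : ℂ))) →
      ‖z + (μ : ℂ)‖ < 2 * g 0 * b1 / μ := by
  intro z hz hchar
  set c : ℝ := z.re + μ with hc_def
  have hc2 : μ / 2 < c := by
    have : -(μ / 2) + μ = μ / 2 := by ring
    rw [hc_def]; linarith
  have hc : 0 < c := lt_trans (by positivity) hc2
  have hne : z + (μ : ℂ) ≠ 0 := by
    intro h
    have : (z + (μ : ℂ)).re = 0 := by rw [h]; simp
    simp [Complex.add_re] at this
    rw [hc_def, this] at hc
    exact lt_irrefl 0 hc
  set I : ℂ := ∫ a in Set.Ioi (0 : ℝ),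
      ((β' (∫ τ in (0 : ℝ)..a, g (Bb * Real.exp (-μ * τ) / μ)) : ℝ) : ℂ) *
        Complex.exp (-(z + (μ : ℂ)) * (a : ℂ)) with hI
  have heq : z + (μ : ℂ) = (g (Bb / μ) : ℂ) * I := by
    have := hchar
    field_simp at this
    linear_combination this
  -- bound on the norm of I
  have hIbound : ‖I‖ ≤ b1 * (1 / c) := by
    have hbd : ∀ᵐ a ∂(volume.restrict (Set.Ioi (0:ℝ))),
        ‖((β' (∫ τ in (0 : ℝ)..a, g (Bb * Real.exp (-μ * τ) / μ)) : ℝ) : ℂ) *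
          Complex.exp (-(z + (μ : ℂ)) * (a : ℂ))‖ ≤ b1 * Real.exp (-c * a) := by
      filter_upwards [ae_restrict_mem measurableSet_Ioi] with a ha
      have ha0 : (0:ℝ) ≤ a := le_of_lt ha
      have hS : (0:ℝ) ≤ ∫ τ in (0 : ℝ)..a, g (Bb * Real.exp (-μ * τ) / μ) := by
        apply intervalIntegral.integral_nonneg ha0
        intro τ hτ
        exact le_of_lt (hgpos _ (by positivity))
      rw [norm_mul]
      have h1 : ‖((β' (∫ τ in (0 : ℝ)..a, g (Bb * Real.exp (-μ * τ) / μ)) : ℝ) : ℂ)‖ ≤ b1 := by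
        rw [Complex.norm_real, Real.norm_eq_abs, abs_of_nonneg (hβ'bd _ hS).1]
        exact (hβ'bd _ hS).2
      have h2 : ‖Complex.exp (-(z + (μ : ℂ)) * (a : ℂ))‖ = Real.exp (-c * a) := by
        rw [Complex.norm_exp]
        congr 1
        simp [Complex.mul_re, Complex.add_re, Complex.add_im, hc_def]
      rw [h2]
      exact mul_le_mul_of_nonneg_right h1 (Real.exp_nonneg _)
    have hgint : Integrable (fun a => b1 * Real.exp (-c * a))
        (volume.restrict (Set.Ioi (0:ℝ))) :=
      (exp_neg_integrableOn_Ioi 0 hc).const_mul b1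
    have := MeasureTheory.norm_integral_le_of_norm_le hgint hbd
    rw [← hI] at this
    calc ‖I‖ = ‖I‖ := rfl
      _ ≤ ∫ a in Set.Ioi (0:ℝ), b1 * Real.exp (-c * a) := this
      _ = b1 * (1 / c) := by
          rw [MeasureTheory.integral_const_mul, aux_integral_exp c hc]
  have hg0 : 0 < g 0 := hgpos 0 le_rfl
  have hgB : g (Bb / μ) ≤ g 0 := hganti self_mem_Ici (mem_Ici.mpr (by positivity)) (by positivity)
  have hgBpos : 0 < g (Bb / μ) := hgpos _ (by positivity)
  have habs : ‖z + (μ : ℂ)‖ ≤ g (Bb / μ) * (b1 * (1 / c)) := by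
    rw [heq, norm_mul, Complex.norm_real, Real.norm_eq_abs, abs_of_pos hgBpos]
    exact mul_le_mul_of_nonneg_left hIbound (le_of_lt hgBpos)
  have hfinal : g (Bb / μ) * (b1 * (1 / c)) < 2 * g 0 * b1 / μ := by
    have h1c : 1 / c < 2 / μ := by
      rw [div_lt_div_iff₀ hc hμ]
      nlinarith
    calc g (Bb / μ) * (b1 * (1 / c)) ≤ g 0 * (b1 * (1 / c)) := by
          apply mul_le_mul_of_nonneg_right hgB; positivity
      _ < g 0 * (b1 * (2 / μ)) := by
          apply mul_lt_mul_of_pos_left _ hg0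
          exact mul_lt_mul_of_pos_left h1c hb1
      _ = 2 * g 0 * b1 / μ := by ring
  exact lt_of_le_of_lt habs hfinal
end

section
/- Let μ > 0, r > 0, K > 0 and ā ≥ 0, and assume K e^{−μā} ≤ μ². Then for every λ ∈ ℂ with Re λ ≥ 0 and 0 < |λ + μ| ≤ r, one has |1 − K e^{−(λ+μ)ā}/(λ+μ)²| ≥ (μ² − K e^{−μā})/r². -/
theorem stmt_11 (μ r K aBar : ℝ) (hμ : 0 < μ) (hr : 0 < r) (hK : 0 < K)
    (haBar : 0 ≤ aBar) (hKμ : K * Real.exp (-μ * aBar) ≤ μ ^ 2) :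
    ∀ z : ℂ, 0 ≤ z.re → 0 < ‖z + (μ : ℂ)‖ → ‖z + (μ : ℂ)‖ ≤ r →
      (μ ^ 2 - K * Real.exp (-μ * aBar)) / r ^ 2 ≤
        ‖1 - (K : ℂ) * Complex.exp (-(z + (μ : ℂ)) * (aBar : ℂ)) /
          (z + (μ : ℂ)) ^ 2‖ := by
  intro z hre h0 hR
  set w : ℂ := z + (μ : ℂ) with hw
  have hwne : w ≠ 0 := by
    intro h; rw [h] at h0; simp at h0
  have hwre : μ ≤ w.re := by
    simp [hw, Complex.add_re]
    linarith
  have habsw : μ ≤ ‖w‖ := le_trans hwre (Complex.re_le_norm w)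
  -- |exp(-w ā)| ≤ exp(-μ ā)
  have hexp : ‖Complex.exp (-w * (aBar : ℂ))‖ ≤ Real.exp (-μ * aBar) := by
    rw [Complex.norm_exp]
    apply Real.exp_le_exp.mpr
    have : (-w * (aBar : ℂ)).re = -w.re * aBar := by
      simp [Complex.mul_re]
    rw [this]
    nlinarith
  -- rewrite expression
  have hrw : (1 : ℂ) - (K : ℂ) * Complex.exp (-w * (aBar : ℂ)) / w ^ 2
      = (w ^ 2 - (K : ℂ) * Complex.exp (-w * (aBar : ℂ))) / w ^ 2 := by
    field_simp
  rw [hrw, norm_div, norm_pow]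
  have hnum : μ ^ 2 - K * Real.exp (-μ * aBar) ≤
      ‖w ^ 2 - (K : ℂ) * Complex.exp (-w * (aBar : ℂ))‖ := by
    have h1 : ‖w ^ 2‖ - ‖(K : ℂ) * Complex.exp (-w * (aBar : ℂ))‖
        ≤ ‖w ^ 2 - (K : ℂ) * Complex.exp (-w * (aBar : ℂ))‖ := by
      exact norm_sub_norm_le _ _
    have h2 : ‖(K : ℂ) * Complex.exp (-w * (aBar : ℂ))‖
        ≤ K * Real.exp (-μ * aBar) := by
      rw [norm_mul, Complex.norm_real, Real.norm_eq_abs, abs_of_pos hK]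
      exact mul_le_mul_of_nonneg_left hexp hK.le
    have h3 : μ ^ 2 ≤ ‖w ^ 2‖ := by
      rw [norm_pow]
      exact pow_le_pow_left₀ hμ.le habsw 2
    linarith
  have hnumnn : (0:ℝ) ≤ μ ^ 2 - K * Real.exp (-μ * aBar) := by linarith
  calc (μ ^ 2 - K * Real.exp (-μ * aBar)) / r ^ 2
      ≤ (μ ^ 2 - K * Real.exp (-μ * aBar)) / ‖w‖ ^ 2 := by
        apply div_le_div_of_nonneg_left hnumnn (by positivity)
        exact pow_le_pow_left₀ h0.le hR 2
    _ ≤ ‖w ^ 2 - (K : ℂ) * Complex.exp (-w * (aBar : ℂ))‖ / ‖w‖ ^ 2 := by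
        gcongr
end

section
/- Let μ > 0, B̄ > 0, x_A ≥ 0, and let g : [0,∞) → (0,∞) be continuous and bounded. Suppose ā ≥ 0 satisfies ∫₀^{ā} g(B̄ e^{−μτ}/μ) dτ = x_A. Then ∫₀^∞ max{ 0, ∫₀^a g(B̄ e^{−μτ}/μ) dτ − x_A } e^{−μa} da = (1/μ²) ∫₀^{e^{−μā}} g(B̄ ζ/μ) dζ. -/
open MeasureTheory Set Filter Topology Asymptotics

set_option maxHeartbeats 1000000 in
theorem stmt_13 (μ Bb xA aBar : ℝ) (hμ : 0 < μ) (hBb : 0 < Bb) (hxA : 0 ≤ xA)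
    (g : ℝ → ℝ) (hgc : ContinuousOn g (Set.Ici (0 : ℝ)))
    (hgpos : ∀ z ≥ (0 : ℝ), 0 < g z) (hgbd : ∃ C : ℝ, ∀ z ≥ (0 : ℝ), g z ≤ C)
    (haBar : 0 ≤ aBar)
    (heq : (∫ τ in (0 : ℝ)..aBar, g (Bb * Real.exp (-μ * τ) / μ)) = xA) :
    (∫ a in Set.Ioi (0 : ℝ),
        max 0 ((∫ τ in (0 : ℝ)..a, g (Bb * Real.exp (-μ * τ) / μ)) - xA) * Real.exp (-μ * a)) =
      1 / μ ^ 2 * ∫ ζ in (0 : ℝ)..Real.exp (-μ * aBar), g (Bb * ζ / μ) := by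
  obtain ⟨C, hC⟩ := hgbd
  have hμ' : μ ≠ 0 := hμ.ne'
  have hC0 : 0 < C := lt_of_lt_of_le (hgpos 0 le_rfl) (hC 0 le_rfl)
  -- basic limit lemmas
  have hlimB : ∀ ν : ℝ, 0 < ν → Tendsto (fun T => Real.exp (-ν * T)) atTop (𝓝 0) := by
    intro ν hν
    have h1 : Tendsto (fun T : ℝ => ν * T) atTop atTop :=
      Tendsto.const_mul_atTop hν tendsto_id
    have h2 := Real.tendsto_exp_neg_atTop_nhds_zero.comp h1
    refine h2.congr fun T => ?_
    simp [Function.comp, neg_mul]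
  have hlimA : ∀ ν : ℝ, 0 < ν → Tendsto (fun T => T * Real.exp (-ν * T)) atTop (𝓝 0) := by
    intro ν hν
    have h1 : Tendsto (fun T : ℝ => ν * T) atTop atTop :=
      Tendsto.const_mul_atTop hν tendsto_id
    have h2 := (Real.tendsto_pow_mul_exp_neg_atTop_nhds_zero 1).comp h1
    have h3 := h2.const_mul (1 / ν)
    rw [mul_zero] at h3
    refine h3.congr fun T => ?_
    simp only [Function.comp, pow_one, neg_mul]
    field_simp
  -- the exponential
  have hEpos : ∀ a : ℝ, 0 < Real.exp (-μ * a) := fun a => Real.exp_pos _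
  have hEder : ∀ a : ℝ, HasDerivAt (fun a => Real.exp (-μ * a)) (-μ * Real.exp (-μ * a)) a := by
    intro a
    have h : HasDerivAt (fun a : ℝ => -μ * a) (-μ) a := by
      simpa using (hasDerivAt_id a).const_mul (-μ)
    simpa [mul_comm] using h.exp
  -- φ : integrand in age variable
  set φ : ℝ → ℝ := fun τ => g (Bb * Real.exp (-μ * τ) / μ) with hφdef
  have hargpos : ∀ τ : ℝ, 0 < Bb * Real.exp (-μ * τ) / μ := fun τ => by positivity
  have hbase : Continuous fun τ : ℝ => Bb * Real.exp (-μ * τ) / μ :=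
    (continuous_const.mul (Real.continuous_exp.comp
      (continuous_const.mul continuous_id))).div_const μ
  have hφcont : Continuous φ := by
    rw [hφdef, continuous_iff_continuousAt]
    intro τ
    exact ContinuousAt.comp (f := fun τ : ℝ => Bb * Real.exp (-μ * τ) / μ)
      (hgc.continuousAt (Ici_mem_nhds (hargpos τ))) hbase.continuousAt
  have hφpos : ∀ τ, 0 < φ τ := fun τ => hgpos _ (hargpos τ).le
  have hφle : ∀ τ, φ τ ≤ C := fun τ => hC _ (hargpos τ).le
  -- ψ : integrand in size variable
  set ψ : ℝ → ℝ := fun ζ => g (Bb * ζ / μ) with hψdef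
  have hψcontOn : ContinuousOn ψ (Ici 0) := by
    refine hgc.comp ((continuous_const.mul continuous_id).div_const μ).continuousOn
      fun ζ hζ => ?_
    have h0 : (0:ℝ) ≤ ζ := hζ
    exact mem_Ici.2 (by positivity)
  have hψca : ∀ y : ℝ, 0 < y → ContinuousAt ψ y := fun y hy =>
    hψcontOn.continuousAt (Ici_mem_nhds hy)
  have hψnonneg : ∀ ζ, 0 ≤ ζ → 0 ≤ ψ ζ := fun ζ hζ => (hgpos _ (by positivity)).le
  have hψle : ∀ ζ, 0 ≤ ζ → ψ ζ ≤ C := fun ζ hζ => hC _ (by positivity)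
  -- F and its properties
  set F : ℝ → ℝ := fun a => ∫ τ in (0:ℝ)..a, φ τ with hFdef
  have hFder : ∀ a, HasDerivAt F (φ a) a := by
    intro a
    rw [hFdef]
    exact (hφcont.integral_hasStrictDerivAt 0 a).hasDerivAt
  have hFcont : Continuous F := by
    rw [continuous_iff_continuousAt]; exact fun a => (hFder a).continuousAt
  have hFmono : Monotone F := by
    intro a b hab
    have h : F b - F a = ∫ τ in a..b, φ τ := by
      simp only [hFdef]
      exact intervalIntegral.integral_interval_sub_left (hφcont.intervalIntegrable _ _)
        (hφcont.intervalIntegrable _ _)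
    have h2 : 0 ≤ ∫ τ in a..b, φ τ :=
      intervalIntegral.integral_nonneg hab fun x _ => (hφpos x).le
    linarith
  have hF0 : F 0 = 0 := by simp [hFdef]
  have hFle : ∀ T : ℝ, 0 ≤ T → F T ≤ C * T := by
    intro T hT
    have h := intervalIntegral.integral_mono_on hT (hφcont.intervalIntegrable 0 T)
      (intervalIntegrable_const (μ := volume) (c := C)) fun x _ => hφle x
    simp only [hFdef]
    simpa [mul_comm] using h
  have hFnn : ∀ T : ℝ, 0 ≤ T → 0 ≤ F T := fun T hT => hF0 ▸ hFmono hT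
  have heqF : F aBar = xA := by simp only [hFdef]; exact heq
  -- G and its properties
  set G : ℝ → ℝ := fun y => ∫ ζ in (0:ℝ)..y, ψ ζ with hGdef
  have hψint : ∀ y : ℝ, 0 ≤ y → IntervalIntegrable ψ volume 0 y := fun y hy =>
    (hψcontOn.mono (by rw [uIcc_of_le hy]; exact Icc_subset_Ici_self)).intervalIntegrable
  have hGder : ∀ y : ℝ, 0 < y → HasDerivAt G (ψ y) y := by
    intro y hy
    rw [hGdef]
    exact intervalIntegral.integral_hasDerivAt_right (hψint y hy.le)
      ((hψcontOn.mono Ioi_subset_Ici_self).stronglyMeasurableAtFilter isOpen_Ioi y hy)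
      (hψca y hy)
  have hGbd : ∀ y : ℝ, 0 ≤ y → |G y| ≤ C * y := by
    intro y hy
    have h1 : G y ≤ C * y := by
      have h := intervalIntegral.integral_mono_on hy (hψint y hy)
        (intervalIntegrable_const (μ := volume) (c := C)) fun x hx => hψle x hx.1
      simp only [hGdef]
      simpa [mul_comm] using h
    have h2 : 0 ≤ G y := by
      simp only [hGdef]
      exact intervalIntegral.integral_nonneg hy fun x hx => hψnonneg x hx.1
    rw [abs_of_nonneg h2]; exact h1
  -- H and its derivative
  set H : ℝ → ℝ := fun a =>
    -((F a - xA) * Real.exp (-μ * a) / μ) - 1 / μ ^ 2 * G (Real.exp (-μ * a)) with hHdef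
  have hHder : ∀ a, HasDerivAt H ((F a - xA) * Real.exp (-μ * a)) a := by
    intro a
    have h1 : HasDerivAt (fun a => (F a - xA) * Real.exp (-μ * a))
        (φ a * Real.exp (-μ * a) + (F a - xA) * (-μ * Real.exp (-μ * a))) a :=
      ((hFder a).sub_const xA).mul (hEder a)
    have h2 : HasDerivAt (fun a => G (Real.exp (-μ * a)))
        (ψ (Real.exp (-μ * a)) * (-μ * Real.exp (-μ * a))) a := by
      have h := (hGder (Real.exp (-μ * a)) (hEpos a)).comp a (hEder a)
      exact h
    have h3 := (h1.div_const μ).neg.sub (h2.const_mul (1 / μ ^ 2))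
    have hψφ : ψ (Real.exp (-μ * a)) = φ a := by simp only [hψdef, hφdef]
    rw [hHdef]
    refine h3.congr_deriv ?_
    rw [hψφ]
    field_simp
    ring
  have hHcont : ContinuousWithinAt H (Ici aBar) aBar :=
    (hHder aBar).continuousAt.continuousWithinAt
  -- squeeze lemma for (F a - xA) * exp (-ν a)
  have hsq : ∀ ν : ℝ, 0 < ν →
      Tendsto (fun a => (F a - xA) * Real.exp (-ν * a)) atTop (𝓝 0) := by
    intro ν hν
    have hbound := ((hlimA ν hν).const_mul C).add ((hlimB ν hν).const_mul xA)
    rw [mul_zero, mul_zero, add_zero] at hbound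
    refine squeeze_zero_norm' ?_ hbound
    filter_upwards [eventually_ge_atTop (0:ℝ)] with a ha
    have hE := (Real.exp_pos (-ν * a)).le
    have habs : |F a - xA| ≤ C * a + xA := by
      rw [abs_le]
      constructor
      · nlinarith [hFnn a ha, mul_nonneg hC0.le ha]
      · linarith [hFle a ha]
    calc ‖(F a - xA) * Real.exp (-ν * a)‖
        = |F a - xA| * Real.exp (-ν * a) := by
          rw [norm_mul, Real.norm_eq_abs, Real.norm_eq_abs, abs_of_nonneg hE]
      _ ≤ (C * a + xA) * Real.exp (-ν * a) := mul_le_mul_of_nonneg_right habs hE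
      _ = C * (a * Real.exp (-ν * a)) + xA * Real.exp (-ν * a) := by ring
  -- limit of H at infinity
  have hHtend : Tendsto H atTop (𝓝 0) := by
    have t1 : Tendsto (fun T => -((F T - xA) * Real.exp (-μ * T) / μ)) atTop (𝓝 0) := by
      simpa using ((hsq μ hμ).div_const μ).neg
    have t2 : Tendsto (fun T => 1 / μ ^ 2 * G (Real.exp (-μ * T))) atTop (𝓝 0) := by
      have hb := ((hlimB μ hμ).const_mul C).const_mul (1 / μ ^ 2)
      rw [mul_zero, mul_zero] at hb
      refine squeeze_zero_norm' ?_ hb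
      filter_upwards with T
      have hE := (hEpos T).le
      have hp : (0:ℝ) < 1 / μ ^ 2 := by positivity
      calc ‖1 / μ ^ 2 * G (Real.exp (-μ * T))‖
          = 1 / μ ^ 2 * |G (Real.exp (-μ * T))| := by
            rw [norm_mul, Real.norm_eq_abs, Real.norm_eq_abs, abs_of_pos hp]
        _ ≤ 1 / μ ^ 2 * (C * Real.exp (-μ * T)) :=
            mul_le_mul_of_nonneg_left (hGbd _ hE) hp.le
    have := t1.sub t2
    rw [sub_zero] at this
    simp only [hHdef]
    exact this
  -- integrability of the derivative on (aBar, ∞)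
  have hf'cont : Continuous fun a => (F a - xA) * Real.exp (-μ * a) :=
    (hFcont.sub continuous_const).mul (by fun_prop)
  have htendf' : Tendsto
      (fun a => ((F a - xA) * Real.exp (-μ * a)) / Real.exp (-(μ/2) * a)) atTop (𝓝 0) := by
    refine (hsq (μ/2) (half_pos hμ)).congr fun a => ?_
    rw [mul_div_assoc, ← Real.exp_sub]
    congr 1
    congr 1
    ring
  have hO : (fun a => (F a - xA) * Real.exp (-μ * a)) =O[atTop]
      fun a => Real.exp (-(μ/2) * a) :=
    ((isLittleO_iff_tendsto fun x hx => absurd hx (Real.exp_ne_zero _)).2 htendf').isBigO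
  have hInt : IntegrableOn (fun a => (F a - xA) * Real.exp (-μ * a)) (Ioi aBar) :=
    integrable_of_isBigO_exp_neg (half_pos hμ) hf'cont.continuousOn hO
  -- FTC on (aBar, ∞)
  have key : (∫ x in Ioi aBar, (F x - xA) * Real.exp (-μ * x)) = 0 - H aBar :=
    integral_Ioi_of_hasDerivAt_of_tendsto hHcont (fun x _ => hHder x) hInt hHtend
  have hHaBar : H aBar = -(1 / μ ^ 2 * G (Real.exp (-μ * aBar))) := by
    simp only [hHdef]
    rw [heqF]
    ring
  -- reduce the integral over (0, ∞) to the integral over (aBar, ∞)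
  have hind : EqOn (fun a => max 0 (F a - xA) * Real.exp (-μ * a))
      ((Ioi aBar).indicator fun a => (F a - xA) * Real.exp (-μ * a)) (Ioi 0) := by
    intro a _
    beta_reduce
    by_cases h : aBar < a
    · rw [indicator_of_mem (mem_Ioi.2 h)]
      have hge : xA ≤ F a := by rw [← heqF]; exact hFmono h.le
      rw [max_eq_right (sub_nonneg.2 hge)]
    · push_neg at h
      have hFa : F a ≤ xA := by rw [← heqF]; exact hFmono h
      rw [indicator_of_notMem (by simpa using h)]
      rw [max_eq_left (by linarith), zero_mul]
  have main : (∫ a in Ioi (0:ℝ), max 0 (F a - xA) * Real.exp (-μ * a))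
      = 1 / μ ^ 2 * G (Real.exp (-μ * aBar)) := by
    rw [setIntegral_congr_fun measurableSet_Ioi hind,
      setIntegral_indicator measurableSet_Ioi, Ioi_inter_Ioi, sup_eq_right.mpr haBar]
    rw [key, hHaBar]
    ring
  simp only [hFdef, hGdef, hφdef, hψdef] at main
  exact main
end

section
/- Let μ > 0, β₀₀ > 0, B̄ > 0, and let g : [0,∞) → (0,∞) be continuous and strictly decreasing. Assume the equilibrium condition 1 = (β₀₀/μ²) ∫₀^{1} g(B̄ ζ/μ) dζ. Then β₀₀ g(B̄/μ) < μ², and the two solutions of the characteristic equation 1 = β₀₀ g(B̄/μ)/(λ+μ)², namely λ = −μ ± √(β₀₀ g(B̄/μ)), are both real and negative. -/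
open MeasureTheory Set

theorem stmt_15 (μ β00 Bb : ℝ) (hμ : 0 < μ) (hβ00 : 0 < β00) (hBb : 0 < Bb)
    (g : ℝ → ℝ) (hgc : ContinuousOn g (Set.Ici (0 : ℝ)))
    (hgpos : ∀ z ≥ (0 : ℝ), 0 < g z)
    (hganti : StrictAntiOn g (Set.Ici (0 : ℝ)))
    -- equilibrium condition 1 = (β₀₀/μ²) ∫₀¹ g(B̄ ζ/μ) dζ
    (heq : 1 = β00 / μ ^ 2 * ∫ ζ in (0 : ℝ)..(1 : ℝ), g (Bb * ζ / μ)) :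
    -- then β₀₀ g(B̄/μ) < μ²
    β00 * g (Bb / μ) < μ ^ 2 ∧
    -- the two solutions of 1 = β₀₀ g(B̄/μ)/(λ+μ)² are exactly λ = -μ ± √(β₀₀ g(B̄/μ))
    (∀ z : ℂ, ((1 : ℂ) = ((β00 * g (Bb / μ) : ℝ) : ℂ) / (z + (μ : ℂ)) ^ 2 ↔
      z = ((-μ + Real.sqrt (β00 * g (Bb / μ)) : ℝ) : ℂ) ∨
      z = ((-μ - Real.sqrt (β00 * g (Bb / μ)) : ℝ) : ℂ))) ∧
    -- and both are (real and) negative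
    -μ + Real.sqrt (β00 * g (Bb / μ)) < 0 ∧ -μ - Real.sqrt (β00 * g (Bb / μ)) < 0 := by
  have hμ2 : (0:ℝ) < μ ^ 2 := by positivity
  -- integrability of the integrand on [0,1]
  have hcont : ContinuousOn (fun ζ : ℝ => g (Bb * ζ / μ)) (Set.Icc 0 1) := by
    apply hgc.comp (by fun_prop)
    intro x hx
    have : 0 ≤ x := hx.1
    exact Set.mem_Ici.mpr (by positivity)
  have hint : IntervalIntegrable (fun ζ : ℝ => g (Bb * ζ / μ)) volume 0 1 := by
    exact (hcont.mono (by rw [Set.uIcc_of_le] <;> norm_num)).intervalIntegrable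
  have hintc : IntervalIntegrable (fun _ : ℝ => g (Bb / μ)) volume 0 1 :=
    intervalIntegrable_const
  -- strict lower bound on the integral
  have hIlt : g (Bb / μ) < ∫ ζ in (0:ℝ)..1, g (Bb * ζ / μ) := by
    have hpos : 0 < ∫ ζ in (0:ℝ)..1, (g (Bb * ζ / μ) - g (Bb / μ)) := by
      apply intervalIntegral.intervalIntegral_pos_of_pos_on (hint.sub hintc)
      · intro x hx
        have hx0 : 0 < x := hx.1
        have hx1 : x < 1 := hx.2
        have harg : Bb * x / μ < Bb / μ := by
          rw [div_lt_div_iff₀ hμ hμ]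
          nlinarith [mul_pos (mul_pos hBb hμ) (sub_pos.mpr hx1)]
        have := hganti (Set.mem_Ici.mpr (by positivity)) (Set.mem_Ici.mpr (by positivity)) harg
        linarith
      · norm_num
    have := intervalIntegral.integral_sub hint hintc
    simp only [intervalIntegral.integral_const] at this
    rw [this] at hpos
    simp at hpos
    linarith
  have hμ2eq : μ ^ 2 = β00 * ∫ ζ in (0:ℝ)..1, g (Bb * ζ / μ) := by
    field_simp at heq
    linarith
  have h1 : β00 * g (Bb / μ) < μ ^ 2 := by
    rw [hμ2eq]
    exact (mul_lt_mul_iff_right₀ hβ00).mpr hIlt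
  have hgp : 0 < g (Bb / μ) := hgpos _ (by positivity)
  have hk : 0 < β00 * g (Bb / μ) := by positivity
  set k := β00 * g (Bb / μ) with hkdef
  have hsq : Real.sqrt k ^ 2 = k := Real.sq_sqrt hk.le
  have hslt : Real.sqrt k < μ := by
    have := Real.sqrt_lt_sqrt hk.le h1
    rwa [Real.sqrt_sq hμ.le] at this
  refine ⟨h1, ?_, by linarith, by nlinarith [Real.sqrt_nonneg k]⟩
  intro z
  constructor
  · intro hz
    have hne : (z + (μ:ℂ)) ^ 2 ≠ 0 := by
      intro h0
      rw [h0, div_zero] at hz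
      exact one_ne_zero hz
    have heq2 : (z + (μ:ℂ)) ^ 2 = ((k:ℝ) : ℂ) := by
      rw [eq_div_iff hne] at hz
      linear_combination hz
    have hfac : (z - ((-μ + Real.sqrt k : ℝ) : ℂ)) * (z - ((-μ - Real.sqrt k : ℝ) : ℂ)) = 0 := by
      have hs : ((Real.sqrt k : ℝ) : ℂ) ^ 2 = ((k:ℝ) : ℂ) := by
        norm_cast
      have expand : (z - ((-μ + Real.sqrt k : ℝ) : ℂ)) * (z - ((-μ - Real.sqrt k : ℝ) : ℂ))
          = (z + (μ:ℂ)) ^ 2 - ((Real.sqrt k : ℝ) : ℂ) ^ 2 := by push_cast; ring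
      rw [expand, heq2, hs, sub_self]
    rcases mul_eq_zero.mp hfac with h | h
    · left; linear_combination h
    · right; linear_combination h
  · rintro (rfl | rfl)
    · have hne : ((-μ + Real.sqrt k : ℝ) : ℂ) + (μ:ℂ) = ((Real.sqrt k : ℝ) : ℂ) := by
        push_cast; ring
      rw [hne]
      rw [eq_div_iff (by
        norm_cast
        positivity)]
      norm_cast
      rw [hsq, one_mul]
    · have hne : ((-μ - Real.sqrt k : ℝ) : ℂ) + (μ:ℂ) = -((Real.sqrt k : ℝ) : ℂ) := by
        push_cast; ring
      rw [hne]
      rw [eq_div_iff (by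
        norm_cast
        simp
        positivity)]
      norm_cast
      rw [neg_pow, hsq]
      norm_num
end

section
/- Let μ > 0, g₀ > 0, z₀ > 0, β₀ > 0, and define g(z) = g₀/(1 + z/z₀) and β(s) = β₀ s. Then for every B > 0, R(B) := ∫₀^∞ β( ∫₀^a g(B e^{−μτ}/μ) dτ ) e^{−μa} da = (β₀ g₀/μ²) · ln(1 + B/(μ z₀)) / (B/(μ z₀)). -/
open MeasureTheory Set

theorem stmt_16 (μ g0 z0 β0 : ℝ) (hμ : 0 < μ) (hg0 : 0 < g0) (hz0 : 0 < z0)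
    (hβ0 : 0 < β0) :
    ∀ B : ℝ, 0 < B →
      (∫ a in Set.Ioi (0 : ℝ),
          β0 * (∫ τ in (0 : ℝ)..a, g0 / (1 + B * Real.exp (-μ * τ) / μ / z0)) *
            Real.exp (-μ * a)) =
        β0 * g0 / μ ^ 2 * (Real.log (1 + B / (μ * z0)) / (B / (μ * z0))) := by
  intro B hB
  have hμ0 : μ ≠ 0 := ne_of_gt hμ
  have hz0' : z0 ≠ 0 := ne_of_gt hz0
  obtain ⟨c, hc_def⟩ : ∃ c : ℝ, c = B / (μ * z0) := ⟨_, rfl⟩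
  rw [← hc_def]
  have hc : 0 < c := hc_def ▸ div_pos hB (mul_pos hμ hz0)
  have hc0 : c ≠ 0 := ne_of_gt hc
  have hpos : ∀ x : ℝ, 0 < 1 + c * Real.exp x := by
    intro x; positivity
  have hrw : ∀ E : ℝ, B * E / μ / z0 = c * E := by
    intro E; rw [hc_def]; field_simp
  -- key exponential identity
  have hkey : ∀ a : ℝ, Real.exp (μ * a) + c = Real.exp (μ * a) * (1 + c * Real.exp (-μ * a)) := by
    intro a
    have : Real.exp (μ * a) * Real.exp (-μ * a) = 1 := by
      rw [← Real.exp_add]; simp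
    nlinarith [this]
  have hkeypos : ∀ a : ℝ, 0 < Real.exp (μ * a) + c := by
    intro a; positivity
  have hlogkey : ∀ a : ℝ, Real.log (Real.exp (μ * a) + c)
      = μ * a + Real.log (1 + c * Real.exp (-μ * a)) := by
    intro a
    rw [hkey a, Real.log_mul (Real.exp_ne_zero _) (ne_of_gt (hpos _)), Real.log_exp]
  -- Step 1: inner integral
  have hinner : ∀ a : ℝ, (∫ τ in (0 : ℝ)..a, g0 / (1 + B * Real.exp (-μ * τ) / μ / z0))
      = g0 / μ * (μ * a + Real.log (1 + c * Real.exp (-μ * a)) - Real.log (1 + c)) := by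
    intro a
    have hderiv : ∀ τ ∈ Set.uIcc 0 a,
        HasDerivAt (fun τ => g0 / μ * Real.log (Real.exp (μ * τ) + c))
          (g0 / (1 + B * Real.exp (-μ * τ) / μ / z0)) τ := by
      intro τ _
      have h1 : HasDerivAt (fun τ : ℝ => Real.exp (μ * τ) + c)
          (Real.exp (μ * τ) * μ) τ := by
        simpa using (((hasDerivAt_id τ).const_mul μ).exp).add_const c
      have h2 := (h1.log (ne_of_gt (hkeypos τ))).const_mul (g0 / μ)
      refine HasDerivAt.congr_deriv h2 (Eq.symm ?_)
      rw [hrw, hkey τ]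
      have he' : (0:ℝ) < Real.exp (μ * τ) := Real.exp_pos _
      have hd : (0:ℝ) < 1 + c * Real.exp (-μ * τ) := hpos _
      field_simp
    have hcont : IntervalIntegrable (fun τ => g0 / (1 + B * Real.exp (-μ * τ) / μ / z0))
        MeasureTheory.volume 0 a := by
      apply Continuous.intervalIntegrable
      apply continuous_const.div
      · continuity
      · intro x; rw [hrw]; exact ne_of_gt (hpos _)
    rw [intervalIntegral.integral_eq_sub_of_hasDerivAt hderiv hcont]
    simp only [hlogkey]
    simp
    ring
  -- rewrite the outer integrand
  have hrw2 : (∫ a in Set.Ioi (0 : ℝ),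
        β0 * (∫ τ in (0 : ℝ)..a, g0 / (1 + B * Real.exp (-μ * τ) / μ / z0)) *
          Real.exp (-μ * a))
      = ∫ a in Set.Ioi (0 : ℝ),
        β0 * (g0 / μ * (μ * a + Real.log (1 + c * Real.exp (-μ * a)) - Real.log (1 + c))) *
          Real.exp (-μ * a) := by
    congr 1; funext a; rw [hinner a]
  rw [hrw2]
  -- Step 2: outer integral via FTC on Ioi
  have hGderiv : ∀ a ∈ Set.Ici (0:ℝ), HasDerivAt
      (fun a => β0 * g0 / μ * (-(1 / μ) * (Real.exp (-μ * a) *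
          (μ * a + Real.log (1 + c * Real.exp (-μ * a)) - Real.log (1 + c)))
        - 1 / (μ * c) * Real.log (1 + c * Real.exp (-μ * a))))
      (β0 * (g0 / μ * (μ * a + Real.log (1 + c * Real.exp (-μ * a)) - Real.log (1 + c))) *
        Real.exp (-μ * a)) a := by
    intro a _
    have hu : HasDerivAt (fun a : ℝ => Real.exp (-μ * a)) (Real.exp (-μ * a) * -μ) a := by
      simpa using ((hasDerivAt_id a).const_mul (-μ)).exp
    have hw : HasDerivAt (fun a : ℝ => 1 + c * Real.exp (-μ * a))
        (c * (Real.exp (-μ * a) * -μ)) a := ((hu.const_mul c).const_add 1)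
    have hL : HasDerivAt (fun a : ℝ => Real.log (1 + c * Real.exp (-μ * a)))
        (c * (Real.exp (-μ * a) * -μ) / (1 + c * Real.exp (-μ * a))) a :=
      hw.log (ne_of_gt (hpos _))
    have hlin : HasDerivAt (fun a : ℝ =>
        μ * a + Real.log (1 + c * Real.exp (-μ * a)) - Real.log (1 + c))
        (μ + c * (Real.exp (-μ * a) * -μ) / (1 + c * Real.exp (-μ * a))) a := by
      simpa using (((hasDerivAt_id a).const_mul μ).add hL).sub_const (Real.log (1 + c))
    have hfull := (((hu.mul hlin).const_mul (-(1/μ))).sub (hL.const_mul (1/(μ*c)))).const_mul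
      (β0 * g0 / μ)
    refine HasDerivAt.congr_deriv hfull (Eq.symm ?_)
    have hd : (0:ℝ) < 1 + c * Real.exp (-μ * a) := hpos (-μ * a)
    have hd' : (1 + c * Real.exp (-μ * a)) ≠ 0 := ne_of_gt hd
    field_simp
    ring
  have hGpos : ∀ a ∈ Set.Ioi (0:ℝ),
      0 ≤ β0 * (g0 / μ * (μ * a + Real.log (1 + c * Real.exp (-μ * a)) - Real.log (1 + c))) *
        Real.exp (-μ * a) := by
    intro a ha
    have ha' : 0 ≤ a := le_of_lt ha
    have h1 : (1:ℝ) + c ≤ Real.exp (μ * a) + c := by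
      have : (1:ℝ) ≤ Real.exp (μ * a) := Real.one_le_exp (by positivity)
      linarith
    have h2 : Real.log (1 + c) ≤ Real.log (Real.exp (μ * a) + c) :=
      Real.log_le_log (by positivity) h1
    rw [hlogkey a] at h2
    have h3 : 0 ≤ μ * a + Real.log (1 + c * Real.exp (-μ * a)) - Real.log (1 + c) := by
      linarith
    positivity
  have hGlim : Filter.Tendsto (fun a => β0 * g0 / μ * (-(1 / μ) * (Real.exp (-μ * a) *
          (μ * a + Real.log (1 + c * Real.exp (-μ * a)) - Real.log (1 + c)))
        - 1 / (μ * c) * Real.log (1 + c * Real.exp (-μ * a)))) Filter.atTop (nhds 0) := by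
    have hμa : Filter.Tendsto (fun a : ℝ => μ * a) Filter.atTop Filter.atTop :=
      Filter.tendsto_id.const_mul_atTop hμ
    have hu0 : Filter.Tendsto (fun a : ℝ => Real.exp (-μ * a)) Filter.atTop (nhds 0) := by
      have h : Filter.Tendsto (fun a : ℝ => -μ * a) Filter.atTop Filter.atBot := by
        simpa [neg_mul] using Filter.tendsto_neg_atBot_iff.mpr hμa
      exact Real.tendsto_exp_atBot.comp h
    have hau0 : Filter.Tendsto (fun a : ℝ => μ * a * Real.exp (-μ * a)) Filter.atTop (nhds 0) := by
      have h := (Real.tendsto_pow_mul_exp_neg_atTop_nhds_zero 1).comp hμa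
      simpa [Function.comp_def, neg_mul, pow_one] using h
    have hL0 : Filter.Tendsto (fun a : ℝ => Real.log (1 + c * Real.exp (-μ * a)))
        Filter.atTop (nhds 0) := by
      have h1 : Filter.Tendsto (fun a : ℝ => 1 + c * Real.exp (-μ * a))
          Filter.atTop (nhds 1) := by
        have := (hu0.const_mul c).const_add 1
        simpa using this
      have h2 := (Real.continuousAt_log (by norm_num : (1:ℝ) ≠ 0)).tendsto.comp h1
      simpa [Function.comp_def] using h2
    have hbig := ((((hau0.add (hu0.mul hL0)).sub
        (hu0.mul_const (Real.log (1 + c)))).const_mul (-(1/μ))).sub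
        (hL0.const_mul (1/(μ*c)))).const_mul (β0 * g0 / μ)
    simp only [mul_zero, zero_mul, add_zero, zero_add, sub_zero, zero_sub, neg_zero] at hbig
    convert hbig using 2 with a
    ring
  rw [MeasureTheory.integral_Ioi_of_hasDerivAt_of_nonneg' hGderiv hGpos hGlim]
  have e0 : Real.exp (-μ * 0) = 1 := by norm_num
  rw [e0]
  have hfin : β0 * g0 / μ * (-(1 / μ) * (1 * (μ * 0 + Real.log (1 + c * 1) - Real.log (1 + c)))
      - 1 / (μ * c) * Real.log (1 + c * 1))
      = -(β0 * g0 / μ ^ 2 * (Real.log (1 + c) / c)) := by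
    rw [mul_one]
    rw [show μ * 0 + Real.log (1 + c) - Real.log (1 + c) = (0:ℝ) by ring]
    rw [one_mul, mul_zero, zero_sub]
    field_simp
  rw [hfin]
  ring
end
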